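/- arXiv:2101.04298 — 11 statements merged into one kernel-verified Lean document; each statement's English description precedes it below -/
import Mathlib

section
/- Let a₁, a₂, …, a_k be positive integers with gcd(a₁,…,a_k) = 1, and let λ be a complex number with λ ≠ 0 and λ^{a₁} ≠ 1. Then ∑_{n ∈ NR} λⁿ n² = (1/(λ^{a₁} − 1)) ∑_{i=0}^{a₁−1} m_i² λ^{m_i} − (2 a₁ λ^{a₁}/(λ^{a₁} − 1)²) ∑_{i=0}^{a₁−1} m_i λ^{m_i} + (a₁² λ^{a₁}(λ^{a₁} + 1)/(λ^{a₁} − 1)³) ∑_{i=0}^{a₁−1} λ^{m_i} − λ(λ + 1)/(λ − 1)³. -/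
/-!
Write every `n` as `i + a₁ j` with `i < a₁`. Since `R` is closed under adding `a₁`, the gaps in
residue class `i` are exactly `i, i + a₁, …, mᵢ - a₁`, so the sum over `NR` splits into `a₁`
finite arithmetic progressions. Along each of them `λⁿ n²` has an explicit antidifference
`λⁿ B(n)`, with `B(n) = sqGeomBoundary (λ^{a₁}) a₁ n` quadratic in `n`, so every progression
telescopes to `λ^{mᵢ} B(mᵢ) - λⁱ B(i)`. The terms `λ^{mᵢ} B(mᵢ)` give the three sums over the
`mᵢ`, and the terms `λⁱ B(i)`, summed over `i < a₁`, add up to the constant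
`λ(λ + 1)(λ^{a₁} - 1)³ / (λ - 1)³`.
-/

open Finset

section Telescoping

variable {R : Type*} [CommRing R]

/-- `n ↦ rⁿ · sqGeomBoundary r b (c + b n)` is an antidifference of `(r - 1)³ rⁿ (c + b n)²`. -/
def sqGeomBoundary (r b c : R) : R :=
  c ^ 2 * (r - 1) ^ 2 - 2 * b * r * c * (r - 1) + b ^ 2 * r * (r + 1)

lemma sub_one_pow_three_mul_sum_range_pow_mul_sq (r c b : R) (q : ℕ) :
    (r - 1) ^ 3 * ∑ j ∈ range q, r ^ j * (c + b * j) ^ 2 =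
      r ^ q * sqGeomBoundary r b (c + b * q) - sqGeomBoundary r b c := by
  rw [mul_sum]
  convert sum_range_sub (fun n => r ^ n * sqGeomBoundary r b (c + b * n)) q using 1
  · refine sum_congr rfl fun n _ => ?_
    simp only [sqGeomBoundary]
    push_cast
    ring
  · simp

lemma sub_one_pow_three_mul_sum_range_pow_add_mul (lam : R) (d i q : ℕ) :
    (lam ^ d - 1) ^ 3 * ∑ j ∈ range q, lam ^ (i + d * j) * ((i + d * j : ℕ) : R) ^ 2 =
      lam ^ (i + d * q) * sqGeomBoundary (lam ^ d) d ((i + d * q : ℕ) : R) -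
        lam ^ i * sqGeomBoundary (lam ^ d) d i := by
  have hfactor : ∑ j ∈ range q, lam ^ (i + d * j) * ((i + d * j : ℕ) : R) ^ 2 =
      lam ^ i * ∑ j ∈ range q, (lam ^ d) ^ j * ((i : R) + d * j) ^ 2 := by
    rw [mul_sum]
    exact sum_congr rfl fun j _ => by push_cast; ring
  rw [hfactor]
  push_cast
  linear_combination
    lam ^ i * sub_one_pow_three_mul_sum_range_pow_mul_sq (lam ^ d) (i : R) (d : R) q

lemma sub_one_pow_three_mul_sum_range_pow_mul_sqGeomBoundary (lam : R) (d : ℕ) :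
    (lam - 1) ^ 3 * ∑ i ∈ range d, lam ^ i * sqGeomBoundary (lam ^ d) d i =
      lam * (lam + 1) * (lam ^ d - 1) ^ 3 := by
  set x := lam ^ d
  -- `B(i) = ((x - 1) i - d x)² + d² x`: a square of an affine function plus a constant.
  have hsplit : ∑ i ∈ range d, lam ^ i * sqGeomBoundary x d i =
      ∑ i ∈ range d, lam ^ i * (-(d * x) + (x - 1) * i) ^ 2 +
        d ^ 2 * x * ∑ i ∈ range d, lam ^ i := by
    rw [mul_sum, ← sum_add_distrib]
    exact sum_congr rfl fun i _ => by simp only [sqGeomBoundary]; ring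
  have hsq := sub_one_pow_three_mul_sum_range_pow_mul_sq lam (-(d * x)) (x - 1) d
  have hgeom := geom_sum_mul lam d
  rw [hsplit]
  simp only [sqGeomBoundary] at hsq ⊢
  linear_combination hsq + d ^ 2 * x * (lam - 1) ^ 2 * hgeom

lemma sum_pow_mul_sqGeomBoundary {ι : Type*} (s : Finset ι) (f : ι → ℕ) (r x b : R) :
    ∑ i ∈ s, r ^ f i * sqGeomBoundary x b (f i : R) =
      (x - 1) ^ 2 * ∑ i ∈ s, (f i : R) ^ 2 * r ^ f i
        - 2 * b * x * (x - 1) * ∑ i ∈ s, (f i : R) * r ^ f i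
        + b ^ 2 * x * (x + 1) * ∑ i ∈ s, r ^ f i := by
  simp only [mul_sum, ← sum_sub_distrib, ← sum_add_distrib]
  exact sum_congr rfl fun i _ => by simp only [sqGeomBoundary]; ring

lemma sub_one_pow_three_mul_sum_gaps (lam : R) {d : ℕ} {m : ℕ → ℕ} (hm : ∀ i < d, m i % d = i) :
    (lam ^ d - 1) ^ 3 *
        ∑ i ∈ range d, ∑ j ∈ range (m i / d), lam ^ (i + d * j) * ((i + d * j : ℕ) : R) ^ 2 =
      ∑ i ∈ range d, (lam ^ m i * sqGeomBoundary (lam ^ d) d (m i : R) -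
        lam ^ i * sqGeomBoundary (lam ^ d) d (i : R)) := by
  rw [mul_sum]
  refine sum_congr rfl fun i hi => ?_
  have hmi : i + d * (m i / d) = m i := by
    simpa only [hm i (mem_range.1 hi)] using Nat.mod_add_div (m i) d
  rw [sub_one_pow_three_mul_sum_range_pow_add_mul, hmi]

end Telescoping

lemma exists_sum_mul_eq_add {k : ℕ} (a : Fin k → ℕ) (i : Fin k) {n : ℕ}
    (h : ∃ x : Fin k → ℕ, n = ∑ j, x j * a j) : ∃ x : Fin k → ℕ, n + a i = ∑ j, x j * a j := by
  obtain ⟨x, rfl⟩ := h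
  exact ⟨x + Pi.single i 1, by simp [add_mul, sum_add_distrib, Pi.single_apply]⟩

lemma setOf_pos_and_not_eq_setOf_lt_mod {P : ℕ → Prop} {d : ℕ} (hd : 0 < d) (h0 : P 0)
    (hadd : ∀ n, P n → P (n + d)) {m : ℕ → ℕ}
    (hm : ∀ i < d, P (m i) ∧ m i % d = i ∧ ∀ n, P n → n % d = i → m i ≤ n) :
    {n | 0 < n ∧ ¬P n} = {n | n < m (n % d)} := by
  have hmul : ∀ n t, P n → P (n + d * t) := by
    intro n t hn
    induction t with
    | zero => simpa
    | succ t ih => rw [mul_add, mul_one, ← add_assoc]; exact hadd _ ih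
  ext n
  obtain ⟨hPm, hmod, hmin⟩ := hm (n % d) (Nat.mod_lt n hd)
  simp only [Set.mem_ofPred_eq]
  constructor
  · rintro ⟨-, hn⟩
    by_contra! hle
    obtain ⟨t, ht⟩ : d ∣ n - m (n % d) := (Nat.modEq_iff_dvd' hle).1 hmod
    exact hn (by simpa [← ht, Nat.add_sub_cancel' hle] using hmul _ t hPm)
  · intro hlt
    refine ⟨Nat.pos_of_ne_zero ?_, fun hn => (hmin n hn rfl).not_gt hlt⟩
    rintro rfl
    exact (hmin 0 h0 rfl).not_gt hlt

lemma finsum_mem_setOf_lt_mod {M : Type*} [AddCommMonoid M] {d : ℕ} (hd : 0 < d) {m : ℕ → ℕ}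
    (hm : ∀ i < d, m i % d = i) (f : ℕ → M) :
    ∑ᶠ n ∈ {n | n < m (n % d)}, f n = ∑ i ∈ range d, ∑ j ∈ range (m i / d), f (i + d * j) := by
  have hlt : ∀ i < d, ∀ j, i + d * j < m i ↔ j < m i / d := by
    intro i hi j
    conv_lhs => rw [← Nat.mod_add_div (m i) d, hm i hi]
    simp [hd]
  have hset : {n | n < m (n % d)} =
      ((range d).sigma fun i => range (m i / d)).image (fun p => p.1 + d * p.2) := by
    ext n
    simp only [Set.mem_ofPred_eq, coe_image, coe_sigma, coe_range, Set.mem_image,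
      Set.mem_sigma_iff, Set.mem_Iio]
    constructor
    · intro h
      have hi := Nat.mod_lt n hd
      exact ⟨⟨n % d, n / d⟩, ⟨hi, (hlt _ hi _).1 (by rwa [Nat.mod_add_div])⟩, Nat.mod_add_div n d⟩
    · rintro ⟨⟨i, j⟩, ⟨hi, hj⟩, rfl⟩
      rw [Nat.add_mul_mod_self_left, Nat.mod_eq_of_lt hi]
      exact (hlt i hi j).2 hj
  rw [hset, finsum_mem_coe_finset, sum_image, sum_sigma]
  rintro ⟨i, j⟩ hij ⟨i', j'⟩ hij' h
  simp only [coe_sigma, coe_range, Set.mem_sigma_iff, Set.mem_Iio] at hij hij' h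
  obtain ⟨hj, hi⟩ := (Nat.div_mod_unique hd).2 ⟨h, hij.1⟩
  obtain ⟨hj', hi'⟩ := (Nat.div_mod_unique hd).2 ⟨rfl, hij'.1⟩
  rw [← hj, ← hi, hj', hi']

theorem weighted_square_sylvester_sum_general
    (k : ℕ) (hk : 0 < k) (a : Fin k → ℕ)
    (lam : ℂ) (hlama : lam ^ a ⟨0, hk⟩ ≠ 1)
    (m : ℕ → ℕ)
    (hm : ∀ i < a ⟨0, hk⟩,
      (∃ x : Fin k → ℕ, m i = ∑ j, x j * a j) ∧ m i % a ⟨0, hk⟩ = i ∧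
        ∀ n : ℕ, (∃ x : Fin k → ℕ, n = ∑ j, x j * a j) → n % a ⟨0, hk⟩ = i → m i ≤ n) :
    ∑ᶠ n ∈ {n : ℕ | 0 < n ∧ ¬∃ x : Fin k → ℕ, n = ∑ j, x j * a j},
        lam ^ n * (n : ℂ) ^ 2 =
      (1 / (lam ^ a ⟨0, hk⟩ - 1)) *
          ∑ i ∈ Finset.range (a ⟨0, hk⟩), (m i : ℂ) ^ 2 * lam ^ m i
        - (2 * (a ⟨0, hk⟩ : ℂ) * lam ^ a ⟨0, hk⟩ / (lam ^ a ⟨0, hk⟩ - 1) ^ 2) *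
          ∑ i ∈ Finset.range (a ⟨0, hk⟩), (m i : ℂ) * lam ^ m i
        + ((a ⟨0, hk⟩ : ℂ) ^ 2 * lam ^ a ⟨0, hk⟩ * (lam ^ a ⟨0, hk⟩ + 1) /
            (lam ^ a ⟨0, hk⟩ - 1) ^ 3) *
          ∑ i ∈ Finset.range (a ⟨0, hk⟩), lam ^ m i
        - lam * (lam + 1) / (lam - 1) ^ 3 := by
  set d := a ⟨0, hk⟩
  have hd : 0 < d := Nat.pos_of_ne_zero fun h => hlama (by rw [h, pow_zero])
  have hx : lam ^ d - 1 ≠ 0 := sub_ne_zero.2 hlama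
  have hlam : lam - 1 ≠ 0 := fun h => hlama (by rw [sub_eq_zero.1 h, one_pow])
  rw [setOf_pos_and_not_eq_setOf_lt_mod hd ⟨0, by simp⟩ (fun n => exists_sum_mul_eq_add a _) hm,
    finsum_mem_setOf_lt_mod hd (fun i hi => (hm i hi).2.1)]
  have hconst : ∑ i ∈ range d, lam ^ i * sqGeomBoundary (lam ^ d) d (i : ℂ) =
      lam * (lam + 1) * (lam ^ d - 1) ^ 3 / (lam - 1) ^ 3 := by
    rw [eq_div_iff (pow_ne_zero 3 hlam), mul_comm]
    exact sub_one_pow_three_mul_sum_range_pow_mul_sqGeomBoundary lam d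
  apply mul_left_cancel₀ (pow_ne_zero 3 hx)
  rw [sub_one_pow_three_mul_sum_gaps lam fun i hi => (hm i hi).2.1, sum_sub_distrib,
    sum_pow_mul_sqGeomBoundary, hconst]
  field_simp

/-- the weighted sum `∑_{n ∈ NR} λⁿ n²` for `λ ≠ 0`, `λ^{a₁} ≠ 1`. -/
theorem weighted_square_sylvester_sum
    (k : ℕ) (hk : 0 < k) (a : Fin k → ℕ) (ha : ∀ i, 0 < a i)
    (hgcd : Finset.univ.gcd a = 1)
    (lam : ℂ) (hlam0 : lam ≠ 0) (hlama : lam ^ a ⟨0, hk⟩ ≠ 1)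
    (m : ℕ → ℕ)
    (hm : ∀ i < a ⟨0, hk⟩,
      (∃ x : Fin k → ℕ, m i = ∑ j, x j * a j) ∧ m i % a ⟨0, hk⟩ = i ∧
        ∀ n : ℕ, (∃ x : Fin k → ℕ, n = ∑ j, x j * a j) → n % a ⟨0, hk⟩ = i → m i ≤ n) :
    ∑ᶠ n ∈ {n : ℕ | 0 < n ∧ ¬∃ x : Fin k → ℕ, n = ∑ j, x j * a j},
        lam ^ n * (n : ℂ) ^ 2 =
      (1 / (lam ^ a ⟨0, hk⟩ - 1)) *
          ∑ i ∈ Finset.range (a ⟨0, hk⟩), (m i : ℂ) ^ 2 * lam ^ m i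
        - (2 * (a ⟨0, hk⟩ : ℂ) * lam ^ a ⟨0, hk⟩ / (lam ^ a ⟨0, hk⟩ - 1) ^ 2) *
          ∑ i ∈ Finset.range (a ⟨0, hk⟩), (m i : ℂ) * lam ^ m i
        + ((a ⟨0, hk⟩ : ℂ) ^ 2 * lam ^ a ⟨0, hk⟩ * (lam ^ a ⟨0, hk⟩ + 1) /
            (lam ^ a ⟨0, hk⟩ - 1) ^ 3) *
          ∑ i ∈ Finset.range (a ⟨0, hk⟩), lam ^ m i
        - lam * (lam + 1) / (lam - 1) ^ 3 :=
  weighted_square_sylvester_sum_general k hk a lam hlama m hm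
end

section
/- Let a₁, a₂, …, a_k be positive integers with gcd(a₁,…,a_k) = 1, and let λ be a complex number with λ ≠ 0 and λ^{a₁} ≠ 1. Then ∑_{n ∈ NR} λⁿ n = (1/(λ^{a₁} − 1)) ∑_{i=0}^{a₁−1} m_i λ^{m_i} − (a₁ λ^{a₁}/(λ^{a₁} − 1)²) ∑_{i=0}^{a₁−1} λ^{m_i} + λ/(λ − 1)². -/
open Finset

/-! The representable numbers congruent to `i` mod `a₁` are exactly those `≥ mᵢ`, so the gaps of
that class are `i, i + a₁, …, mᵢ - a₁`. Along such a progression `λⁿ n` is the forward difference,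
with step `a₁`, of `stepAntideriv λ a₁`, so each class telescopes to a boundary term at `mᵢ` minus
one at `i`; the terms at `mᵢ` give the two sums of the formula, and the terms at `0, …, a₁ - 1`
add up to `-λ / (λ - 1)²`. -/

section StepAntiderivative

variable {K : Type*} [Field K] {lam : K} {A : ℕ}

def stepAntideriv (lam : K) (A n : ℕ) : K :=
  1 / (lam ^ A - 1) * (n * lam ^ n) - A * lam ^ A / (lam ^ A - 1) ^ 2 * lam ^ n

theorem stepAntideriv_add_sub (h : lam ^ A ≠ 1) (n : ℕ) :
    stepAntideriv lam A (n + A) - stepAntideriv lam A n = lam ^ n * n := by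
  have hx : lam ^ A - 1 ≠ 0 := sub_ne_zero.mpr h
  unfold stepAntideriv
  rw [pow_add]
  push_cast
  field_simp
  ring

theorem sum_range_pow_add_mul_eq_sub (h : lam ^ A ≠ 1) (i q : ℕ) :
    ∑ t ∈ range q, lam ^ (i + A * t) * ((i + A * t : ℕ) : K) =
      stepAntideriv lam A (i + A * q) - stepAntideriv lam A i := by
  have htel := sum_range_sub (fun t => stepAntideriv lam A (i + A * t)) q
  rw [mul_zero, add_zero] at htel
  rw [← htel]
  refine sum_congr rfl fun t _ => ?_
  rw [mul_add_one, ← add_assoc, stepAntideriv_add_sub h]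

theorem sum_range_stepAntideriv (h : lam ^ A ≠ 1) :
    ∑ i ∈ range A, stepAntideriv lam A i = -lam / (lam - 1) ^ 2 := by
  have h1 : lam ≠ 1 := by rintro rfl; exact h (one_pow A)
  have hx : lam ^ A - 1 ≠ 0 := sub_ne_zero.mpr h
  have hl : lam - 1 ≠ 0 := sub_ne_zero.mpr h1
  have hT := sum_range_pow_add_mul_eq_sub (A := 1) (lam := lam) (by rwa [pow_one]) 0 A
  simp only [zero_add, one_mul, pow_one, stepAntideriv, pow_zero, Nat.cast_zero] at hT
  simp only [stepAntideriv, sum_sub_distrib, ← mul_sum, geom_sum_eq h1]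
  rw [sum_congr rfl fun (i : ℕ) _ => mul_comm (i : K) (lam ^ i), hT]
  field_simp
  ring

end StepAntiderivative

section Residues

variable {A : ℕ}

theorem Nat.lt_iff_div_lt_div_of_mod_eq {n m : ℕ} (h : n % A = m % A) : n < m ↔ n / A < m / A := by
  rcases Nat.eq_zero_or_pos A with rfl | hA
  · simp_all
  · rw [← Nat.mod_add_div n A, ← Nat.mod_add_div m A, h,
      Nat.add_mul_div_left _ _ hA, Nat.add_mul_div_left _ _ hA, Nat.add_lt_add_iff_left,
      Nat.mul_lt_mul_left hA, Nat.mod_div_self, zero_add, zero_add]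

theorem finsum_mem_setOf_lt_apply_mod {M : Type*} [AddCommMonoid M] (hA : 0 < A) {m : ℕ → ℕ}
    (hm : ∀ i < A, m i % A = i) (f : ℕ → M) :
    ∑ᶠ n ∈ {n | n < m (n % A)}, f n = ∑ i ∈ range A, ∑ t ∈ range (m i / A), f (i + A * t) := by
  have hdecomp : {n | n < m (n % A)} =
      (fun p : Σ _ : ℕ, ℕ => p.1 + A * p.2) '' ↑((range A).sigma fun i => range (m i / A)) := by
    ext n
    simp only [Set.mem_ofPred_eq, Set.mem_image, coe_sigma, Set.mem_sigma_iff, coe_range,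
      Set.mem_Iio, Sigma.exists]
    constructor
    · intro hn
      refine ⟨n % A, n / A, ⟨Nat.mod_lt n hA, ?_⟩, Nat.mod_add_div n A⟩
      rwa [← Nat.lt_iff_div_lt_div_of_mod_eq (hm _ (Nat.mod_lt n hA)).symm]
    · rintro ⟨i, t, ⟨hi, ht⟩, rfl⟩
      have hmod : (i + A * t) % A = i := by rw [Nat.add_mul_mod_self_left, Nat.mod_eq_of_lt hi]
      rw [hmod, Nat.lt_iff_div_lt_div_of_mod_eq (hmod.trans (hm i hi).symm),
        Nat.add_mul_div_left _ _ hA, Nat.div_eq_of_lt hi, zero_add]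
      exact ht
  have hinj : Set.InjOn (fun p : Σ _ : ℕ, ℕ => p.1 + A * p.2)
      ↑((range A).sigma fun i => range (m i / A)) := by
    rintro ⟨i, t⟩ hit ⟨j, u⟩ hju heq
    simp only [coe_sigma, Set.mem_sigma_iff, coe_range, Set.mem_Iio] at hit hju heq
    have hij : i = j := by
      simpa [Nat.add_mul_mod_self_left, Nat.mod_eq_of_lt hit.1, Nat.mod_eq_of_lt hju.1]
        using congrArg (· % A) heq
    subst hij
    rw [Nat.eq_of_mul_eq_mul_left hA (Nat.add_left_cancel heq)]
  rw [hdecomp, finsum_mem_image hinj, finsum_mem_coe_finset, sum_sigma]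

end Residues

section Semigroup

variable {S : Set ℕ} {A : ℕ} {m : ℕ → ℕ}

theorem exists_sum_mul_add {ι : Type*} [Fintype ι] (a : ι → ℕ) (i : ι) {n : ℕ}
    (hn : ∃ x : ι → ℕ, n = ∑ j, x j * a j) : ∃ x : ι → ℕ, n + a i = ∑ j, x j * a j := by
  classical
  obtain ⟨x, rfl⟩ := hn
  refine ⟨x + Pi.single i 1, ?_⟩
  simp only [Pi.add_apply, add_mul, sum_add_distrib, Pi.single_apply, ite_mul, one_mul, zero_mul,
    sum_ite_eq', mem_univ, if_true]

theorem add_mul_mem_of_add_mem (hS : ∀ n ∈ S, n + A ∈ S) {n : ℕ} (hn : n ∈ S) (t : ℕ) :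
    n + A * t ∈ S := by
  induction t with
  | zero => simpa
  | succ t ih => simpa [mul_add, ← add_assoc] using hS _ ih

-- `m i` is the least element of `S` congruent to `i`, i.e. `m` enumerates the Apéry set of `S`.
variable (hA : 0 < A) (hS : ∀ n ∈ S, n + A ∈ S)
  (hm : ∀ i < A, m i ∈ S ∧ m i % A = i ∧ ∀ n ∈ S, n % A = i → m i ≤ n)
include hA hS hm

theorem mem_iff_apery_le (n : ℕ) : n ∈ S ↔ m (n % A) ≤ n := by
  obtain ⟨hmS, hmod, hmin⟩ := hm (n % A) (Nat.mod_lt n hA)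
  refine ⟨fun hn => hmin n hn rfl, fun hle => ?_⟩
  obtain ⟨t, ht⟩ := (Nat.modEq_iff_dvd' hle).mp hmod
  convert add_mul_mem_of_add_mem hS hmS t using 1
  omega

theorem setOf_pos_not_mem_eq_setOf_lt_apery (h0 : 0 ∈ S) :
    {n | 0 < n ∧ n ∉ S} = {n | n < m (n % A)} := by
  ext n
  simp only [Set.mem_ofPred_eq, mem_iff_apery_le hA hS hm, not_le, and_iff_right_iff_imp]
  refine fun hn => Nat.pos_of_ne_zero ?_
  rintro rfl
  exact ((hm 0 hA).2.2 0 h0 rfl).not_gt (by simpa using hn)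

end Semigroup

theorem weighted_sylvester_sum_general
    (k : ℕ) (hk : 0 < k) (a : Fin k → ℕ)
    (lam : ℂ) (hlama : lam ^ a ⟨0, hk⟩ ≠ 1)
    (m : ℕ → ℕ)
    (hm : ∀ i < a ⟨0, hk⟩,
      (∃ x : Fin k → ℕ, m i = ∑ j, x j * a j) ∧ m i % a ⟨0, hk⟩ = i ∧
        ∀ n : ℕ, (∃ x : Fin k → ℕ, n = ∑ j, x j * a j) → n % a ⟨0, hk⟩ = i → m i ≤ n) :
    ∑ᶠ n ∈ {n : ℕ | 0 < n ∧ ¬∃ x : Fin k → ℕ, n = ∑ j, x j * a j},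
        lam ^ n * (n : ℂ) =
      (1 / (lam ^ a ⟨0, hk⟩ - 1)) *
          ∑ i ∈ Finset.range (a ⟨0, hk⟩), (m i : ℂ) * lam ^ m i
        - ((a ⟨0, hk⟩ : ℂ) * lam ^ a ⟨0, hk⟩ / (lam ^ a ⟨0, hk⟩ - 1) ^ 2) *
          ∑ i ∈ Finset.range (a ⟨0, hk⟩), lam ^ m i
        + lam / (lam - 1) ^ 2 := by
  set A := a ⟨0, hk⟩
  have hA : 0 < A := Nat.pos_of_ne_zero fun h => hlama (by rw [h, pow_zero])
  have hgaps : {n : ℕ | 0 < n ∧ ¬∃ x : Fin k → ℕ, n = ∑ j, x j * a j} = {n | n < m (n % A)} :=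
    setOf_pos_not_mem_eq_setOf_lt_apery hA (fun _ => exists_sum_mul_add a ⟨0, hk⟩) hm ⟨0, by simp⟩
  have hmi (i : ℕ) (hi : i ∈ range A) : i + A * (m i / A) = m i := by
    have h := Nat.mod_add_div (m i) A
    rwa [(hm i (mem_range.mp hi)).2.1] at h
  rw [hgaps, finsum_mem_setOf_lt_apply_mod hA fun i hi => (hm i hi).2.1,
    sum_congr rfl fun i hi => by rw [sum_range_pow_add_mul_eq_sub hlama, hmi i hi],
    sum_sub_distrib, sum_range_stepAntideriv hlama]
  simp only [stepAntideriv, sum_sub_distrib, ← mul_sum]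
  ring

/-- the weighted sum `∑_{n ∈ NR} λⁿ n` for `λ ≠ 0`, `λ^{a₁} ≠ 1`. -/
theorem weighted_sylvester_sum
    (k : ℕ) (hk : 0 < k) (a : Fin k → ℕ) (ha : ∀ i, 0 < a i)
    (hgcd : Finset.univ.gcd a = 1)
    (lam : ℂ) (hlam0 : lam ≠ 0) (hlama : lam ^ a ⟨0, hk⟩ ≠ 1)
    (m : ℕ → ℕ)
    (hm : ∀ i < a ⟨0, hk⟩,
      (∃ x : Fin k → ℕ, m i = ∑ j, x j * a j) ∧ m i % a ⟨0, hk⟩ = i ∧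
        ∀ n : ℕ, (∃ x : Fin k → ℕ, n = ∑ j, x j * a j) → n % a ⟨0, hk⟩ = i → m i ≤ n) :
    ∑ᶠ n ∈ {n : ℕ | 0 < n ∧ ¬∃ x : Fin k → ℕ, n = ∑ j, x j * a j},
        lam ^ n * (n : ℂ) =
      (1 / (lam ^ a ⟨0, hk⟩ - 1)) *
          ∑ i ∈ Finset.range (a ⟨0, hk⟩), (m i : ℂ) * lam ^ m i
        - ((a ⟨0, hk⟩ : ℂ) * lam ^ a ⟨0, hk⟩ / (lam ^ a ⟨0, hk⟩ - 1) ^ 2) *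
          ∑ i ∈ Finset.range (a ⟨0, hk⟩), lam ^ m i
        + lam / (lam - 1) ^ 2 :=
  weighted_sylvester_sum_general k hk a lam hlama m hm
end

section
/- Let a₁, a₂, …, a_k be positive integers with gcd(a₁,…,a_k) = 1, and let λ be a complex number with λ ≠ 0, λ ≠ 1 and λ^{a₁} = 1. Then ∑_{n ∈ NR} λⁿ n = (1/(2a₁)) ∑_{i=1}^{a₁−1} m_i² λ^{i} − (1/2) ∑_{i=1}^{a₁−1} m_i λ^{i} + λ/(λ − 1)². -/
/-!
A positive n with n mod a₁ = i ≠ 0 is representable iff n ≥ mᵢ, and multiples of a₁ are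
representable, so NR is the disjoint union over 1 ≤ i < a₁ of the progressions j a₁ + i,
0 ≤ j < mᵢ / a₁. As λ^{a₁} = 1, the progression of residue i contributes λⁱ times its plain sum,
which is (mᵢ² − a₁mᵢ − i(i − a₁)) / (2a₁). The leftover ∑_{i<a₁} i(i − a₁)λⁱ equals
−2a₁λ/(λ − 1)², from the closed forms of ∑ iλⁱ and ∑ i²λⁱ.
-/

open Finset

section Sums

variable {R : Type*} [CommRing R]

theorem sub_one_sq_mul_sum_range_mul_pow (x : R) (n : ℕ) :
    (x - 1) ^ 2 * ∑ i ∈ range n, (i : R) * x ^ i = x - n * x ^ n + (n - 1) * x ^ (n + 1) := by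
  induction n with
  | zero => simp
  | succ n ih => rw [sum_range_succ, mul_add, ih]; push_cast; ring

theorem sub_one_pow_three_mul_sum_range_sq_mul_pow (x : R) (n : ℕ) :
    (x - 1) ^ 3 * ∑ i ∈ range n, (i : R) ^ 2 * x ^ i =
      -x - x ^ 2 + n ^ 2 * x ^ n + (-2 * n ^ 2 + 2 * n + 1) * x ^ (n + 1)
        + (n - 1) ^ 2 * x ^ (n + 2) := by
  induction n with
  | zero => simp; ring
  | succ n ih => rw [sum_range_succ, mul_add, ih]; push_cast; ring

theorem two_mul_mul_sum_range_mul_add (A i t : ℕ) :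
    2 * A * ∑ j ∈ range t, ((j * A + i : ℕ) : R) =
      ((t * A + i : ℕ) : R) ^ 2 - A * (t * A + i : ℕ) - i * (i - A) := by
  induction t with
  | zero => simp; ring
  | succ t ih => rw [sum_range_succ, mul_add, ih]; push_cast; ring

theorem sum_range_mul_sub_mul_pow_of_pow_eq_one {K : Type*} [Field K] {x : K} (hx1 : x ≠ 1)
    {n : ℕ} (hxn : x ^ n = 1) :
    ∑ i ∈ range n, (i : K) * (i - n) * x ^ i = -2 * n * x / (x - 1) ^ 2 := by
  have hx : x - 1 ≠ 0 := sub_ne_zero.mpr hx1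
  have h1 := sub_one_sq_mul_sum_range_mul_pow x n
  have h2 := sub_one_pow_three_mul_sum_range_sq_mul_pow x n
  have hsplit : ∑ i ∈ range n, (i : K) * (i - n) * x ^ i =
      ∑ i ∈ range n, (i : K) ^ 2 * x ^ i - n * ∑ i ∈ range n, (i : K) * x ^ i := by
    rw [mul_sum, ← sum_sub_distrib]
    exact sum_congr rfl fun i _ => by ring
  have hxn1 : x ^ (n + 1) = x := by rw [pow_succ, hxn, one_mul]
  have hxn2 : x ^ (n + 2) = x ^ 2 := by rw [pow_add, hxn, one_mul]
  rw [hxn1, hxn] at h1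
  rw [hxn1, hxn2, hxn] at h2
  rw [eq_div_iff (pow_ne_zero 2 hx), hsplit]
  refine mul_left_cancel₀ hx ?_
  linear_combination h2 - (n : K) * (x - 1) * h1

end Sums

theorem sum_image_mul_add_pow_mul {K : Type*} [Field K] [CharZero K] {x : K} {A : ℕ}
    (hA : 0 < A) (hx : x ^ A = 1) (i t : ℕ) :
    ∑ n ∈ (range t).image (· * A + i), x ^ n * n =
      1 / (2 * A) * (((t * A + i : ℕ) : K) ^ 2 * x ^ i) - 1 / 2 * ((t * A + i : ℕ) * x ^ i)
        - 1 / (2 * A) * (i * (i - A) * x ^ i) := by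
  have hA' : (A : K) ≠ 0 := by exact_mod_cast hA.ne'
  rw [sum_image fun j _ j' _ h => Nat.eq_of_mul_eq_mul_right hA (by simpa using h)]
  have hpow : ∀ j, x ^ (j * A + i) = x ^ i := fun j => by
    rw [pow_add, mul_comm j, pow_mul, hx, one_pow, one_mul]
  simp_rw [hpow, ← mul_sum]
  have h := two_mul_mul_sum_range_mul_add (R := K) A i t
  field_simp
  linear_combination x ^ i * h

variable {ι : Type*} [Fintype ι]

def IsRepresentable (a : ι → ℕ) (n : ℕ) : Prop :=
  ∃ x : ι → ℕ, n = ∑ j, x j * a j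

theorem IsRepresentable.add_mul {a : ι → ℕ} {n : ℕ} (hn : IsRepresentable a n) (c : ℕ)
    (j₀ : ι) : IsRepresentable a (n + c * a j₀) := by
  classical
  obtain ⟨x, rfl⟩ := hn
  refine ⟨x + Pi.single j₀ c, ?_⟩
  simp only [Pi.add_apply, _root_.add_mul, sum_add_distrib]
  simp [Pi.single_apply]

theorem isRepresentable_mul (a : ι → ℕ) (c : ℕ) (j₀ : ι) : IsRepresentable a (c * a j₀) := by
  simpa using (show IsRepresentable a 0 from ⟨0, by simp⟩).add_mul c j₀

theorem mem_image_range_div_mul_add_iff {A m i n : ℕ} (hi : i < A) (hm : m % A = i) :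
    n ∈ (range (m / A)).image (· * A + i) ↔ n % A = i ∧ n < m := by
  have hdiv := Nat.div_add_mod' m A
  rw [hm] at hdiv
  simp only [mem_image, mem_range]
  constructor
  · rintro ⟨j, hj, rfl⟩
    refine ⟨Nat.mul_add_mod_of_lt hi, ?_⟩
    have := Nat.mul_le_mul_right A (Nat.succ_le_of_lt hj)
    rw [Nat.succ_mul] at this
    omega
  · rintro ⟨hn, hlt⟩
    have hndiv := Nat.div_add_mod' n A
    rw [hn] at hndiv
    refine ⟨n / A, ?_, hndiv⟩
    by_contra! hle
    have := Nat.mul_le_mul_right A hle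
    omega

theorem pairwiseDisjoint_image_mul_add (A : ℕ) (T : ℕ → Finset ℕ) :
    (Set.Iio A).PairwiseDisjoint fun i => (T i).image (· * A + i) := by
  intro i hi i' hi' hne
  simp only [Function.onFun, disjoint_left, mem_image, not_exists, not_and]
  rintro _ ⟨j, -, rfl⟩ j' - h
  apply hne
  rw [← Nat.mul_add_mod_of_lt (a := j) hi, ← h, Nat.mul_add_mod_of_lt hi']

section Gaps

variable {a : ι → ℕ} {j₀ : ι}

theorem isRepresentable_of_mod_eq_zero {n : ℕ} (hn : n % a j₀ = 0) : IsRepresentable a n := by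
  obtain ⟨c, rfl⟩ := Nat.dvd_of_mod_eq_zero hn
  rw [mul_comm]
  exact isRepresentable_mul a c j₀

theorem not_isRepresentable_iff_lt {n i mi : ℕ} (hrep : IsRepresentable a mi)
    (hmod : mi % a j₀ = i)
    (hmin : ∀ n, 0 < n → IsRepresentable a n → n % a j₀ = i → mi ≤ n)
    (hn0 : 0 < n) (hn : n % a j₀ = i) : ¬IsRepresentable a n ↔ n < mi := by
  refine ⟨fun hnr => ?_, fun hlt hrepn => (hmin n hn0 hrepn hn).not_gt hlt⟩
  by_contra! hle
  have hdvd : a j₀ ∣ n - mi :=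
    Nat.dvd_of_mod_eq_zero (Nat.sub_mod_eq_zero_of_mod_eq (hn.trans hmod.symm))
  have : n = mi + (n - mi) / a j₀ * a j₀ := by rw [Nat.div_mul_cancel hdvd]; omega
  exact hnr (this ▸ hrep.add_mul _ j₀)

theorem setOf_not_isRepresentable_eq (hA : 0 < a j₀) {m : ℕ → ℕ}
    (hm : ∀ i, 1 ≤ i → i < a j₀ → IsRepresentable a (m i) ∧ m i % a j₀ = i ∧
      ∀ n, 0 < n → IsRepresentable a n → n % a j₀ = i → m i ≤ n) :
    {n | 0 < n ∧ ¬IsRepresentable a n} =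
      ↑((Ico 1 (a j₀)).biUnion fun i => (range (m i / a j₀)).image (· * a j₀ + i)) := by
  ext n
  simp only [Set.mem_ofPred_eq, coe_biUnion, mem_coe, mem_Ico, Set.mem_iUnion, exists_prop]
  constructor
  · rintro ⟨hn0, hnr⟩
    have hi1 : 1 ≤ n % a j₀ :=
      Nat.one_le_iff_ne_zero.2 fun h => hnr (isRepresentable_of_mod_eq_zero h)
    have hiA := Nat.mod_lt n hA
    obtain ⟨hrep, hmod, hmin⟩ := hm _ hi1 hiA
    exact ⟨_, ⟨hi1, hiA⟩, (mem_image_range_div_mul_add_iff hiA hmod).2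
      ⟨rfl, (not_isRepresentable_iff_lt hrep hmod hmin hn0 rfl).1 hnr⟩⟩
  · rintro ⟨i, ⟨hi1, hiA⟩, hn⟩
    obtain ⟨hrep, hmod, hmin⟩ := hm i hi1 hiA
    obtain ⟨hni, hlt⟩ := (mem_image_range_div_mul_add_iff hiA hmod).1 hn
    have hn0 : 0 < n := Nat.pos_of_ne_zero fun h => by simp [h] at hni; omega
    exact ⟨hn0, (not_isRepresentable_iff_lt hrep hmod hmin hn0 hni).2 hlt⟩

end Gaps

theorem weighted_sylvester_sum_root_of_unity_general
    (k : ℕ) (hk : 0 < k) (a : Fin k → ℕ) (ha : ∀ i, 0 < a i)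
    (lam : ℂ) (hlam1 : lam ≠ 1) (hlama : lam ^ a ⟨0, hk⟩ = 1)
    (m : ℕ → ℕ)
    (hm : ∀ i, 1 ≤ i → i < a ⟨0, hk⟩ →
      0 < m i ∧ (∃ x : Fin k → ℕ, m i = ∑ j, x j * a j) ∧ m i % a ⟨0, hk⟩ = i ∧
        ∀ n : ℕ, 0 < n → (∃ x : Fin k → ℕ, n = ∑ j, x j * a j) → n % a ⟨0, hk⟩ = i →
          m i ≤ n) :
    ∑ᶠ n ∈ {n : ℕ | 0 < n ∧ ¬∃ x : Fin k → ℕ, n = ∑ j, x j * a j},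
        lam ^ n * (n : ℂ) =
      (1 / (2 * (a ⟨0, hk⟩ : ℂ))) *
          ∑ i ∈ Finset.Ico 1 (a ⟨0, hk⟩), (m i : ℂ) ^ 2 * lam ^ i
        - (1 / 2) * ∑ i ∈ Finset.Ico 1 (a ⟨0, hk⟩), (m i : ℂ) * lam ^ i
        + lam / (lam - 1) ^ 2 := by
  have hgaps : {n : ℕ | 0 < n ∧ ¬∃ x : Fin k → ℕ, n = ∑ j, x j * a j} = _ :=
    setOf_not_isRepresentable_eq (ha ⟨0, hk⟩) fun i h1 h2 => (hm i h1 h2).2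
  rw [hgaps, finsum_mem_coe_finset, sum_biUnion
    ((pairwiseDisjoint_image_mul_add _ _).subset fun i hi => (mem_Ico.1 hi).2)]
  have hmod : ∀ i ∈ Ico 1 (a ⟨0, hk⟩), m i % a ⟨0, hk⟩ = i :=
    fun i hi => (hm i (mem_Ico.1 hi).1 (mem_Ico.1 hi).2).2.2.1
  have hA := ha ⟨0, hk⟩
  generalize a ⟨0, hk⟩ = A at hA hlama hmod ⊢
  have hdiv_mod : ∀ i ∈ Ico 1 A, m i / A * A + i = m i := fun i hi => by
    linarith [Nat.div_add_mod' (m i) A, hmod i hi]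
  simp_rw +contextual [sum_image_mul_add_pow_mul hA hlama, hdiv_mod]
  rw [sum_sub_distrib, sum_sub_distrib, ← mul_sum, ← mul_sum, ← mul_sum]
  have hkey := sum_range_mul_sub_mul_pow_of_pow_eq_one hlam1 hlama
  rw [range_eq_Ico, sum_eq_sum_Ico_succ_bot hA] at hkey
  simp only [CharP.cast_eq_zero, zero_sub, zero_mul, zero_add] at hkey
  rw [hkey]
  have hA' : (A : ℂ) ≠ 0 := by exact_mod_cast hA.ne'
  field_simp
  ring

/-- the weighted sum `∑_{n ∈ NR} λⁿ n` for `λ ≠ 0`, `λ ≠ 1`, `λ^{a₁} = 1`. -/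
theorem weighted_sylvester_sum_root_of_unity
    (k : ℕ) (hk : 0 < k) (a : Fin k → ℕ) (ha : ∀ i, 0 < a i)
    (hgcd : Finset.univ.gcd a = 1)
    (lam : ℂ) (hlam0 : lam ≠ 0) (hlam1 : lam ≠ 1) (hlama : lam ^ a ⟨0, hk⟩ = 1)
    (m : ℕ → ℕ)
    (hm : ∀ i, 1 ≤ i → i < a ⟨0, hk⟩ →
      0 < m i ∧ (∃ x : Fin k → ℕ, m i = ∑ j, x j * a j) ∧ m i % a ⟨0, hk⟩ = i ∧
        ∀ n : ℕ, 0 < n → (∃ x : Fin k → ℕ, n = ∑ j, x j * a j) → n % a ⟨0, hk⟩ = i →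
          m i ≤ n) :
    ∑ᶠ n ∈ {n : ℕ | 0 < n ∧ ¬∃ x : Fin k → ℕ, n = ∑ j, x j * a j},
        lam ^ n * (n : ℂ) =
      (1 / (2 * (a ⟨0, hk⟩ : ℂ))) *
          ∑ i ∈ Finset.Ico 1 (a ⟨0, hk⟩), (m i : ℂ) ^ 2 * lam ^ i
        - (1 / 2) * ∑ i ∈ Finset.Ico 1 (a ⟨0, hk⟩), (m i : ℂ) * lam ^ i
        + lam / (lam - 1) ^ 2 :=
  weighted_sylvester_sum_root_of_unity_general k hk a ha lam hlam1 hlama m hm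
end

section
/- Let a₁, a₂, …, a_k be positive integers with gcd(a₁,…,a_k) = 1 and with a₁ odd. Then the alternating Sylvester sum satisfies ∑_{n ∈ NR} (−1)ⁿ n = −(1/2) ∑_{i=1}^{a₁−1} (−1)^{m_i} m_i + (a₁/4) ∑_{i=1}^{a₁−1} (−1)^{m_i} + (a₁ − 1)/4. -/
/-!
Multiples of `a₁` are representable, and a positive `n ≢ 0 (mod a₁)` is a gap exactly when
`n < m_{n mod a₁}`; so the gaps are the numbers `i + t a₁` with `1 ≤ i < a₁` and `t < ⌊m_i / a₁⌋`.
For odd `a₁` the potential `g n = (-1)ⁿ (a₁/4 - n/2)` satisfies `g (n + a₁) - g n = (-1)ⁿ n`, so the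
gaps of residue `i` contribute `g m_i - g i`, and `∑_{i=1}^{a₁-1} g i = -(a₁ - 1)/4`.
-/

open Finset

section Telescoping

variable {A : ℕ}

def altPotential (A n : ℕ) : ℚ := -(1 / 2) * ((-1) ^ n * n) + (A / 4) * (-1) ^ n

theorem altPotential_add_sub (hA : Odd A) (n : ℕ) :
    altPotential A (n + A) - altPotential A n = (-1) ^ n * n := by
  simp only [altPotential, pow_add, hA.neg_one_pow]
  push_cast
  ring

theorem sum_range_neg_one_pow_mul_eq_altPotential_sub (hA : Odd A) (i q : ℕ) :
    ∑ t ∈ range q, (-1 : ℚ) ^ (i + t * A) * ↑(i + t * A) =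
      altPotential A (i + q * A) - altPotential A i := by
  have htelescope := sum_range_sub (fun t => altPotential A (i + t * A)) q
  simp only [zero_mul, add_zero] at htelescope
  rw [← htelescope]
  refine sum_congr rfl fun t _ => ?_
  rw [add_one_mul, ← add_assoc, altPotential_add_sub hA]

theorem sum_Ico_altPotential (b : ℕ) :
    ∑ i ∈ Ico 1 (2 * b + 1), altPotential A i = -(b / 2) := by
  induction b with
  | zero => simp
  | succ b ih =>
    rw [show 2 * (b + 1) + 1 = 2 * b + 1 + 1 + 1 by ring, sum_Ico_succ_top (by omega),
      sum_Ico_succ_top (by omega), ih]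
    simp only [altPotential, pow_succ, pow_mul]
    push_cast
    ring

end Telescoping

def IsLeastInResidueClasses (R : Set ℕ) (A : ℕ) (m : ℕ → ℕ) : Prop :=
  ∀ i, 1 ≤ i → i < A → m i ∈ R ∧ m i % A = i ∧ ∀ n, 0 < n → n ∈ R → n % A = i → m i ≤ n

section Gaps

variable {R : Set ℕ} {A : ℕ} {m : ℕ → ℕ}

theorem add_mul_mem_of_forall_add_mem (hR : ∀ n ∈ R, n + A ∈ R) {n : ℕ} (hn : n ∈ R) (t : ℕ) :
    n + t * A ∈ R := by
  induction t with
  | zero => simpa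
  | succ t ih => rw [add_one_mul, ← add_assoc]; exact hR _ ih

theorem IsLeastInResidueClasses.eq_add_div_mul (hm : IsLeastInResidueClasses R A m) {i : ℕ}
    (hi : 1 ≤ i) (hiA : i < A) : m i = i + m i / A * A := by
  conv_lhs => rw [← Nat.mod_add_div' (m i) A, (hm i hi hiA).2.1]

theorem setOf_pos_notMem_eq_image (hA : 0 < A) (hR0 : 0 ∈ R) (hR : ∀ n ∈ R, n + A ∈ R)
    (hm : IsLeastInResidueClasses R A m) :
    {n | 0 < n ∧ n ∉ R} =
      ↑(((Ico 1 A).sigma fun i => range (m i / A)).image fun p => p.1 + p.2 * A) := by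
  ext n
  simp only [Set.mem_ofPred_eq, coe_image, Set.mem_image, mem_coe, mem_sigma, mem_Ico, mem_range]
  constructor
  · rintro ⟨hn, hnR⟩
    have hi : 1 ≤ n % A := by
      refine Nat.one_le_iff_ne_zero.mpr fun h0 => hnR ?_
      have hmul := add_mul_mem_of_forall_add_mem hR hR0 (n / A)
      rwa [zero_add, Nat.div_mul_cancel (Nat.dvd_of_mod_eq_zero h0)] at hmul
    have hiA : n % A < A := Nat.mod_lt n hA
    refine ⟨⟨n % A, n / A⟩, ⟨⟨hi, hiA⟩, ?_⟩, Nat.mod_add_div' n A⟩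
    dsimp only
    by_contra! hle
    obtain ⟨d, hd⟩ := Nat.exists_eq_add_of_le hle
    refine hnR ?_
    have hn_eq : n = m (n % A) + d * A := by
      conv_lhs => rw [← Nat.mod_add_div' n A]
      rw [hd, add_mul, ← add_assoc, ← hm.eq_add_div_mul hi hiA]
    rw [hn_eq]
    exact add_mul_mem_of_forall_add_mem hR (hm _ hi hiA).1 d
  · rintro ⟨⟨i, t⟩, ⟨⟨hi, hiA⟩, ht⟩, rfl⟩
    dsimp only at hi hiA ht ⊢
    refine ⟨by omega, fun hmem => ?_⟩
    have hres : (i + t * A) % A = i := by rw [Nat.add_mul_mod_self_right, Nat.mod_eq_of_lt hiA]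
    have hle := (hm i hi hiA).2.2 _ (by omega) hmem hres
    have hlt : t * A < m i / A * A := Nat.mul_lt_mul_of_pos_right ht hA
    have hmi := hm.eq_add_div_mul hi hiA
    omega

theorem finsum_mem_pos_notMem_eq_sum {M : Type*} [AddCommMonoid M] (f : ℕ → M) (hA : 0 < A)
    (hR0 : 0 ∈ R) (hR : ∀ n ∈ R, n + A ∈ R) (hm : IsLeastInResidueClasses R A m) :
    ∑ᶠ n ∈ {n | 0 < n ∧ n ∉ R}, f n = ∑ i ∈ Ico 1 A, ∑ t ∈ range (m i / A), f (i + t * A) := by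
  rw [setOf_pos_notMem_eq_image hA hR0 hR hm, finsum_mem_coe_finset, sum_image, sum_sigma]
  rintro ⟨i, t⟩ hp ⟨i', t'⟩ hp' h
  simp only [coe_sigma, Set.mem_sigma_iff, coe_Ico, Set.mem_Ico, mem_coe] at hp hp' h
  have hii' : i = i' := by
    simpa [Nat.add_mul_mod_self_right, Nat.mod_eq_of_lt hp.1.2, Nat.mod_eq_of_lt hp'.1.2]
      using congrArg (· % A) h
  subst hii'
  have htt' : t = t' := Nat.eq_of_mul_eq_mul_right hA (by omega)
  rw [htt']

theorem finsum_mem_neg_one_pow_mul_gaps (hA : Odd A) (hR0 : 0 ∈ R) (hR : ∀ n ∈ R, n + A ∈ R)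
    (hm : IsLeastInResidueClasses R A m) :
    ∑ᶠ n ∈ {n | 0 < n ∧ n ∉ R}, (-1 : ℚ) ^ n * n =
      ∑ i ∈ Ico 1 A, altPotential A (m i) + ((A : ℚ) - 1) / 4 := by
  rw [finsum_mem_pos_notMem_eq_sum _ hA.pos hR0 hR hm]
  have hres : ∀ i ∈ Ico 1 A, ∑ t ∈ range (m i / A), (-1 : ℚ) ^ (i + t * A) * ↑(i + t * A) =
      altPotential A (m i) - altPotential A i := fun i hi => by
    obtain ⟨hi, hiA⟩ := mem_Ico.mp hi
    rw [sum_range_neg_one_pow_mul_eq_altPotential_sub hA, ← hm.eq_add_div_mul hi hiA]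
  obtain ⟨b, rfl⟩ := hA
  rw [sum_congr rfl hres, sum_sub_distrib, sum_Ico_altPotential]
  push_cast
  ring

end Gaps

theorem alternating_sylvester_sum_general
    (k : ℕ) (hk : 0 < k) (a : Fin k → ℕ) (hodd : Odd (a ⟨0, hk⟩))
    (m : ℕ → ℕ)
    (hm : ∀ i, 1 ≤ i → i < a ⟨0, hk⟩ →
      0 < m i ∧ (∃ x : Fin k → ℕ, m i = ∑ j, x j * a j) ∧ m i % a ⟨0, hk⟩ = i ∧
        ∀ n : ℕ, 0 < n → (∃ x : Fin k → ℕ, n = ∑ j, x j * a j) → n % a ⟨0, hk⟩ = i →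
          m i ≤ n) :
    ∑ᶠ n ∈ {n : ℕ | 0 < n ∧ ¬∃ x : Fin k → ℕ, n = ∑ j, x j * a j},
        (-1 : ℚ) ^ n * (n : ℚ) =
      -(1 / 2) * ∑ i ∈ Finset.Ico 1 (a ⟨0, hk⟩), (-1 : ℚ) ^ m i * (m i : ℚ)
        + ((a ⟨0, hk⟩ : ℚ) / 4) * ∑ i ∈ Finset.Ico 1 (a ⟨0, hk⟩), (-1 : ℚ) ^ m i
        + ((a ⟨0, hk⟩ : ℚ) - 1) / 4 := by
  let R : Set ℕ := {n | ∃ x : Fin k → ℕ, n = ∑ j, x j * a j}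
  have hR0 : 0 ∈ R := ⟨0, by simp⟩
  have hR : ∀ n ∈ R, n + a ⟨0, hk⟩ ∈ R := by
    rintro n ⟨x, rfl⟩
    exact ⟨x + Pi.single ⟨0, hk⟩ 1, by simp [add_mul, sum_add_distrib, Pi.single_apply]⟩
  have hmR : IsLeastInResidueClasses R (a ⟨0, hk⟩) m := fun i hi hiA => (hm i hi hiA).2
  refine (finsum_mem_neg_one_pow_mul_gaps hodd hR0 hR hmR).trans ?_
  simp only [altPotential, sum_add_distrib, ← mul_sum]

/-- the alternating Sylvester sum `∑_{n ∈ NR} (-1)ⁿ n` when `a₁` is odd. -/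
theorem alternating_sylvester_sum
    (k : ℕ) (hk : 0 < k) (a : Fin k → ℕ) (ha : ∀ i, 0 < a i)
    (hgcd : Finset.univ.gcd a = 1) (hodd : Odd (a ⟨0, hk⟩))
    (m : ℕ → ℕ)
    (hm : ∀ i, 1 ≤ i → i < a ⟨0, hk⟩ →
      0 < m i ∧ (∃ x : Fin k → ℕ, m i = ∑ j, x j * a j) ∧ m i % a ⟨0, hk⟩ = i ∧
        ∀ n : ℕ, 0 < n → (∃ x : Fin k → ℕ, n = ∑ j, x j * a j) → n % a ⟨0, hk⟩ = i →
          m i ≤ n) :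
    ∑ᶠ n ∈ {n : ℕ | 0 < n ∧ ¬∃ x : Fin k → ℕ, n = ∑ j, x j * a j},
        (-1 : ℚ) ^ n * (n : ℚ) =
      -(1 / 2) * ∑ i ∈ Finset.Ico 1 (a ⟨0, hk⟩), (-1 : ℚ) ^ m i * (m i : ℚ)
        + ((a ⟨0, hk⟩ : ℚ) / 4) * ∑ i ∈ Finset.Ico 1 (a ⟨0, hk⟩), (-1 : ℚ) ^ m i
        + ((a ⟨0, hk⟩ : ℚ) - 1) / 4 :=
  alternating_sylvester_sum_general k hk a hodd m hm
end

section
/- Let a, b, c be positive integers with gcd(a,b,c) = 1 and a | lcm(b,c), and set l₁ = lcm(a,b), l₂ = lcm(a,c). Let λ be a complex number with λ ≠ 0, λ^a ≠ 1, λ^b ≠ 1 and λ^c ≠ 1. Then ∑_{n ∈ NR(a,b,c)} λⁿ n = [l₁(λ^{l₂} − 1) + l₂(λ^{l₁} − 1) + (l₁ + l₂ − a − b − c)(λ^{l₁} − 1)(λ^{l₂} − 1)] / [(λ^a − 1)(λ^b − 1)(λ^c − 1)] − [(λ^{l₁} − 1)(λ^{l₂} − 1) / ((λ^a − 1)(λ^b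 − 1)(λ^c − 1))] · (a/(λ^a − 1) + b/(λ^b − 1) + c/(λ^c − 1)) + λ/(λ − 1)². -/
lemma aux_hsum (x : ℂ) (m : ℕ) :
    (x - 1) ^ 2 * ∑ k ∈ Finset.range m, (k : ℂ) * x ^ k
      = ((m : ℂ) - 1) * x ^ m * x - (m : ℂ) * x ^ m + x := by
  induction m with
  | zero => simp
  | succ m ih =>
    rw [Finset.sum_range_succ, mul_add, ih, pow_succ]
    push_cast
    ring

lemma aux_inner (lam : ℂ) (a r q : ℕ) :
    (lam ^ a - 1) ^ 2 * ∑ k ∈ Finset.range q, lam ^ (r + a * k) * ((r + a * k : ℕ) : ℂ)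
      = (((r + a * q : ℕ) : ℂ) - (a : ℂ)) * lam ^ (r + a * q) * lam ^ a
        - ((r + a * q : ℕ) : ℂ) * lam ^ (r + a * q)
        + ((a : ℂ) - (r : ℂ)) * lam ^ r * lam ^ a + (r : ℂ) * lam ^ r := by
  induction q with
  | zero => push_cast; simp; ring
  | succ q ih =>
    rw [Finset.sum_range_succ, mul_add, ih,
      show r + a * (q + 1) = (r + a * q) + a by ring, pow_add]
    push_cast
    ring

lemma aux_amul (a b c : ℕ) (hgcd : Nat.gcd a (Nat.gcd b c) = 1)
    (hdvd : a ∣ Nat.lcm b c) : a = Nat.gcd a b * Nat.gcd a c := by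
  have hd12 : Nat.gcd (Nat.gcd a b) (Nat.gcd a c) = 1 := by
    refine Nat.dvd_one.mp ?_
    rw [← hgcd]
    exact Nat.dvd_gcd ((Nat.gcd_dvd_left _ _).trans (Nat.gcd_dvd_left a b))
      (Nat.dvd_gcd ((Nat.gcd_dvd_left _ _).trans (Nat.gcd_dvd_right a b))
        ((Nat.gcd_dvd_right _ _).trans (Nat.gcd_dvd_right a c)))
  have hbc : a ∣ b * c := hdvd.trans (Nat.lcm_dvd (dvd_mul_right b c) (dvd_mul_left c b))
  have h1 : a ∣ Nat.gcd a b * Nat.gcd a c := by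
    have e : Nat.gcd a b * Nat.gcd a c
        = Nat.gcd (Nat.gcd (a * a) (a * c)) (Nat.gcd (b * a) (b * c)) := by
      rw [Nat.gcd_mul_left a a c, Nat.gcd_mul_left b a c, Nat.gcd_mul_right]
    rw [e]
    exact Nat.dvd_gcd
      (Nat.dvd_gcd (dvd_mul_right a a) (dvd_mul_right a c))
      (Nat.dvd_gcd (dvd_mul_left a b) hbc)
  have h2 : Nat.gcd a b * Nat.gcd a c ∣ a :=
    Nat.Coprime.mul_dvd_of_dvd_of_dvd hd12 (Nat.gcd_dvd_left a b) (Nat.gcd_dvd_left a c)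
  exact Nat.dvd_antisymm h1 h2

set_option maxHeartbeats 1600000 in
lemma aux_final (lam A B C U V b c d1 d2 : ℂ)
    (hA : A - 1 ≠ 0) (hB : B - 1 ≠ 0) (hC : C - 1 ≠ 0) :
    ((A - 1) * (b * ((d2 - 1) * U * B - d2 * U + B) * ((V - 1) * (C - 1))
          + c * ((U - 1) * (B - 1)) * ((d1 - 1) * V * C - d1 * V + C))
        - d1 * d2 * A * ((U - 1) * (B - 1) * ((V - 1) * (C - 1))))
      / ((B - 1) ^ 2 * (C - 1) ^ 2 * (A - 1) ^ 2)
    = (b * d2 * (V - 1) + c * d1 * (U - 1)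
          + (b * d2 + c * d1 - d1 * d2 - b - c) * (U - 1) * (V - 1))
        / ((A - 1) * (B - 1) * (C - 1))
      - (U - 1) * (V - 1) / ((A - 1) * (B - 1) * (C - 1))
          * (d1 * d2 / (A - 1) + b / (B - 1) + c / (C - 1)) := by
  have hD1 : (A - 1) * (B - 1) * (C - 1) ≠ 0 := by
    exact mul_ne_zero (mul_ne_zero hA hB) hC
  have hDD : (A - 1) * (B - 1) * (C - 1) * ((A - 1) * (B - 1) * (C - 1)) ≠ 0 :=
    mul_ne_zero hD1 hD1
  have hD2 : (B - 1) ^ 2 * (C - 1) ^ 2 * (A - 1) ^ 2 ≠ 0 :=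
    mul_ne_zero (mul_ne_zero (pow_ne_zero 2 hB) (pow_ne_zero 2 hC)) (pow_ne_zero 2 hA)
  have hS3 : d1 * d2 / (A - 1) + b / (B - 1) + c / (C - 1)
      = (d1 * d2 * (B - 1) * (C - 1) + b * (A - 1) * (C - 1) + c * (A - 1) * (B - 1))
        / ((A - 1) * (B - 1) * (C - 1)) := by
    rw [div_add_div _ _ hA hB, div_add_div _ _ (mul_ne_zero hA hB) hC,
      div_eq_div_iff (mul_ne_zero (mul_ne_zero hA hB) hC) hD1]
    ring
  rw [hS3, div_mul_div_comm, div_sub_div _ _ hD1 hDD]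
  rw [show (b * d2 * (V - 1) + c * d1 * (U - 1)
          + (b * d2 + c * d1 - d1 * d2 - b - c) * (U - 1) * (V - 1))
        * ((A - 1) * (B - 1) * (C - 1) * ((A - 1) * (B - 1) * (C - 1)))
      - (A - 1) * (B - 1) * (C - 1) * ((U - 1) * (V - 1)
          * (d1 * d2 * (B - 1) * (C - 1) + b * (A - 1) * (C - 1) + c * (A - 1) * (B - 1)))
      = ((A - 1) * (B - 1) * (C - 1)) * ((b * d2 * (V - 1) + c * d1 * (U - 1)
          + (b * d2 + c * d1 - d1 * d2 - b - c) * (U - 1) * (V - 1))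
            * ((A - 1) * (B - 1) * (C - 1))
          - (U - 1) * (V - 1) * (d1 * d2 * (B - 1) * (C - 1) + b * (A - 1) * (C - 1)
              + c * (A - 1) * (B - 1))) from by ring,
    show (A - 1) * (B - 1) * (C - 1) * ((A - 1) * (B - 1) * (C - 1)
        * ((A - 1) * (B - 1) * (C - 1)))
      = ((A - 1) * (B - 1) * (C - 1)) * (((A - 1) * (B - 1) * (C - 1))
          * ((A - 1) * (B - 1) * (C - 1))) from by ring,
    mul_div_mul_left _ _ hD1,
    div_eq_div_iff hD2 (mul_ne_zero hD1 hD1)]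
  ring

/-- weighted Sylvester sum in three variables with `a ∣ lcm(b,c)`,
for `λ ≠ 0`, `λ^a ≠ 1`, `λ^b ≠ 1`, `λ^c ≠ 1`. -/
theorem weighted_sylvester_sum_three_variables
    (a b c : ℕ) (ha : 0 < a) (hb : 0 < b) (hc : 0 < c)
    (hgcd : Nat.gcd a (Nat.gcd b c) = 1) (hdvd : a ∣ Nat.lcm b c)
    (lam : ℂ) (hlam0 : lam ≠ 0)
    (hlama : lam ^ a ≠ 1) (hlamb : lam ^ b ≠ 1) (hlamc : lam ^ c ≠ 1) :
    ∑ᶠ n ∈ {n : ℕ | 0 < n ∧ ¬∃ x y z : ℕ, n = a * x + b * y + c * z},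
        lam ^ n * (n : ℂ) =
      ((Nat.lcm a b : ℂ) * (lam ^ Nat.lcm a c - 1) +
          (Nat.lcm a c : ℂ) * (lam ^ Nat.lcm a b - 1) +
          ((Nat.lcm a b : ℂ) + (Nat.lcm a c : ℂ) - a - b - c) *
            (lam ^ Nat.lcm a b - 1) * (lam ^ Nat.lcm a c - 1)) /
        ((lam ^ a - 1) * (lam ^ b - 1) * (lam ^ c - 1))
      - (lam ^ Nat.lcm a b - 1) * (lam ^ Nat.lcm a c - 1) /
          ((lam ^ a - 1) * (lam ^ b - 1) * (lam ^ c - 1)) *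
          ((a : ℂ) / (lam ^ a - 1) + (b : ℂ) / (lam ^ b - 1) + (c : ℂ) / (lam ^ c - 1))
      + lam / (lam - 1) ^ 2 := by
  ----------------------------------------------------------------
  -- arithmetic setup
  ----------------------------------------------------------------
  set d1 := Nat.gcd a b with hd1
  set d2 := Nat.gcd a c with hd2
  have hd1pos : 0 < d1 := Nat.gcd_pos_of_pos_left _ ha
  have hd2pos : 0 < d2 := Nat.gcd_pos_of_pos_left _ ha
  have ha12 : a = d1 * d2 := aux_amul a b c hgcd hdvd
  have hd12 : Nat.gcd d1 d2 = 1 := by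
    refine Nat.dvd_one.mp ?_
    rw [← hgcd]
    exact Nat.dvd_gcd ((Nat.gcd_dvd_left _ _).trans (Nat.gcd_dvd_left a b))
      (Nat.dvd_gcd ((Nat.gcd_dvd_left _ _).trans (Nat.gcd_dvd_right a b))
        ((Nat.gcd_dvd_right _ _).trans (Nat.gcd_dvd_right a c)))
  have cop2b : Nat.gcd d2 b = 1 := by
    refine Nat.dvd_one.mp ?_
    rw [← hd12]
    exact Nat.dvd_gcd
      (Nat.dvd_gcd ((Nat.gcd_dvd_left d2 b).trans (Nat.gcd_dvd_left a c))
        (Nat.gcd_dvd_right d2 b))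
      (Nat.gcd_dvd_left d2 b)
  have cop1c : Nat.gcd d1 c = 1 := by
    refine Nat.dvd_one.mp ?_
    rw [← hd12]
    exact Nat.dvd_gcd (Nat.gcd_dvd_left d1 c)
      (Nat.dvd_gcd ((Nat.gcd_dvd_left d1 c).trans (Nat.gcd_dvd_left a b))
        (Nat.gcd_dvd_right d1 c))
  have hL1 : Nat.lcm a b = b * d2 := by
    have h := Nat.gcd_mul_lcm a b
    have h2 : d1 * Nat.lcm a b = d1 * (b * d2) := by
      rw [h, ha12]; ring
    exact Nat.eq_of_mul_eq_mul_left hd1pos h2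
  have hL2 : Nat.lcm a c = c * d1 := by
    have h := Nat.gcd_mul_lcm a c
    have h2 : d2 * Nat.lcm a c = d2 * (c * d1) := by
      rw [h, ha12]; ring
    exact Nat.eq_of_mul_eq_mul_left hd2pos h2
  ----------------------------------------------------------------
  -- canonical representation
  ----------------------------------------------------------------
  have hrep : ∀ n : ℕ, (∃ x y z : ℕ, n = a * x + b * y + c * z) ↔
      ∃ x y z : ℕ, y < d2 ∧ z < d1 ∧ n = a * x + b * y + c * z := by
    intro n
    constructor
    · rintro ⟨x, y, z, rfl⟩
      set e1 := Nat.lcm a b / a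
      set e2 := Nat.lcm a c / a
      have he1 : a * e1 = b * d2 := by
        rw [Nat.mul_div_cancel' (Nat.dvd_lcm_left a b), hL1]
      have he2 : a * e2 = c * d1 := by
        rw [Nat.mul_div_cancel' (Nat.dvd_lcm_left a c), hL2]
      refine ⟨x + e1 * (y / d2) + e2 * (z / d1), y % d2, z % d1,
        Nat.mod_lt _ hd2pos, Nat.mod_lt _ hd1pos, ?_⟩
      have h1 : d2 * (y / d2) + y % d2 = y := Nat.div_add_mod y d2
      have h2 : d1 * (z / d1) + z % d1 = z := Nat.div_add_mod z d1
      calc a * x + b * y + c * z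
          = a * x + b * (d2 * (y / d2) + y % d2) + c * (d1 * (z / d1) + z % d1) := by
            rw [h1, h2]
        _ = a * x + (b * d2) * (y / d2) + (c * d1) * (z / d1)
              + b * (y % d2) + c * (z % d1) := by ring
        _ = a * x + (a * e1) * (y / d2) + (a * e2) * (z / d1)
              + b * (y % d2) + c * (z % d1) := by rw [he1, he2]
        _ = a * (x + e1 * (y / d2) + e2 * (z / d1)) + b * (y % d2) + c * (z % d1) := by
            ring
    · rintro ⟨x, y, z, _, _, rfl⟩
      exact ⟨x, y, z, rfl⟩
  ----------------------------------------------------------------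
  -- distinct residues
  ----------------------------------------------------------------
  have hinj : ∀ y z y' z' : ℕ, y < d2 → z < d1 → y' < d2 → z' < d1 →
      (b * y + c * z) % a = (b * y' + c * z') % a → y = y' ∧ z = z' := by
    intro y z y' z' hy hz hy' hz' h
    have hm : b * y + c * z ≡ b * y' + c * z' [MOD a] := h
    have hyy : y = y' := by
      have hm2 : b * y + c * z ≡ b * y' + c * z' [MOD d2] :=
        hm.of_dvd (Nat.gcd_dvd_left a c)
      have hcz : ∀ w : ℕ, c * w ≡ 0 [MOD d2] := fun w =>
        (Nat.modEq_zero_iff_dvd).mpr ((Nat.gcd_dvd_right a c).mul_right w)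
      have hby : b * y ≡ b * y' [MOD d2] :=
        Nat.ModEq.add_right_cancel ((hcz z).trans (hcz z').symm) hm2
      have := (Nat.ModEq.cancel_left_of_coprime cop2b hby)
      calc y = y % d2 := (Nat.mod_eq_of_lt hy).symm
        _ = y' % d2 := this
        _ = y' := Nat.mod_eq_of_lt hy'
    subst hyy
    have hcz : c * z ≡ c * z' [MOD a] := Nat.ModEq.add_left_cancel' (b * y) hm
    have hcz1 : c * z ≡ c * z' [MOD d1] := hcz.of_dvd (Nat.gcd_dvd_left a b)
    have := Nat.ModEq.cancel_left_of_coprime cop1c hcz1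
    refine ⟨rfl, ?_⟩
    calc z = z % d1 := (Nat.mod_eq_of_lt hz).symm
      _ = z' % d1 := this
      _ = z' := Nat.mod_eq_of_lt hz'
  ----------------------------------------------------------------
  -- surjectivity of residues
  ----------------------------------------------------------------
  set box : Finset (ℕ × ℕ) := Finset.range d2 ×ˢ Finset.range d1 with hbox
  have hinjOn : Set.InjOn (fun p : ℕ × ℕ => (b * p.1 + c * p.2) % a) ↑box := by
    rintro ⟨y, z⟩ hp ⟨y', z'⟩ hp' h
    simp only [hbox, Finset.coe_product, Set.mem_prod, Finset.mem_coe,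
      Finset.mem_range] at hp hp'
    obtain ⟨h1, h2⟩ := hinj y z y' z' hp.1 hp.2 hp'.1 hp'.2 h
    simp [h1, h2]
  have himg : box.image (fun p : ℕ × ℕ => (b * p.1 + c * p.2) % a) = Finset.range a := by
    apply Finset.eq_of_subset_of_card_le
    · intro r hr
      simp only [Finset.mem_image] at hr
      obtain ⟨p, _, rfl⟩ := hr
      exact Finset.mem_range.mpr (Nat.mod_lt _ ha)
    · rw [Finset.card_image_of_injOn hinjOn, Finset.card_range, hbox,
        Finset.card_product, Finset.card_range, Finset.card_range]
      rw [ha12]; exact Nat.le_of_eq (Nat.mul_comm d1 d2)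
  have hsurj : ∀ r : ℕ, r < a → ∃ y z : ℕ, y < d2 ∧ z < d1 ∧ (b * y + c * z) % a = r := by
    intro r hr
    have : r ∈ box.image (fun p : ℕ × ℕ => (b * p.1 + c * p.2) % a) := by
      rw [himg]; exact Finset.mem_range.mpr hr
    simp only [Finset.mem_image, hbox, Finset.mem_product, Finset.mem_range] at this
    obtain ⟨⟨y, z⟩, ⟨hy, hz⟩, hyz⟩ := this
    exact ⟨y, z, hy, hz, hyz⟩
  ----------------------------------------------------------------
  -- representability via Apéry elements
  ----------------------------------------------------------------
  have hreple : ∀ n y z : ℕ, y < d2 → z < d1 → (b * y + c * z) % a = n % a →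
      ((∃ x y z : ℕ, n = a * x + b * y + c * z) ↔ b * y + c * z ≤ n) := by
    intro n y z hy hz hmod
    constructor
    · intro h
      obtain ⟨x, y', z', hy', hz', rfl⟩ := (hrep _).mp h
      have hmm : (b * y' + c * z') % a = (a * x + b * y' + c * z') % a := by
        rw [add_assoc, Nat.mul_add_mod]
      obtain ⟨rfl, rfl⟩ := hinj y z y' z' hy hz hy' hz' (by rw [hmod, ← hmm])
      calc b * y + c * z ≤ a * x + (b * y + c * z) := Nat.le_add_left _ _
        _ = a * x + b * y + c * z := (add_assoc _ _ _).symm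
    · intro hle
      have hmeq : b * y + c * z ≡ n [MOD a] := hmod
      obtain ⟨k, hk⟩ := (Nat.modEq_iff_dvd' hle).mp hmeq
      refine ⟨k, y, z, ?_⟩
      have : n = a * k + (b * y + c * z) := by
        rw [← hk, Nat.sub_add_cancel hle]
      rw [this, ← add_assoc]
  ----------------------------------------------------------------
  -- the nonrepresentable set as an explicit finset
  ----------------------------------------------------------------
  set W : ℕ × ℕ → ℕ := fun p => b * p.1 + c * p.2 with hW
  set NRF : Finset ℕ :=
    box.biUnion (fun p => (Finset.range (W p / a)).image (fun k => W p % a + a * k)) with hNRF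
  have hset : {n : ℕ | 0 < n ∧ ¬∃ x y z : ℕ, n = a * x + b * y + c * z} = ↑NRF := by
    ext n
    simp only [Set.mem_setOf_eq, Finset.coe_biUnion, Set.mem_iUnion, Finset.mem_coe,
      Finset.mem_image, Finset.mem_range, hNRF, hbox, Finset.mem_product]
    constructor
    · rintro ⟨hn, hnr⟩
      obtain ⟨y, z, hy, hz, hmod⟩ := hsurj (n % a) (Nat.mod_lt n ha)
      have hnrep := hreple n y z hy hz hmod
      have hlt : n < W (y, z) := by
        by_contra hge
        exact hnr (hnrep.mpr (Nat.le_of_not_lt hge))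
      have h2 := Nat.div_add_mod (W (y, z)) a
      have h1 := Nat.div_add_mod n a
      refine ⟨(y, z), ⟨hy, hz⟩, n / a, ?_, ?_⟩
      · have hlt2 : a * (n / a) + n % a < a * (W (y, z) / a) + n % a := by
          rw [h1]
          rw [show (W (y, z) : ℕ) % a = n % a from hmod] at h2
          rw [h2]
          exact hlt
        exact Nat.lt_of_mul_lt_mul_left (Nat.lt_of_add_lt_add_right hlt2)
      · rw [show (W (y, z) : ℕ) % a = n % a from hmod]
        exact Nat.mod_add_div n a
    · rintro ⟨⟨y, z⟩, hp, k, hk, rfl⟩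
      have hy : y < d2 := hp.1
      have hz : z < d1 := hp.2
      have hra : W (y, z) % a < a := Nat.mod_lt _ ha
      have hmod : (W (y, z) % a + a * k) % a = W (y, z) % a := by
        rw [Nat.add_mul_mod_self_left, Nat.mod_eq_of_lt hra]
      have hlt : W (y, z) % a + a * k < W (y, z) := by
        have h1 : a * k < a * (W (y, z) / a) :=
          mul_lt_mul_of_pos_left hk ha
        calc W (y, z) % a + a * k < W (y, z) % a + a * (W (y, z) / a) :=
              Nat.add_lt_add_left h1 _
          _ = W (y, z) := Nat.mod_add_div _ _
      constructor
      · rcases Nat.eq_zero_or_pos (W (y, z) % a + a * k) with h0 | h0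
        · exfalso
          obtain ⟨hr0, hak⟩ := Nat.add_eq_zero.mp h0
          have hk0 : k = 0 := by
            rcases Nat.mul_eq_zero.mp hak with h | h
            · omega
            · exact h
          have h00 : (b * y + c * z) % a = (b * 0 + c * 0) % a := by
            have : (b * 0 + c * 0) % a = 0 := by simp
            rw [this]
            exact hr0
          obtain ⟨hy0, hz0⟩ := hinj y z 0 0 hy hz hd2pos hd1pos h00
          have : W (y, z) = 0 := by simp [hW, hy0, hz0]
          omega
        · exact h0
      · intro hr
        have hle := (hreple (W (y, z) % a + a * k) y z hy hz
          (by rw [hmod])).mp hr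
        exact absurd hle (Nat.not_le.mpr hlt)
  ----------------------------------------------------------------
  -- turn the finsum into a double finite sum
  ----------------------------------------------------------------
  rw [hset, finsum_mem_coe_finset]
  have hres : ∀ p : ℕ × ℕ, ∀ n ∈ (Finset.range (W p / a)).image (fun k => W p % a + a * k),
      n % a = W p % a := by
    intro p n hn
    obtain ⟨k, _, rfl⟩ := Finset.mem_image.mp hn
    rw [Nat.add_mul_mod_self_left, Nat.mod_eq_of_lt (Nat.mod_lt _ ha)]
  have hdisj : (↑box : Set (ℕ × ℕ)).PairwiseDisjoint
      (fun p => (Finset.range (W p / a)).image (fun k => W p % a + a * k)) := by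
    rintro ⟨y, z⟩ hp ⟨y', z'⟩ hp' hne
    simp only [hbox, Finset.coe_product, Set.mem_prod, Finset.mem_coe,
      Finset.mem_range] at hp hp'
    refine Finset.disjoint_left.mpr ?_
    intro n hn hn'
    have h1 := hres _ _ hn
    have h2 := hres _ _ hn'
    obtain ⟨e1, e2⟩ := hinj y z y' z' hp.1 hp.2 hp'.1 hp'.2 (by rw [← h1, ← h2])
    exact hne (by simp [e1, e2])
  have hsplit : ∑ n ∈ NRF, lam ^ n * (n : ℂ)
      = ∑ p ∈ box, ∑ k ∈ Finset.range (W p / a),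
          lam ^ (W p % a + a * k) * ((W p % a + a * k : ℕ) : ℂ) := by
    rw [hNRF, Finset.sum_biUnion hdisj]
    refine Finset.sum_congr rfl ?_
    intro p _
    rw [Finset.sum_image]
    intro k _ k' _ h
    have := Nat.add_left_cancel h
    exact Nat.eq_of_mul_eq_mul_left ha this
  rw [hsplit]
  ----------------------------------------------------------------
  -- evaluate the double sum
  ----------------------------------------------------------------
  set Gv : ℂ := ∑ y ∈ Finset.range d2, (lam ^ b) ^ y with hGvdef
  set Gt : ℂ := ∑ z ∈ Finset.range d1, (lam ^ c) ^ z with hGtdef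
  set Hv : ℂ := ∑ y ∈ Finset.range d2, (y : ℂ) * (lam ^ b) ^ y with hHvdef
  set Ht : ℂ := ∑ z ∈ Finset.range d1, (z : ℂ) * (lam ^ c) ^ z with hHtdef
  set G1 : ℂ := ∑ r ∈ Finset.range a, lam ^ r with hG1def
  set H1 : ℂ := ∑ r ∈ Finset.range a, (r : ℂ) * lam ^ r with hH1def
  have hE : (lam ^ a - 1) ^ 2 * ∑ p ∈ box, ∑ k ∈ Finset.range (W p / a),
        lam ^ (W p % a + a * k) * ((W p % a + a * k : ℕ) : ℂ)
      = ∑ p ∈ box, ((((W p : ℕ) : ℂ) - (a : ℂ)) * lam ^ (W p) * lam ^ a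
          - ((W p : ℕ) : ℂ) * lam ^ (W p)
          + (((a : ℂ) - ((W p % a : ℕ) : ℂ)) * lam ^ (W p % a) * lam ^ a
            + ((W p % a : ℕ) : ℂ) * lam ^ (W p % a))) := by
    rw [Finset.mul_sum]
    refine Finset.sum_congr rfl ?_
    intro p _
    have h := aux_inner lam a (W p % a) (W p / a)
    rw [Nat.mod_add_div (W p) a] at h
    rw [h]
    ring
  have hsum2 : ∑ p ∈ box, ((((W p : ℕ) : ℂ) - (a : ℂ)) * lam ^ (W p) * lam ^ a
        - ((W p : ℕ) : ℂ) * lam ^ (W p)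
        + (((a : ℂ) - ((W p % a : ℕ) : ℂ)) * lam ^ (W p % a) * lam ^ a
          + ((W p % a : ℕ) : ℂ) * lam ^ (W p % a)))
      = ((lam ^ a - 1) * ((b : ℂ) * Hv * Gt + (c : ℂ) * Gv * Ht)
          - (a : ℂ) * lam ^ a * (Gv * Gt))
        + ((a : ℂ) * lam ^ a * G1 - (lam ^ a - 1) * H1) := by
    rw [Finset.sum_add_distrib]
    congr 1
    · have hSG : ∑ p ∈ box, lam ^ (W p) = Gv * Gt := by
        rw [hbox, hW, Finset.sum_product, hGvdef, hGtdef, Finset.sum_mul_sum]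
        simp_rw [pow_add, pow_mul]
      have hSW : ∑ p ∈ box, ((W p : ℕ) : ℂ) * lam ^ (W p)
          = (b : ℂ) * Hv * Gt + (c : ℂ) * Gv * Ht := by
        rw [hbox, hW, Finset.sum_product]
        have row : ∀ y, ∑ z ∈ Finset.range d1,
            ((b * y + c * z : ℕ) : ℂ) * lam ^ (b * y + c * z)
            = (b : ℂ) * (y : ℂ) * (lam ^ b) ^ y * Gt
              + (lam ^ b) ^ y * ((c : ℂ) * Ht) := by
          intro y
          have hz : ∀ z ∈ Finset.range d1,
              ((b * y + c * z : ℕ) : ℂ) * lam ^ (b * y + c * z)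
              = (b : ℂ) * (y : ℂ) * (lam ^ b) ^ y * (lam ^ c) ^ z
                + (lam ^ b) ^ y * ((c : ℂ) * ((z : ℂ) * (lam ^ c) ^ z)) := by
            intro z _
            push_cast [pow_add, pow_mul]
            ring
          rw [Finset.sum_congr rfl hz, Finset.sum_add_distrib, ← Finset.mul_sum,
            ← Finset.mul_sum, ← Finset.mul_sum, ← hGtdef, ← hHtdef]
        rw [Finset.sum_congr rfl (fun y _ => row y), Finset.sum_add_distrib,
          ← Finset.sum_mul, ← Finset.sum_mul, ← hGvdef]
        have : ∑ y ∈ Finset.range d2, (b : ℂ) * (y : ℂ) * (lam ^ b) ^ y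
            = (b : ℂ) * Hv := by
          rw [hHvdef, Finset.mul_sum]
          exact Finset.sum_congr rfl fun _ _ => by ring
        rw [this]
        ring
      calc ∑ p ∈ box, ((((W p : ℕ) : ℂ) - (a : ℂ)) * lam ^ (W p) * lam ^ a
            - ((W p : ℕ) : ℂ) * lam ^ (W p))
          = ∑ p ∈ box, ((lam ^ a - 1) * (((W p : ℕ) : ℂ) * lam ^ (W p))
              - (a : ℂ) * lam ^ a * lam ^ (W p)) := by
            exact Finset.sum_congr rfl fun p _ => by ring
        _ = (lam ^ a - 1) * ∑ p ∈ box, ((W p : ℕ) : ℂ) * lam ^ (W p)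
              - (a : ℂ) * lam ^ a * ∑ p ∈ box, lam ^ (W p) := by
            rw [Finset.sum_sub_distrib, Finset.mul_sum, Finset.mul_sum]
        _ = (lam ^ a - 1) * ((b : ℂ) * Hv * Gt + (c : ℂ) * Gv * Ht)
              - (a : ℂ) * lam ^ a * (Gv * Gt) := by
            rw [hSG, hSW]
    · have hbij : ∑ p ∈ box, (((a : ℂ) - ((W p % a : ℕ) : ℂ)) * lam ^ (W p % a) * lam ^ a
            + ((W p % a : ℕ) : ℂ) * lam ^ (W p % a))
          = ∑ r ∈ Finset.range a, (((a : ℂ) - (r : ℂ)) * lam ^ r * lam ^ a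
            + (r : ℂ) * lam ^ r) := by
        refine Finset.sum_bij (fun p _ => W p % a) ?_ ?_ ?_ ?_
        · intro p hp
          exact Finset.mem_range.mpr (Nat.mod_lt _ ha)
        · rintro ⟨y, z⟩ hp ⟨y', z'⟩ hp' h
          simp only [hbox, Finset.mem_product, Finset.mem_range] at hp hp'
          obtain ⟨e1, e2⟩ := hinj y z y' z' hp.1 hp.2 hp'.1 hp'.2 h
          simp [e1, e2]
        · intro r hr
          have : r ∈ box.image (fun p : ℕ × ℕ => (b * p.1 + c * p.2) % a) := by
            rw [himg]; exact hr
          obtain ⟨p, hp, hpr⟩ := Finset.mem_image.mp this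
          exact ⟨p, hp, hpr⟩
        · intro p hp
          rfl
      rw [hbij]
      calc ∑ r ∈ Finset.range a, (((a : ℂ) - (r : ℂ)) * lam ^ r * lam ^ a
            + (r : ℂ) * lam ^ r)
          = ∑ r ∈ Finset.range a, ((a : ℂ) * lam ^ a * lam ^ r
              - (lam ^ a - 1) * ((r : ℂ) * lam ^ r)) := by
            exact Finset.sum_congr rfl fun r _ => by ring
        _ = (a : ℂ) * lam ^ a * G1 - (lam ^ a - 1) * H1 := by
            rw [Finset.sum_sub_distrib, ← Finset.mul_sum, ← Finset.mul_sum,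
              hG1def, hH1def]
  ----------------------------------------------------------------
  -- nonvanishing denominators
  ----------------------------------------------------------------
  have hA' : lam ^ a - 1 ≠ 0 := sub_ne_zero.mpr hlama
  have hB' : lam ^ b - 1 ≠ 0 := sub_ne_zero.mpr hlamb
  have hC' : lam ^ c - 1 ≠ 0 := sub_ne_zero.mpr hlamc
  have hl1 : lam - 1 ≠ 0 := by
    intro h
    apply hlama
    rw [sub_eq_zero] at h
    rw [h, one_pow]
  ----------------------------------------------------------------
  -- closed forms for the geometric sums
  ----------------------------------------------------------------
  have e1 : (lam ^ b - 1) * Gv = lam ^ Nat.lcm a b - 1 := by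
    rw [hGvdef, mul_comm, geom_sum_mul, ← pow_mul, ← hL1]
  have e2 : (lam ^ c - 1) * Gt = lam ^ Nat.lcm a c - 1 := by
    rw [hGtdef, mul_comm, geom_sum_mul, ← pow_mul, ← hL2]
  have e3 : (lam ^ b - 1) ^ 2 * Hv
      = ((d2 : ℂ) - 1) * lam ^ Nat.lcm a b * lam ^ b
        - (d2 : ℂ) * lam ^ Nat.lcm a b + lam ^ b := by
    have h := aux_hsum (lam ^ b) d2
    rw [← pow_mul, ← hL1] at h
    rw [hHvdef]
    exact h
  have e4 : (lam ^ c - 1) ^ 2 * Ht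
      = ((d1 : ℂ) - 1) * lam ^ Nat.lcm a c * lam ^ c
        - (d1 : ℂ) * lam ^ Nat.lcm a c + lam ^ c := by
    have h := aux_hsum (lam ^ c) d1
    rw [← pow_mul, ← hL2] at h
    rw [hHtdef]
    exact h
  have e5 : (lam - 1) * G1 = lam ^ a - 1 := by
    rw [hG1def, mul_comm, geom_sum_mul]
  have e6 : (lam - 1) ^ 2 * H1
      = ((a : ℂ) - 1) * lam ^ a * lam - (a : ℂ) * lam ^ a + lam := by
    have h := aux_hsum lam a
    rw [hH1def]
    exact h
  ----------------------------------------------------------------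
  -- single-fraction values for the two parts
  ----------------------------------------------------------------
  have hmainval : ((lam ^ a - 1) * ((b : ℂ) * Hv * Gt + (c : ℂ) * Gv * Ht)
        - (a : ℂ) * lam ^ a * (Gv * Gt)) * ((lam ^ b - 1) ^ 2 * (lam ^ c - 1) ^ 2)
      = (lam ^ a - 1) * ((b : ℂ) * (((d2 : ℂ) - 1) * lam ^ Nat.lcm a b * lam ^ b
            - (d2 : ℂ) * lam ^ Nat.lcm a b + lam ^ b)
            * ((lam ^ Nat.lcm a c - 1) * (lam ^ c - 1))
          + (c : ℂ) * ((lam ^ Nat.lcm a b - 1) * (lam ^ b - 1))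
            * (((d1 : ℂ) - 1) * lam ^ Nat.lcm a c * lam ^ c
              - (d1 : ℂ) * lam ^ Nat.lcm a c + lam ^ c))
        - (a : ℂ) * lam ^ a * ((lam ^ Nat.lcm a b - 1) * (lam ^ b - 1)
            * ((lam ^ Nat.lcm a c - 1) * (lam ^ c - 1))) := by
    linear_combination
      ((lam ^ a - 1) * (b : ℂ) * (lam ^ c - 1) ^ 2 * Gt) * e3
      + ((lam ^ a - 1) * (b : ℂ) * (((d2 : ℂ) - 1) * lam ^ Nat.lcm a b * lam ^ b
          - (d2 : ℂ) * lam ^ Nat.lcm a b + lam ^ b) * (lam ^ c - 1)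
        - (a : ℂ) * lam ^ a * (lam ^ Nat.lcm a b - 1) * (lam ^ b - 1) * (lam ^ c - 1)) * e2
      + ((lam ^ a - 1) * (c : ℂ) * (lam ^ b - 1) * (lam ^ c - 1) ^ 2 * Ht
        - (a : ℂ) * lam ^ a * (lam ^ b - 1) * (lam ^ c - 1) ^ 2 * Gt) * e1
      + ((lam ^ a - 1) * (c : ℂ) * (lam ^ Nat.lcm a b - 1) * (lam ^ b - 1)) * e4
  have hresval : ((a : ℂ) * lam ^ a * G1 - (lam ^ a - 1) * H1) * ((lam - 1) ^ 2)
      = lam * (lam ^ a - 1) ^ 2 := by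
    linear_combination ((a : ℂ) * lam ^ a * (lam - 1)) * e5 - (lam ^ a - 1) * e6
  ----------------------------------------------------------------
  -- put it together
  ----------------------------------------------------------------
  have hBC2 : (lam ^ b - 1) ^ 2 * (lam ^ c - 1) ^ 2 ≠ 0 :=
    mul_ne_zero (pow_ne_zero 2 hB') (pow_ne_zero 2 hC')
  have hmain : (lam ^ a - 1) * ((b : ℂ) * Hv * Gt + (c : ℂ) * Gv * Ht)
        - (a : ℂ) * lam ^ a * (Gv * Gt)
      = ((lam ^ a - 1) * ((b : ℂ) * (((d2 : ℂ) - 1) * lam ^ Nat.lcm a b * lam ^ b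
            - (d2 : ℂ) * lam ^ Nat.lcm a b + lam ^ b)
            * ((lam ^ Nat.lcm a c - 1) * (lam ^ c - 1))
          + (c : ℂ) * ((lam ^ Nat.lcm a b - 1) * (lam ^ b - 1))
            * (((d1 : ℂ) - 1) * lam ^ Nat.lcm a c * lam ^ c
              - (d1 : ℂ) * lam ^ Nat.lcm a c + lam ^ c))
        - (a : ℂ) * lam ^ a * ((lam ^ Nat.lcm a b - 1) * (lam ^ b - 1)
            * ((lam ^ Nat.lcm a c - 1) * (lam ^ c - 1))))
        / ((lam ^ b - 1) ^ 2 * (lam ^ c - 1) ^ 2) :=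
    (eq_div_iff hBC2).mpr hmainval
  have hresv : (a : ℂ) * lam ^ a * G1 - (lam ^ a - 1) * H1
      = lam * (lam ^ a - 1) ^ 2 / (lam - 1) ^ 2 :=
    (eq_div_iff (pow_ne_zero 2 hl1)).mpr hresval
  have htot : ∑ p ∈ box, ∑ k ∈ Finset.range (W p / a),
        lam ^ (W p % a + a * k) * ((W p % a + a * k : ℕ) : ℂ)
      = (((lam ^ a - 1) * ((b : ℂ) * Hv * Gt + (c : ℂ) * Gv * Ht)
            - (a : ℂ) * lam ^ a * (Gv * Gt))
          + ((a : ℂ) * lam ^ a * G1 - (lam ^ a - 1) * H1)) / (lam ^ a - 1) ^ 2 := by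
    rw [eq_div_iff (pow_ne_zero 2 hA'), mul_comm, hE, hsum2]
  rw [htot, add_div, hmain, hresv, div_div]
  have hlast : lam * (lam ^ a - 1) ^ 2 / (lam - 1) ^ 2 / (lam ^ a - 1) ^ 2
      = lam / (lam - 1) ^ 2 := by
    rw [div_div, mul_comm ((lam - 1) ^ 2) ((lam ^ a - 1) ^ 2), ← div_div,
      mul_div_assoc, div_self (pow_ne_zero 2 hA'), mul_one]
  rw [hlast]
  ----------------------------------------------------------------
  -- final algebraic identity
  ----------------------------------------------------------------
  have ca : ((a : ℕ) : ℂ) = (d1 : ℂ) * (d2 : ℂ) := by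
    rw [ha12]; push_cast; ring
  have cL1 : ((Nat.lcm a b : ℕ) : ℂ) = (b : ℂ) * (d2 : ℂ) := by
    rw [hL1]; push_cast; ring
  have cL2 : ((Nat.lcm a c : ℕ) : ℂ) = (c : ℂ) * (d1 : ℂ) := by
    rw [hL2]; push_cast; ring
  rw [ca, cL1, cL2]
  rw [aux_final lam (lam ^ a) (lam ^ b) (lam ^ c) (lam ^ Nat.lcm a b)
    (lam ^ Nat.lcm a c) (b : ℂ) (c : ℂ) (d1 : ℂ) (d2 : ℂ) hA' hB' hC']
end

section
/- Let a and b be positive integers with gcd(a,b) = 1, and let λ be a complex number with λ ≠ 0, λ^a ≠ 1 and λ^b ≠ 1. Then ∑_{n ∈ NR(a,b)} λⁿ n = λ/(λ − 1)² + a b λ^{a b}/((λ^a − 1)(λ^b − 1)) − (λ^{a b} − 1)((a + b)λ^{a+b} − a λ^a − b λ^b) / ((λ^a − 1)²(λ^b − 1)²). -/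
/-!
Write `N = ∑_{n ∈ NR(a,b)} Xⁿ`. Every `m ∈ ℕ` is uniquely `a x + b y` with `0 ≤ x < b` and
`y ∈ ℤ`, and `m` is representable iff `y ≥ 0`. Hence `(x, y) => a x + b y` maps `[0,b) × [0,a)`
bijectively onto the representable `m` for which `m - ab` is not representable, i.e. onto
`(S ∩ [0,ab)) ⊔ (NR(a,b) + ab)` for the semigroup `S` generated by `a` and `b`. Comparing the
generating polynomials and multiplying by `(X-1)(X^a-1)(X^b-1)` gives, after cancelling the monic
factor `X^{ab} - 1`,
  `(X-1)(X^a-1)(X^b-1) N = (X-1)(X^{ab}-1) - (X^a-1)(X^b-1)`.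
The weighted sum is `λ N'(λ)`, which the quotient rule reads off from this identity.
-/

open Finset Polynomial

namespace Polynomial

lemma mul_eval_derivative_X_pow {R : Type*} [CommSemiring R] (n : ℕ) (x : R) :
    x * (derivative (X ^ n : R[X])).eval x = n * x ^ n := by
  rw [derivative_X_pow, eval_mul, eval_C, eval_pow, eval_X]
  rcases n with _ | n
  · simp
  · rw [Nat.add_sub_cancel, pow_succ]
    ring

lemma mul_eval_derivative_sum_X_pow {R : Type*} [CommSemiring R] (s : Finset ℕ) (x : R) :
    x * (derivative (∑ n ∈ s, X ^ n : R[X])).eval x = ∑ n ∈ s, x ^ n * n := by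
  rw [derivative_sum, eval_finsetSum, mul_sum]
  exact sum_congr rfl fun n _ => by rw [mul_eval_derivative_X_pow, mul_comm]

lemma eval_derivative_eq_of_mul_eq {K : Type*} [Field K] {D N R : K[X]} (h : D * N = R) {x : K}
    (hD : D.eval x ≠ 0) :
    (derivative N).eval x =
      ((derivative R).eval x * D.eval x - (derivative D).eval x * R.eval x) / D.eval x ^ 2 := by
  have h₀ := congrArg (eval x) h
  have h₁ := congrArg (fun p => (derivative p).eval x) h
  simp only [derivative_mul, eval_add, eval_mul] at h₀ h₁
  rw [eq_div_iff (pow_ne_zero 2 hD)]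
  linear_combination D.eval x * h₁ - (derivative D).eval x * h₀

end Polynomial

namespace Sylvester

variable {a b n : ℕ}

def Representable (a b n : ℕ) : Prop := ∃ x y : ℕ, n = a * x + b * y

open Classical in
noncomputable def gaps (a b : ℕ) : Finset ℕ :=
  (range (a * b)).filter fun n => ¬Representable a b n

lemma Representable.exists_fst_lt (hb : 0 < b) (h : Representable a b n) :
    ∃ x < b, ∃ y, n = a * x + b * y := by
  obtain ⟨x, y, rfl⟩ := h
  refine ⟨x % b, Nat.mod_lt _ hb, y + a * (x / b), ?_⟩
  conv_lhs => rw [← Nat.mod_add_div x b]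
  ring

lemma representable_of_mul_le (hab : a.Coprime b) (h : a * b ≤ n) : Representable a b n := by
  obtain ⟨x, y, hxy⟩ := Nat.exists_add_mul_eq_of_gcd_dvd_of_mul_pred_le a b n
    (by simp [hab.gcd_eq_one]) ((Nat.mul_le_mul a.pred_le b.pred_le).trans h)
  exact ⟨x, y, by rw [← hxy]; ring⟩

lemma eq_and_eq_of_mul_add_mul_eq (hab : a.Coprime b) {x x' y y' : ℕ} (hx : x < b)
    (hx' : x' < b) (h : a * x + b * y = a * x' + b * y') : x = x' ∧ y = y' := by
  have hmod : a * x ≡ a * x' [MOD b] := by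
    simpa [Nat.ModEq, Nat.add_mul_mod_self_left] using congrArg (· % b) h
  obtain rfl : x = x' := (Nat.ModEq.cancel_left_of_coprime hab.symm hmod).eq_of_lt_of_lt hx hx'
  exact ⟨rfl, Nat.mul_left_cancel (by omega : 0 < b) (by omega)⟩

lemma coe_gaps (hab : a.Coprime b) :
    (gaps a b : Set ℕ) = {n | 0 < n ∧ ¬Representable a b n} := by
  ext n
  simp only [gaps, coe_filter, mem_range, Set.mem_ofPred_eq]
  constructor
  · rintro ⟨-, hn⟩
    exact ⟨Nat.pos_of_ne_zero (by rintro rfl; exact hn ⟨0, 0, by simp⟩), hn⟩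
  · rintro ⟨-, hn⟩
    exact ⟨not_le.mp (mt (representable_of_mul_le hab) hn), hn⟩

lemma mem_image_box_iff (hab : a.Coprime b) (hb : 0 < b) {m : ℕ} :
    m ∈ (range b ×ˢ range a).image (fun p => a * p.1 + b * p.2) ↔
      Representable a b m ∧ (a * b ≤ m → ¬Representable a b (m - a * b)) := by
  simp only [mem_image, mem_product, mem_range, Prod.exists]
  constructor
  · rintro ⟨x, y, ⟨hx, hy⟩, rfl⟩
    refine ⟨⟨x, y, rfl⟩, fun hle hrep => ?_⟩
    obtain ⟨x', hx', y', h'⟩ := hrep.exists_fst_lt hb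
    have := (eq_and_eq_of_mul_add_mul_eq hab hx hx'
      (show a * x + b * y = a * x' + b * (y' + a) by rw [mul_add, mul_comm b a]; omega)).2
    omega
  · rintro ⟨hrep, hmin⟩
    obtain ⟨x, hx, y, rfl⟩ := hrep.exists_fst_lt hb
    refine ⟨x, y, ⟨hx, ?_⟩, rfl⟩
    by_contra! hy
    obtain ⟨k, rfl⟩ := Nat.exists_eq_add_of_le hy
    exact hmin (by nlinarith) ⟨x, k, by rw [mul_add, mul_comm b a]; omega⟩

lemma image_box_union_gaps (hab : a.Coprime b) (hb : 0 < b) :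
    (range b ×ˢ range a).image (fun p => a * p.1 + b * p.2) ∪ gaps a b =
      range (a * b) ∪ (gaps a b).map (addRightEmbedding (a * b)) := by
  ext m
  simp only [mem_union, mem_image_box_iff hab hb, mem_map, addRightEmbedding_apply, gaps,
    mem_filter, mem_range]
  rcases lt_or_ge m (a * b) with hm | hm
  · have : ¬a * b ≤ m := not_le.mpr hm
    simp only [hm, true_or, iff_true]
    tauto
  · simp only [representable_of_mul_le hab hm, not_lt.mpr hm, hm, true_and, false_and, or_false,
      false_or, forall_const]
    constructor
    · intro hgap
      have hlt : m - a * b < a * b := not_le.mp (mt (representable_of_mul_le hab) hgap)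
      exact ⟨m - a * b, ⟨hlt, hgap⟩, by omega⟩
    · rintro ⟨n, ⟨-, hgap⟩, rfl⟩
      simpa using hgap

lemma sum_box_add_sum_gaps {M : Type*} [AddCommMonoid M] (hab : a.Coprime b) (hb : 0 < b)
    (f : ℕ → M) :
    ∑ x ∈ range b, ∑ y ∈ range a, f (a * x + b * y) + ∑ n ∈ gaps a b, f n =
      ∑ n ∈ range (a * b), f n + ∑ n ∈ gaps a b, f (n + a * b) := by
  classical
  have hinj : Set.InjOn (fun p : ℕ × ℕ => a * p.1 + b * p.2) ↑(range b ×ˢ range a) := by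
    rintro ⟨x, y⟩ hxy ⟨x', y'⟩ hxy' h
    simp only [coe_product, coe_range, Set.mem_prod, Set.mem_Iio] at hxy hxy'
    exact Prod.ext_iff.mpr (eq_and_eq_of_mul_add_mul_eq hab hxy.1 hxy'.1 h)
  have hshift : ∑ n ∈ gaps a b, f (n + a * b) =
      ∑ n ∈ (gaps a b).map (addRightEmbedding (a * b)), f n :=
    (sum_map (gaps a b) (addRightEmbedding (a * b)) f).symm
  have hdisj₁ : Disjoint ((range b ×ˢ range a).image (fun p => a * p.1 + b * p.2)) (gaps a b) :=
    disjoint_left.mpr fun m hm hm' =>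
      (mem_filter.mp hm').2 ((mem_image_box_iff hab hb).mp hm).1
  have hdisj₂ : Disjoint (range (a * b)) ((gaps a b).map (addRightEmbedding (a * b))) := by
    refine disjoint_left.mpr fun m hm hm' => ?_
    obtain ⟨n, -, rfl⟩ := mem_map.mp hm'
    simp at hm
  rw [← sum_product' (f := fun x y => f (a * x + b * y)), ← sum_image hinj, hshift,
    ← sum_union hdisj₁, ← sum_union hdisj₂, image_box_union_gaps hab hb]

theorem sub_one_mul_mul_sum_gaps_X_pow {R : Type*} [CommRing R] (ha : 0 < a) (hb : 0 < b)
    (hab : a.Coprime b) :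
    (X - 1) * (X ^ a - 1) * (X ^ b - 1) * ∑ n ∈ gaps a b, (X ^ n : R[X]) =
      (X - 1) * (X ^ (a * b) - 1) - (X ^ a - 1) * (X ^ b - 1) := by
  set P := ∑ x ∈ range b, ((X : R[X]) ^ a) ^ x
  set Q := ∑ y ∈ range a, ((X : R[X]) ^ b) ^ y
  have hbox : P * Q + ∑ n ∈ gaps a b, X ^ n =
      ∑ n ∈ range (a * b), X ^ n + (∑ n ∈ gaps a b, X ^ n) * X ^ (a * b) := by
    rw [sum_mul_sum, sum_mul]
    simpa only [pow_add, pow_mul] using sum_box_add_sum_gaps hab hb (fun n => (X ^ n : R[X]))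
  have hP : P * (X ^ a - 1) = X ^ (a * b) - 1 := by rw [geom_sum_mul, ← pow_mul]
  have hQ : Q * (X ^ b - 1) = X ^ (a * b) - 1 := by rw [geom_sum_mul, ← pow_mul, mul_comm b]
  have hG : (∑ n ∈ range (a * b), (X : R[X]) ^ n) * (X - 1) = X ^ (a * b) - 1 :=
    geom_sum_mul _ _
  have hmonic : (X ^ (a * b) - 1 : R[X]).Monic := by
    simpa only [C_1] using monic_X_pow_sub_C (1 : R) (by positivity : a * b ≠ 0)
  refine hmonic.isRegular.left ?_
  linear_combination -(X - 1) * (X ^ a - 1) * (X ^ b - 1) * hbox + (X - 1) * Q * (X ^ b - 1) * hP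
    + (X - 1) * (X ^ (a * b) - 1) * hQ - (X ^ a - 1) * (X ^ b - 1) * hG

theorem sum_gaps_pow_mul_natCast {K : Type*} [Field K] (ha : 0 < a) (hb : 0 < b)
    (hab : a.Coprime b) {x : K} (hA : x ^ a ≠ 1) (hB : x ^ b ≠ 1) :
    ∑ n ∈ gaps a b, x ^ n * (n : K) =
      x / (x - 1) ^ 2 + (a : K) * b * x ^ (a * b) / ((x ^ a - 1) * (x ^ b - 1))
        - (x ^ (a * b) - 1) * ((a + b) * x ^ (a + b) - a * x ^ a - b * x ^ b)
          / ((x ^ a - 1) ^ 2 * (x ^ b - 1) ^ 2) := by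
  have hx : x - 1 ≠ 0 := sub_ne_zero.mpr (by rintro rfl; simp at hA)
  have hA' : x ^ a - 1 ≠ 0 := sub_ne_zero.mpr hA
  have hB' : x ^ b - 1 ≠ 0 := sub_ne_zero.mpr hB
  set D : K[X] := (X - 1) * (X ^ a - 1) * (X ^ b - 1)
  set R : K[X] := (X - 1) * (X ^ (a * b) - 1) - (X ^ a - 1) * (X ^ b - 1)
  have hD : D.eval x = (x - 1) * (x ^ a - 1) * (x ^ b - 1) := by simp [D]
  have hR : R.eval x = (x - 1) * (x ^ (a * b) - 1) - (x ^ a - 1) * (x ^ b - 1) := by simp [R]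
  have hD' : x * (derivative D).eval x = x * (x ^ a - 1) * (x ^ b - 1)
      + (x - 1) * (a * x ^ a) * (x ^ b - 1) + (x - 1) * (x ^ a - 1) * (b * x ^ b) := by
    simp only [D, derivative_mul, derivative_sub, derivative_X, derivative_one, eval_add,
      eval_mul, eval_sub, eval_one, eval_X, eval_pow, eval_zero]
    linear_combination (x - 1) * (x ^ b - 1) * mul_eval_derivative_X_pow a x
      + (x - 1) * (x ^ a - 1) * mul_eval_derivative_X_pow b x
  have hR' : x * (derivative R).eval x = x * (x ^ (a * b) - 1)
      + (x - 1) * ((a * b : ℕ) * x ^ (a * b)) - a * x ^ a * (x ^ b - 1) - (x ^ a - 1) * (b * x ^ b) := by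
    simp only [R, derivative_mul, derivative_sub, derivative_X, derivative_one, eval_add,
      eval_mul, eval_sub, eval_one, eval_X, eval_pow, eval_zero]
    linear_combination (x - 1) * mul_eval_derivative_X_pow (a * b) x
      - (x ^ b - 1) * mul_eval_derivative_X_pow a x - (x ^ a - 1) * mul_eval_derivative_X_pow b x
  have hDR : D * ∑ n ∈ gaps a b, X ^ n = R := sub_one_mul_mul_sum_gaps_X_pow ha hb hab
  have hDx : D.eval x ≠ 0 := by rw [hD]; exact mul_ne_zero (mul_ne_zero hx hA') hB'
  rw [← mul_eval_derivative_sum_X_pow, eval_derivative_eq_of_mul_eq hDR hDx,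
    show ∀ p q r s : K, x * ((p * q - r * s) / q ^ 2) = (x * p * q - x * r * s) / q ^ 2 from
      fun _ _ _ _ => by ring, hD', hR', hD, hR]
  push_cast
  field_simp
  ring

end Sylvester

theorem weighted_sylvester_sum_two_variables_general
    (a b : ℕ) (ha : 0 < a) (hb : 0 < b) (hgcd : Nat.gcd a b = 1)
    (lam : ℂ) (hlama : lam ^ a ≠ 1) (hlamb : lam ^ b ≠ 1) :
    ∑ᶠ n ∈ {n : ℕ | 0 < n ∧ ¬∃ x y : ℕ, n = a * x + b * y}, lam ^ n * (n : ℂ) =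
      lam / (lam - 1) ^ 2
        + (a : ℂ) * (b : ℂ) * lam ^ (a * b) / ((lam ^ a - 1) * (lam ^ b - 1))
        - (lam ^ (a * b) - 1) *
            (((a : ℂ) + (b : ℂ)) * lam ^ (a + b) - (a : ℂ) * lam ^ a - (b : ℂ) * lam ^ b) /
            ((lam ^ a - 1) ^ 2 * (lam ^ b - 1) ^ 2) := by
  have hgaps : {n : ℕ | 0 < n ∧ ¬∃ x y : ℕ, n = a * x + b * y} = Sylvester.gaps a b :=
    (Sylvester.coe_gaps hgcd).symm
  rw [hgaps, finsum_mem_coe_finset]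
  exact Sylvester.sum_gaps_pow_mul_natCast ha hb hgcd hlama hlamb

/-- weighted Sylvester sum in two variables, for `λ ≠ 0`, `λ^a ≠ 1`, `λ^b ≠ 1`. -/
theorem weighted_sylvester_sum_two_variables
    (a b : ℕ) (ha : 0 < a) (hb : 0 < b) (hgcd : Nat.gcd a b = 1)
    (lam : ℂ) (hlam0 : lam ≠ 0) (hlama : lam ^ a ≠ 1) (hlamb : lam ^ b ≠ 1) :
    ∑ᶠ n ∈ {n : ℕ | 0 < n ∧ ¬∃ x y : ℕ, n = a * x + b * y}, lam ^ n * (n : ℂ) =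
      lam / (lam - 1) ^ 2
        + (a : ℂ) * (b : ℂ) * lam ^ (a * b) / ((lam ^ a - 1) * (lam ^ b - 1))
        - (lam ^ (a * b) - 1) *
            (((a : ℂ) + (b : ℂ)) * lam ^ (a + b) - (a : ℂ) * lam ^ a - (b : ℂ) * lam ^ b) /
            ((lam ^ a - 1) ^ 2 * (lam ^ b - 1) ^ 2) :=
  weighted_sylvester_sum_two_variables_general a b ha hb hgcd lam hlama hlamb
end

section
/- Let a and b be positive integers with gcd(a,b) = 1, and let λ be a complex number with λ ≠ 0, λ ≠ 1 and λ^b = 1. Then ∑_{n ∈ NR(a,b)} λⁿ n = λ/(λ − 1)² + (a − 1)a b/(2(λ^a − 1)) − a² λ^a/(λ^a − 1)². -/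
/-!
Write every integer uniquely as `n = a x + b y` with `0 ≤ x < b`; then `n` is representable
exactly when `y ≥ 0`. So the non-representable numbers congruent to `a x` modulo `b` are
`a x % b + b k` for `k < a x / b`, and all of them carry the weight `λ ^ (a x) = (λ ^ a) ^ x`.
Summing these arithmetic progressions gives
`2 b ∑ λⁿ n = ∑_{x<b} (λ^a)^x ((a x)² - b a x) - ∑_{x<b} λ^r (r² - b r)` with `r = a x % b`.
Since `x ↦ a x % b` permutes `range b`, both sums are moment sums `∑_{x<b} ν^x x^j` over a
`b`-th root of unity `ν ≠ 1` (here `λ ^ a ≠ 1` because `gcd a b = 1`), which telescope.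
-/

open Finset

def nonrepresentable (a b : ℕ) : Set ℕ := {n : ℕ | 0 < n ∧ ¬∃ x y : ℕ, n = a * x + b * y}

section MomentSums

theorem sum_range_mul_pow_mul_sub_one {R : Type*} [CommRing R] (ν : R) (n : ℕ) :
    (∑ x ∈ range n, (x : R) * ν ^ x) * (ν - 1) = n * ν ^ n - ν * ∑ x ∈ range n, ν ^ x := by
  induction n with
  | zero => simp
  | succ n ih =>
    simp only [sum_range_succ, add_mul, ih]
    push_cast
    ring

theorem sum_range_sq_mul_pow_mul_sub_one {R : Type*} [CommRing R] (ν : R) (n : ℕ) :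
    (∑ x ∈ range n, (x : R) ^ 2 * ν ^ x) * (ν - 1) =
      n ^ 2 * ν ^ n - 2 * ν * ∑ x ∈ range n, (x : R) * ν ^ x - ν * ∑ x ∈ range n, ν ^ x := by
  induction n with
  | zero => simp
  | succ n ih =>
    simp only [sum_range_succ, add_mul, ih]
    push_cast
    ring

theorem two_mul_mul_sum_range_add_mul {R : Type*} [CommRing R] (r d : R) (m : ℕ) :
    2 * d * ∑ k ∈ range m, (r + d * k) = (r + d * m) ^ 2 - r ^ 2 - d * (d * m) := by
  induction m with
  | zero => simp
  | succ m ih =>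
    rw [sum_range_succ, mul_add, ih]
    push_cast
    ring

variable {K : Type*} [Field K] {ν : K} {n : ℕ} (hν : ν ≠ 1) (hνn : ν ^ n = 1)
include hν hνn

theorem geom_sum_eq_zero_of_pow_eq_one : ∑ x ∈ range n, ν ^ x = 0 := by
  rw [geom_sum_eq hν, hνn, sub_self, zero_div]

theorem sum_range_mul_pow_of_pow_eq_one : ∑ x ∈ range n, (x : K) * ν ^ x = n / (ν - 1) := by
  rw [eq_div_iff (sub_ne_zero.2 hν), sum_range_mul_pow_mul_sub_one,
    geom_sum_eq_zero_of_pow_eq_one hν hνn, hνn]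
  ring

theorem sum_range_sq_mul_pow_of_pow_eq_one :
    ∑ x ∈ range n, (x : K) ^ 2 * ν ^ x = n ^ 2 / (ν - 1) - 2 * ν * n / (ν - 1) ^ 2 := by
  have h := sum_range_sq_mul_pow_mul_sub_one ν n
  rw [geom_sum_eq_zero_of_pow_eq_one hν hνn, sum_range_mul_pow_of_pow_eq_one hν hνn, hνn] at h
  have := sub_ne_zero.2 hν
  field_simp at h ⊢
  linear_combination h

theorem sum_range_pow_mul_sq_sub_mul_of_pow_eq_one (c : K) :
    ∑ x ∈ range n, ν ^ x * ((c * x) ^ 2 - n * (c * x)) =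
      c * (c - 1) * n ^ 2 / (ν - 1) - 2 * c ^ 2 * ν * n / (ν - 1) ^ 2 := by
  have hsplit : ∑ x ∈ range n, ν ^ x * ((c * x) ^ 2 - n * (c * x)) =
      c ^ 2 * ∑ x ∈ range n, (x : K) ^ 2 * ν ^ x - c * n * ∑ x ∈ range n, (x : K) * ν ^ x := by
    simp only [mul_sum, ← sum_sub_distrib]
    exact sum_congr rfl fun x _ ↦ by ring
  rw [hsplit, sum_range_sq_mul_pow_of_pow_eq_one hν hνn, sum_range_mul_pow_of_pow_eq_one hν hνn]
  ring

end MomentSums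

section Sylvester

variable {a b : ℕ}

theorem eq_mod_of_mul_modEq_mul (hab : a.Coprime b) {x x' : ℕ} (hx : x < b)
    (h : a * x ≡ a * x' [MOD b]) : x = x' % b := by
  have := Nat.ModEq.cancel_left_of_coprime (Nat.coprime_comm.1 hab) h
  rwa [Nat.ModEq, Nat.mod_eq_of_lt hx] at this

theorem sum_range_mul_mod {M : Type*} [AddCommMonoid M] (hab : a.Coprime b) (G : ℕ → M) :
    ∑ x ∈ range b, G (a * x % b) = ∑ x ∈ range b, G x := by
  have hmaps : Set.MapsTo (fun x ↦ a * x % b) (range b : Set ℕ) (range b : Set ℕ) :=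
    fun x hx ↦ mem_range.2 (Nat.mod_lt _ (pos_of_gt (mem_range.1 hx)))
  have hinj : Set.InjOn (fun x ↦ a * x % b) (range b : Set ℕ) := fun x hx x' hx' h ↦ by
    rw [eq_mod_of_mul_modEq_mul hab (mem_range.1 hx) h, Nat.mod_eq_of_lt (mem_range.1 hx')]
  exact sum_nbij _ hmaps hinj (surjOn_of_injOn_of_card_le _ hmaps hinj le_rfl) fun _ _ ↦ rfl

theorem exists_eq_mul_add_mul_iff (hab : a.Coprime b) {n x : ℕ} (hx : x < b)
    (hxn : a * x ≡ n [MOD b]) : (∃ x' y', n = a * x' + b * y') ↔ a * x ≤ n := by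
  constructor
  · rintro ⟨x', y', rfl⟩
    have hxx' : x = x' % b :=
      eq_mod_of_mul_modEq_mul hab hx (hxn.trans (by simp [Nat.ModEq]))
    calc a * x ≤ a * x' := Nat.mul_le_mul_left a (hxx' ▸ Nat.mod_le x' b)
      _ ≤ a * x' + b * y' := Nat.le_add_right ..
  · intro h
    obtain ⟨y, hy⟩ := (Nat.modEq_iff_dvd' h).1 hxn
    exact ⟨x, y, by omega⟩

theorem mem_nonrepresentable_iff (hab : a.Coprime b) {n : ℕ} :
    n ∈ nonrepresentable a b ↔ ∃ x < b, ∃ k < a * x / b, a * x % b + b * k = n := by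
  constructor
  · rintro ⟨-, hrep⟩
    have hb : b ≠ 0 := by
      rintro rfl
      exact hrep ⟨n, 0, by simp [(Nat.coprime_zero_right a).1 hab]⟩
    obtain ⟨x, hx, hxn⟩ := Nat.exists_mul_mod_eq_of_coprime n hab hb
    have hlt : n < a * x := not_le.1 ((exists_eq_mul_add_mul_iff hab hx hxn).not.1 hrep)
    refine ⟨x, hx, n / b, Nat.lt_of_mul_lt_mul_left (a := b) ?_, by rw [hxn, Nat.mod_add_div]⟩
    have := Nat.mod_add_div n b
    have := Nat.mod_add_div (a * x) b
    omega
  · rintro ⟨x, hx, k, hk, rfl⟩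
    have hxn : a * x ≡ a * x % b + b * k [MOD b] := by simp [Nat.ModEq]
    have hlt : a * x % b + b * k < a * x := by
      have := Nat.mod_add_div (a * x) b
      have := Nat.mul_lt_mul_of_pos_left hk (pos_of_gt hx)
      omega
    have hrep := (exists_eq_mul_add_mul_iff hab hx hxn).not.2 (not_le.2 hlt)
    exact ⟨Nat.pos_of_ne_zero fun h0 ↦ hrep ⟨0, 0, by simp [h0]⟩, hrep⟩

theorem finsum_mem_nonrepresentable {M : Type*} [AddCommMonoid M] (hab : a.Coprime b)
    (f : ℕ → M) :
    ∑ᶠ n ∈ nonrepresentable a b, f n =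
      ∑ x ∈ range b, ∑ k ∈ range (a * x / b), f (a * x % b + b * k) := by
  set g : (_ : ℕ) × ℕ → ℕ := fun p ↦ a * p.1 % b + b * p.2
  have hset : nonrepresentable a b = g '' ((range b).sigma fun x ↦ range (a * x / b)) := by
    ext n
    simp [g, mem_nonrepresentable_iff hab, and_assoc]
  have hinj : Set.InjOn g ((range b).sigma fun x ↦ range (a * x / b)) := by
    rintro ⟨x, k⟩ hxk ⟨x', k'⟩ hxk' h
    simp only [coe_sigma, Set.mem_sigma_iff, coe_range, Set.mem_Iio] at hxk hxk'
    have hr : a * x % b = a * x' % b := by simpa [g] using congrArg (· % b) h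
    have hxx' : x = x' := by
      rw [eq_mod_of_mul_modEq_mul hab hxk.1 hr, Nat.mod_eq_of_lt hxk'.1]
    subst hxx'
    have hkk' : k = k' := Nat.eq_of_mul_eq_mul_left (pos_of_gt hxk.1) (by simpa [g] using h)
    rw [hkk']
  rw [hset, finsum_mem_image hinj, finsum_mem_coe_finset, sum_sigma]

end Sylvester

theorem two_mul_sum_range_pow_add_mul {R : Type*} [CommRing R] {lam : R} {b : ℕ}
    (hlamb : lam ^ b = 1) (r m : ℕ) :
    2 * b * ∑ k ∈ range m, lam ^ (r + b * k) * ((r + b * k : ℕ) : R) =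
      lam ^ (r + b * m) * (((r + b * m : ℕ) : R) ^ 2 - b * (r + b * m : ℕ)) -
        lam ^ r * ((r : R) ^ 2 - b * r) := by
  have hpow : ∀ k, lam ^ (r + b * k) = lam ^ r := fun k ↦ by
    rw [pow_add, pow_mul, hlamb, one_pow, mul_one]
  simp only [hpow, ← mul_sum, Nat.cast_add, Nat.cast_mul]
  linear_combination lam ^ r * two_mul_mul_sum_range_add_mul (r : R) b m

theorem weighted_sylvester_sum_two_variables_root_of_unity_general
    (a b : ℕ) (hb : 0 < b) (hgcd : Nat.gcd a b = 1)
    (lam : ℂ) (hlam1 : lam ≠ 1) (hlamb : lam ^ b = 1) :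
    ∑ᶠ n ∈ {n : ℕ | 0 < n ∧ ¬∃ x y : ℕ, n = a * x + b * y}, lam ^ n * (n : ℂ) =
      lam / (lam - 1) ^ 2
        + ((a : ℂ) - 1) * (a : ℂ) * (b : ℂ) / (2 * (lam ^ a - 1))
        - (a : ℂ) ^ 2 * lam ^ a / (lam ^ a - 1) ^ 2 := by
  change ∑ᶠ n ∈ nonrepresentable a b, _ = _
  have hμ1 : lam ^ a ≠ 1 := fun h ↦ hlam1 (by simpa [hgcd] using pow_gcd_eq_one.2 ⟨h, hlamb⟩)
  have hμb : (lam ^ a) ^ b = 1 := by rw [← pow_mul, mul_comm, pow_mul, hlamb, one_pow]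
  have key : 2 * b * ∑ᶠ n ∈ nonrepresentable a b, lam ^ n * (n : ℂ) =
      ∑ x ∈ range b, (lam ^ a) ^ x * ((a * x) ^ 2 - b * (a * x)) -
        ∑ x ∈ range b, lam ^ x * ((1 * x) ^ 2 - b * (1 * x)) := by
    rw [finsum_mem_nonrepresentable hgcd, mul_sum]
    simp only [two_mul_sum_range_pow_add_mul hlamb, Nat.mod_add_div, sum_sub_distrib]
    rw [sum_range_mul_mod hgcd (fun r ↦ lam ^ r * ((r : ℂ) ^ 2 - b * r))]
    simp [pow_mul]
  rw [sum_range_pow_mul_sq_sub_mul_of_pow_eq_one hμ1 hμb,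
    sum_range_pow_mul_sq_sub_mul_of_pow_eq_one hlam1 hlamb] at key
  have hμ1' := sub_ne_zero.2 hμ1
  have hlam1' := sub_ne_zero.2 hlam1
  have hb' : (b : ℂ) ≠ 0 := Nat.cast_ne_zero.2 hb.ne'
  field_simp at key ⊢
  linear_combination key

/-- weighted Sylvester sum in two variables, for `λ ≠ 0`, `λ ≠ 1`, `λ^b = 1`. -/
theorem weighted_sylvester_sum_two_variables_root_of_unity
    (a b : ℕ) (ha : 0 < a) (hb : 0 < b) (hgcd : Nat.gcd a b = 1)
    (lam : ℂ) (hlam0 : lam ≠ 0) (hlam1 : lam ≠ 1) (hlamb : lam ^ b = 1) :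
    ∑ᶠ n ∈ {n : ℕ | 0 < n ∧ ¬∃ x y : ℕ, n = a * x + b * y}, lam ^ n * (n : ℂ) =
      lam / (lam - 1) ^ 2
        + ((a : ℂ) - 1) * (a : ℂ) * (b : ℂ) / (2 * (lam ^ a - 1))
        - (a : ℂ) ^ 2 * lam ^ a / (lam ^ a - 1) ^ 2 :=
  weighted_sylvester_sum_two_variables_root_of_unity_general a b hb hgcd lam hlam1 hlamb
end

section
/- Let a₁, a₂, …, a_k be positive integers with gcd(a₁,…,a_k) = 1. Then the Sylvester number (the cardinality of NR) satisfies n(a₁,…,a_k) = (1/a₁) ∑_{i=1}^{a₁−1} m_i − (a₁ − 1)/2. -/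
/-!
Let `A = a₁` and let `S` be the set of representable integers; `S` contains `0` and is closed under
adding `A`. Hence `S` meets the residue class of `i ≠ 0` modulo `A` exactly in `m_i, m_i + A, …`,
and the gaps in that class are `i, i + A, …, m_i - A`: there are `m_i / A = (m_i - i) / A` of them,
while the class of `0` has no gaps. Summing over `i` and using `∑_{i<A} i = A (A - 1) / 2` gives
the formula.
-/

open Finset

namespace Sylvester

lemma add_mul_mem_of_add_mem {S : Set ℕ} {A : ℕ} (hS : ∀ n ∈ S, n + A ∈ S) {n : ℕ} (hn : n ∈ S)
    (c : ℕ) : n + A * c ∈ S := by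
  induction c with
  | zero => simpa using hn
  | succ c ih => simpa [mul_add, ← add_assoc] using hS _ ih

lemma mem_image_add_mul_iff {A i M n : ℕ} (hi : i < A) (hM : M % A = i) :
    n ∈ (range (M / A)).image (i + A * ·) ↔ n % A = i ∧ n < M := by
  have hA : 0 < A := by omega
  have hM' := Nat.div_add_mod M A
  rw [hM] at hM'
  simp only [mem_image, mem_range]
  constructor
  · rintro ⟨t, ht, rfl⟩
    have := Nat.mul_lt_mul_of_pos_left ht hA
    exact ⟨by simp [Nat.add_mul_mod_self_left, Nat.mod_eq_of_lt hi], by omega⟩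
  · rintro ⟨hn, hlt⟩
    have hn' := Nat.div_add_mod n A
    rw [hn] at hn'
    exact ⟨n / A, Nat.lt_of_mul_lt_mul_left (a := A) (by omega), by omega⟩

section Gaps

variable {S : Set ℕ} {A : ℕ} {m : ℕ → ℕ}

lemma notMem_iff_mod_ne_zero_and_lt (hA : 0 < A) (h0 : 0 ∈ S) (hS : ∀ n ∈ S, n + A ∈ S)
    (hm : ∀ i ∈ Ico 1 A, IsLeast {n ∈ S | n % A = i} (m i)) {n : ℕ} :
    n ∉ S ↔ n % A ≠ 0 ∧ n < m (n % A) := by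
  have hlt : n % A < A := Nat.mod_lt n hA
  constructor
  · intro hn
    have hr : n % A ≠ 0 := fun hr => hn <| by
      simpa [Nat.mul_div_cancel' (Nat.dvd_of_mod_eq_zero hr)] using
        add_mul_mem_of_add_mem hS h0 (n / A)
    refine ⟨hr, not_le.mp fun hge => hn ?_⟩
    obtain ⟨⟨hmS, hmmod⟩, -⟩ := hm _ (mem_Ico.mpr ⟨by omega, hlt⟩)
    obtain ⟨c, hc⟩ := (Nat.modEq_iff_dvd' hge).mp hmmod
    simpa [show m (n % A) + A * c = n by omega] using add_mul_mem_of_add_mem hS hmS c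
  · rintro ⟨hr, hlt'⟩ hn
    exact (hm _ (mem_Ico.mpr ⟨by omega, hlt⟩)).2 ⟨hn, rfl⟩ |>.not_gt hlt'

lemma setOf_notMem_eq_biUnion (hA : 0 < A) (h0 : 0 ∈ S) (hS : ∀ n ∈ S, n + A ∈ S)
    (hm : ∀ i ∈ Ico 1 A, IsLeast {n ∈ S | n % A = i} (m i)) :
    {n | 0 < n ∧ n ∉ S} = ↑((Ico 1 A).biUnion fun i => (range (m i / A)).image (i + A * ·)) := by
  ext n
  simp only [Set.mem_ofPred_eq, coe_biUnion, coe_Ico, Set.mem_iUnion, Set.mem_Ico, mem_coe,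
    exists_prop]
  rw [notMem_iff_mod_ne_zero_and_lt hA h0 hS hm]
  constructor
  · rintro ⟨-, hr, hlt⟩
    have hi : n % A ∈ Ico 1 A := mem_Ico.mpr ⟨by omega, Nat.mod_lt n hA⟩
    exact ⟨n % A, mem_Ico.mp hi,
      (mem_image_add_mul_iff (Nat.mod_lt n hA) (hm _ hi).1.2).2 ⟨rfl, hlt⟩⟩
  · rintro ⟨i, ⟨hi1, hiA⟩, hn⟩
    obtain ⟨rfl, hlt⟩ := (mem_image_add_mul_iff hiA (hm i (mem_Ico.mpr ⟨hi1, hiA⟩)).1.2).1 hn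
    exact ⟨Nat.pos_of_ne_zero fun h => by simp [h] at hi1, by omega, hlt⟩

lemma card_biUnion_image_add_mul (hA : 0 < A) (hm : ∀ i ∈ Ico 1 A, m i % A = i) :
    #((Ico 1 A).biUnion fun i => (range (m i / A)).image (i + A * ·)) =
      ∑ i ∈ Ico 1 A, m i / A := by
  rw [card_biUnion]
  · refine sum_congr rfl fun i _ => ?_
    rw [card_image_of_injective _ fun s t h => Nat.eq_of_mul_eq_mul_left hA (by simpa using h),
      card_range]
  · intro i hi j hj hij
    refine disjoint_left.mpr fun n hni hnj => hij ?_
    have hi' := mem_Ico.mp hi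
    have hj' := mem_Ico.mp hj
    rw [← ((mem_image_add_mul_iff hi'.2 (hm i hi)).1 hni).1,
      ((mem_image_add_mul_iff hj'.2 (hm j hj)).1 hnj).1]

theorem ncard_gaps_eq_sum_div (hA : 0 < A) (h0 : 0 ∈ S) (hS : ∀ n ∈ S, n + A ∈ S)
    (hm : ∀ i ∈ Ico 1 A, IsLeast {n ∈ S | n % A = i} (m i)) :
    {n | 0 < n ∧ n ∉ S}.ncard = ∑ i ∈ Ico 1 A, m i / A := by
  rw [setOf_notMem_eq_biUnion hA h0 hS hm, Set.ncard_coe_finset,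
    card_biUnion_image_add_mul hA fun i hi => (hm i hi).1.2]

end Gaps

lemma sum_Ico_one_id_mul_two (A : ℕ) : (∑ i ∈ Ico 1 A, i) * 2 = A * (A - 1) := by
  rcases A.eq_zero_or_pos with rfl | hA
  · simp
  · rw [← sum_range_id_mul_two, range_eq_Ico, sum_eq_sum_Ico_succ_bot hA, zero_add]

lemma sum_div_eq_of_mod_eq {A : ℕ} (hA : 0 < A) {m : ℕ → ℕ} (hm : ∀ i ∈ Ico 1 A, m i % A = i) :
    ((∑ i ∈ Ico 1 A, m i / A : ℕ) : ℚ) =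
      1 / (A : ℚ) * ∑ i ∈ Ico 1 A, (m i : ℚ) - ((A : ℚ) - 1) / 2 := by
  have hsum : ∑ i ∈ Ico 1 A, m i = A * ∑ i ∈ Ico 1 A, m i / A + ∑ i ∈ Ico 1 A, i := by
    rw [mul_sum, ← sum_add_distrib]
    refine sum_congr rfl fun i hi => ?_
    have h := Nat.div_add_mod (m i) A
    rw [hm i hi] at h
    exact h.symm
  have hgauss : (∑ i ∈ Ico 1 A, (i : ℚ)) * 2 = A * (A - 1) := by
    have h := congrArg (Nat.cast (R := ℚ)) (sum_Ico_one_id_mul_two A)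
    push_cast [Nat.cast_sub hA] at h
    exact h
  have hA' : (A : ℚ) ≠ 0 := by exact_mod_cast hA.ne'
  rw [← Nat.cast_sum, hsum]
  push_cast
  field_simp
  linarith

end Sylvester

theorem sylvester_number_eq_general
    (k : ℕ) (hk : 0 < k) (a : Fin k → ℕ) (ha : ∀ i, 0 < a i)
    (m : ℕ → ℕ)
    (hm : ∀ i, 1 ≤ i → i < a ⟨0, hk⟩ →
      0 < m i ∧ (∃ x : Fin k → ℕ, m i = ∑ j, x j * a j) ∧ m i % a ⟨0, hk⟩ = i ∧
        ∀ n : ℕ, 0 < n → (∃ x : Fin k → ℕ, n = ∑ j, x j * a j) → n % a ⟨0, hk⟩ = i →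
          m i ≤ n) :
    (({n : ℕ | 0 < n ∧ ¬∃ x : Fin k → ℕ, n = ∑ j, x j * a j}).ncard : ℚ) =
      (1 / (a ⟨0, hk⟩ : ℚ)) * ∑ i ∈ Finset.Ico 1 (a ⟨0, hk⟩), (m i : ℚ)
        - ((a ⟨0, hk⟩ : ℚ) - 1) / 2 := by
  set A := a ⟨0, hk⟩
  set S : Set ℕ := {n | ∃ x : Fin k → ℕ, n = ∑ j, x j * a j}
  have h0 : 0 ∈ S := ⟨0, by simp⟩
  have hS : ∀ n ∈ S, n + A ∈ S := by
    rintro n ⟨x, rfl⟩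
    exact ⟨x + Pi.single ⟨0, hk⟩ 1, by simp [add_mul, sum_add_distrib, Pi.single_apply, A]⟩
  have hleast : ∀ i ∈ Ico 1 A, IsLeast {n ∈ S | n % A = i} (m i) := by
    intro i hi
    obtain ⟨hi1, hiA⟩ := mem_Ico.mp hi
    obtain ⟨-, hmS, hmmod, hmin⟩ := hm i hi1 hiA
    refine ⟨⟨hmS, hmmod⟩, fun n ⟨hn, hnmod⟩ => hmin n (Nat.pos_of_ne_zero ?_) hn hnmod⟩
    rintro rfl
    rw [Nat.zero_mod] at hnmod
    omega
  have hgaps : {n | 0 < n ∧ ¬∃ x : Fin k → ℕ, n = ∑ j, x j * a j}.ncard =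
      ∑ i ∈ Ico 1 A, m i / A :=
    Sylvester.ncard_gaps_eq_sum_div (ha _) h0 hS hleast
  rw [hgaps, Sylvester.sum_div_eq_of_mod_eq (ha _) fun i hi => (hleast i hi).1.2]

/-- the Sylvester number (cardinality of the set of nonrepresentable
positive integers) equals `(1/a₁) ∑_{i=1}^{a₁-1} m_i - (a₁-1)/2`. -/
theorem sylvester_number_eq
    (k : ℕ) (hk : 0 < k) (a : Fin k → ℕ) (ha : ∀ i, 0 < a i)
    (hgcd : Finset.univ.gcd a = 1)
    (m : ℕ → ℕ)
    (hm : ∀ i, 1 ≤ i → i < a ⟨0, hk⟩ →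
      0 < m i ∧ (∃ x : Fin k → ℕ, m i = ∑ j, x j * a j) ∧ m i % a ⟨0, hk⟩ = i ∧
        ∀ n : ℕ, 0 < n → (∃ x : Fin k → ℕ, n = ∑ j, x j * a j) → n % a ⟨0, hk⟩ = i →
          m i ≤ n) :
    (({n : ℕ | 0 < n ∧ ¬∃ x : Fin k → ℕ, n = ∑ j, x j * a j}).ncard : ℚ) =
      (1 / (a ⟨0, hk⟩ : ℚ)) * ∑ i ∈ Finset.Ico 1 (a ⟨0, hk⟩), (m i : ℚ)
        - ((a ⟨0, hk⟩ : ℚ) - 1) / 2 :=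
  sylvester_number_eq_general k hk a ha m hm
end

section
/- Let a, b, c be positive integers with gcd(a,b,c) = 1, a ≥ 2, and a | lcm(b,c), and set l₁ = lcm(a,b), l₂ = lcm(a,c). Then the Frobenius number satisfies g(a,b,c) = l₁ + l₂ − (a + b + c). -/
/-- for `gcd(a,b,c) = 1` with `a ∣ lcm(b,c)`, the Frobenius number is
`lcm(a,b) + lcm(a,c) - (a + b + c)`. -/
theorem frobenius_number_three_variables
    (a b c : ℕ) (ha : 0 < a) (hb : 0 < b) (hc : 0 < c) (ha2 : 2 ≤ a)
    (hgcd : Nat.gcd a (Nat.gcd b c) = 1) (hdvd : a ∣ Nat.lcm b c)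
    (g : ℕ)
    (hg : IsGreatest {n : ℕ | 0 < n ∧ ¬∃ x y z : ℕ, n = a * x + b * y + c * z} g) :
    (g : ℤ) = (Nat.lcm a b : ℤ) + (Nat.lcm a c : ℤ) - ((a : ℤ) + b + c) := by
  set d1 := Nat.gcd a b with hd1
  set d2 := Nat.gcd a c with hd2
  have hd1pos : 0 < d1 := Nat.gcd_pos_of_pos_left _ ha
  have hd2pos : 0 < d2 := Nat.gcd_pos_of_pos_left _ ha
  have hd1a : d1 ∣ a := Nat.gcd_dvd_left a b
  have hd1b : d1 ∣ b := Nat.gcd_dvd_right a b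
  have hd2a : d2 ∣ a := Nat.gcd_dvd_left a c
  have hd2c : d2 ∣ c := Nat.gcd_dvd_right a c
  have h12 : Nat.Coprime d1 d2 := by
    have hA : Nat.gcd d1 d2 ∣ a := (Nat.gcd_dvd_left d1 d2).trans hd1a
    have hB : Nat.gcd d1 d2 ∣ b := (Nat.gcd_dvd_left d1 d2).trans hd1b
    have hC : Nat.gcd d1 d2 ∣ c := (Nat.gcd_dvd_right d1 d2).trans hd2c
    have : Nat.gcd d1 d2 ∣ 1 := hgcd ▸ Nat.dvd_gcd hA (Nat.dvd_gcd hB hC)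
    exact Nat.dvd_one.mp this
  -- a = d1 * d2
  have habc : a ∣ b * c := hdvd.trans (Nat.lcm_dvd (dvd_mul_right b c) (dvd_mul_left c b))
  have hqc : a / d1 ∣ c := by
    have hcop : Nat.Coprime (a / d1) (b / d1) := Nat.coprime_div_gcd_div_gcd hd1pos
    have h1 : (a / d1) * d1 ∣ ((b / d1) * c) * d1 := by
      rw [Nat.div_mul_cancel hd1a]
      have : (b / d1) * c * d1 = b * c := by
        rw [mul_right_comm, Nat.div_mul_cancel hd1b]
      rw [this]; exact habc
    have h2 : a / d1 ∣ (b / d1) * c := (Nat.mul_dvd_mul_iff_right hd1pos).mp h1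
    exact hcop.dvd_of_dvd_mul_left h2
  have haeq : a = d1 * d2 := by
    apply Nat.dvd_antisymm
    · have hq2 : a / d1 ∣ d2 := Nat.dvd_gcd (Nat.div_dvd_of_dvd hd1a) hqc
      calc a = d1 * (a / d1) := (Nat.mul_div_cancel' hd1a).symm
        _ ∣ d1 * d2 := mul_dvd_mul_left d1 hq2
    · exact h12.mul_dvd_of_dvd_of_dvd hd1a hd2a
  -- coprimalities
  have hcop1c : Nat.Coprime d1 c := by
    have h1 : Nat.gcd d1 c ∣ d2 := Nat.dvd_gcd ((Nat.gcd_dvd_left d1 c).trans hd1a) (Nat.gcd_dvd_right d1 c)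
    have h2 : Nat.gcd d1 c ∣ Nat.gcd d1 d2 := Nat.dvd_gcd (Nat.gcd_dvd_left d1 c) h1
    exact Nat.dvd_one.mp (h12 ▸ h2)
  have hcop2b : Nat.Coprime d2 b := by
    have h1 : Nat.gcd d2 b ∣ d1 := Nat.dvd_gcd ((Nat.gcd_dvd_left d2 b).trans hd2a) (Nat.gcd_dvd_right d2 b)
    have h2 : Nat.gcd d2 b ∣ Nat.gcd d1 d2 := Nat.dvd_gcd h1 (Nat.gcd_dvd_left d2 b)
    exact Nat.dvd_one.mp (h12 ▸ h2)
  -- lcm values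
  have hlab : Nat.lcm a b = d2 * b := by
    apply Nat.eq_of_mul_eq_mul_left hd1pos
    have := Nat.gcd_mul_lcm a b
    rw [← hd1] at this
    rw [this, haeq]; ring
  have hlac : Nat.lcm a c = d1 * c := by
    apply Nat.eq_of_mul_eq_mul_left hd2pos
    have := Nat.gcd_mul_lcm a c
    rw [← hd2] at this
    rw [Nat.mul_left_comm, this, haeq]; ring
  set L : ℤ := (d2 : ℤ) * b + (d1 : ℤ) * c - a - b - c with hL
  haveI : NeZero d1 := ⟨hd1pos.ne'⟩
  haveI : NeZero d2 := ⟨hd2pos.ne'⟩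
  have hd1aZ : (d1 : ℤ) ∣ (a : ℤ) := Int.natCast_dvd_natCast.mpr hd1a
  have hd1bZ : (d1 : ℤ) ∣ (b : ℤ) := Int.natCast_dvd_natCast.mpr hd1b
  have hd2aZ : (d2 : ℤ) ∣ (a : ℤ) := Int.natCast_dvd_natCast.mpr hd2a
  have hd2cZ : (d2 : ℤ) ∣ (c : ℤ) := Int.natCast_dvd_natCast.mpr hd2c
  -- Lemma A : every n with (n:ℤ) > L is representable
  have reprA : ∀ n : ℕ, L < (n : ℤ) → ∃ x y z : ℕ, n = a * x + b * y + c * z := by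
    intro n hn
    have hcu : IsUnit ((c : ZMod d1)) := by
      rw [ZMod.isUnit_iff_coprime]
      exact hcop1c.symm
    have hbu : IsUnit ((b : ZMod d2)) := by
      rw [ZMod.isUnit_iff_coprime]
      exact hcop2b.symm
    set z := ((n : ZMod d1) * (c : ZMod d1)⁻¹).val with hzdef
    set y := ((n : ZMod d2) * (b : ZMod d2)⁻¹).val with hydef
    have hzlt : z < d1 := ZMod.val_lt _
    have hylt : y < d2 := ZMod.val_lt _
    have hzc : (d1 : ℤ) ∣ (n : ℤ) - c * z := by
      have h0 : ((((n : ℤ) - c * z) : ℤ) : ZMod d1) = 0 := by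
        push_cast
        rw [hzdef, ZMod.natCast_val, ZMod.cast_id]
        have := ZMod.mul_inv_of_unit _ hcu
        calc (n : ZMod d1) - c * ((n : ZMod d1) * (c : ZMod d1)⁻¹)
            = (n : ZMod d1) - (n : ZMod d1) * ((c : ZMod d1) * (c : ZMod d1)⁻¹) := by ring
          _ = 0 := by simp [this]
      exact (ZMod.intCast_zmod_eq_zero_iff_dvd _ _).mp h0
    have hyb : (d2 : ℤ) ∣ (n : ℤ) - b * y := by
      have h0 : ((((n : ℤ) - b * y) : ℤ) : ZMod d2) = 0 := by
        push_cast
        rw [hydef, ZMod.natCast_val, ZMod.cast_id]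
        have := ZMod.mul_inv_of_unit _ hbu
        calc (n : ZMod d2) - b * ((n : ZMod d2) * (b : ZMod d2)⁻¹)
            = (n : ZMod d2) - (n : ZMod d2) * ((b : ZMod d2) * (b : ZMod d2)⁻¹) := by ring
          _ = 0 := by simp [this]
      exact (ZMod.intCast_zmod_eq_zero_iff_dvd _ _).mp h0
    set m : ℤ := (n : ℤ) - b * y - c * z with hm
    have hd1m : (d1 : ℤ) ∣ m := by
      have : m = ((n : ℤ) - c * z) - b * y := by ring
      rw [this]
      exact dvd_sub hzc (Dvd.dvd.mul_right hd1bZ _)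
    have hd2m : (d2 : ℤ) ∣ m := by
      have : m = ((n : ℤ) - b * y) - c * z := by rw [hm]
      rw [this]
      exact dvd_sub hyb (Dvd.dvd.mul_right hd2cZ _)
    have ham : (a : ℤ) ∣ m := by
      have hco : IsCoprime (d1 : ℤ) (d2 : ℤ) := Nat.isCoprime_iff_coprime.mpr h12
      have : ((d1 : ℤ) * d2) ∣ m := hco.mul_dvd hd1m hd2m
      rw [haeq]; push_cast; exact this
    obtain ⟨x, hx⟩ := ham
    have hy' : (y : ℤ) ≤ (d2 : ℤ) - 1 := by
      have : (y : ℤ) < (d2 : ℤ) := by exact_mod_cast hylt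
      linarith
    have hz' : (z : ℤ) ≤ (d1 : ℤ) - 1 := by
      have : (z : ℤ) < (d1 : ℤ) := by exact_mod_cast hzlt
      linarith
    have hby : (b : ℤ) * y ≤ (b : ℤ) * ((d2 : ℤ) - 1) :=
      mul_le_mul_of_nonneg_left hy' (by positivity)
    have hcz : (c : ℤ) * z ≤ (c : ℤ) * ((d1 : ℤ) - 1) :=
      mul_le_mul_of_nonneg_left hz' (by positivity)
    have hmgt : -(a : ℤ) < m := by
      have : L - (b : ℤ) * ((d2 : ℤ) - 1) - (c : ℤ) * ((d1 : ℤ) - 1) = -(a : ℤ) := by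
        rw [hL]; ring
      rw [hm]; linarith
    have hx0 : 0 ≤ x := by
      by_contra hneg
      push_neg at hneg
      have hx1 : x ≤ -1 := by linarith
      have haZ : (0 : ℤ) < a := by exact_mod_cast ha
      nlinarith
    refine ⟨x.toNat, y, z, ?_⟩
    have hfin : (n : ℤ) = a * x + b * y + c * z := by rw [← hx, hm]; ring
    rw [← Int.toNat_of_nonneg hx0] at hfin
    exact_mod_cast hfin
  -- Lemma B : if (n:ℤ) = L then n is not representable
  have reprB : ∀ n : ℕ, (n : ℤ) = L → ¬∃ x y z : ℕ, n = a * x + b * y + c * z := by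
    rintro n hnL ⟨x, y, z, hrep⟩
    have hrepZ : (n : ℤ) = a * x + b * y + c * z := by exact_mod_cast hrep
    -- mod d1
    have hz1 : (d1 : ℤ) ∣ (c : ℤ) * (z + 1) := by
      have h1 : (d1 : ℤ) ∣ (n : ℤ) - c * z := by
        have : (n : ℤ) - c * z = a * x + b * y := by linarith
        rw [this]
        exact dvd_add (hd1aZ.mul_right _) (hd1bZ.mul_right _)
      have h2 : (d1 : ℤ) ∣ (n : ℤ) + c := by
        have : (n : ℤ) + c = d2 * b + d1 * c - a - b := by rw [hnL, hL]; ring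
        rw [this]
        exact dvd_sub (dvd_sub (dvd_add (hd1bZ.mul_left _) (dvd_mul_right _ _)) hd1aZ) hd1bZ
      have : (c : ℤ) * (z + 1) = ((n : ℤ) + c) - ((n : ℤ) - c * z) := by ring
      rw [this]; exact dvd_sub h2 h1
    have hz2 : (d1 : ℤ) ∣ ((z : ℤ) + 1) := by
      have hco : IsCoprime (d1 : ℤ) (c : ℤ) := Nat.isCoprime_iff_coprime.mpr hcop1c
      exact hco.dvd_of_dvd_mul_left hz1
    have hzge : (d1 : ℤ) - 1 ≤ (z : ℤ) := by
      have hpos : 0 < (z : ℤ) + 1 := by positivity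
      have := Int.le_of_dvd hpos hz2
      linarith
    -- mod d2
    have hy1 : (d2 : ℤ) ∣ (b : ℤ) * (y + 1) := by
      have h1 : (d2 : ℤ) ∣ (n : ℤ) - b * y := by
        have : (n : ℤ) - b * y = a * x + c * z := by linarith
        rw [this]
        exact dvd_add (hd2aZ.mul_right _) (hd2cZ.mul_right _)
      have h2 : (d2 : ℤ) ∣ (n : ℤ) + b := by
        have : (n : ℤ) + b = d2 * b + d1 * c - a - c := by rw [hnL, hL]; ring
        rw [this]
        exact dvd_sub (dvd_sub (dvd_add (dvd_mul_right _ _) (hd2cZ.mul_left _)) hd2aZ) hd2cZ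
      have : (b : ℤ) * (y + 1) = ((n : ℤ) + b) - ((n : ℤ) - b * y) := by ring
      rw [this]; exact dvd_sub h2 h1
    have hy2 : (d2 : ℤ) ∣ ((y : ℤ) + 1) := by
      have hco : IsCoprime (d2 : ℤ) (b : ℤ) := Nat.isCoprime_iff_coprime.mpr hcop2b
      exact hco.dvd_of_dvd_mul_left hy1
    have hyge : (d2 : ℤ) - 1 ≤ (y : ℤ) := by
      have hpos : 0 < (y : ℤ) + 1 := by positivity
      have := Int.le_of_dvd hpos hy2
      linarith
    have hby : (b : ℤ) * ((d2 : ℤ) - 1) ≤ (b : ℤ) * y :=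
      mul_le_mul_of_nonneg_left hyge (by positivity)
    have hcz : (c : ℤ) * ((d1 : ℤ) - 1) ≤ (c : ℤ) * z :=
      mul_le_mul_of_nonneg_left hzge (by positivity)
    have hax : (0 : ℤ) ≤ a * x := by positivity
    have haZ : (0 : ℤ) < a := by exact_mod_cast ha
    have : (n : ℤ) + a ≤ (n : ℤ) := by
      have hkey : (b : ℤ) * ((d2 : ℤ) - 1) + c * ((d1 : ℤ) - 1) = L + a := by
        rw [hL]; ring
      calc (n : ℤ) + a = L + a := by rw [hnL]
        _ = (b : ℤ) * ((d2 : ℤ) - 1) + c * ((d1 : ℤ) - 1) := hkey.symm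
        _ ≤ b * y + c * z := by linarith
        _ ≤ a * x + b * y + c * z := by linarith
        _ = (n : ℤ) := hrepZ.symm
    linarith
  -- wrap up
  obtain ⟨⟨hgpos, hgnr⟩, hub⟩ := hg
  have hgle : (g : ℤ) ≤ L := by
    by_contra h
    push_neg at h
    exact hgnr (reprA g h)
  have hLpos : (0 : ℤ) < L := by
    have : (1 : ℤ) ≤ (g : ℤ) := by exact_mod_cast hgpos
    linarith
  have hLn : ((L.toNat : ℤ)) = L := Int.toNat_of_nonneg hLpos.le
  have hmem : L.toNat ∈ {n : ℕ | 0 < n ∧ ¬∃ x y z : ℕ, n = a * x + b * y + c * z} := by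
    constructor
    · have : (0 : ℤ) < (L.toNat : ℤ) := by rw [hLn]; exact hLpos
      exact_mod_cast this
    · exact reprB _ hLn
  have hgeL : L ≤ (g : ℤ) := by
    have := hub hmem
    rw [← hLn]
    exact_mod_cast this
  have hgL : (g : ℤ) = L := le_antisymm hgle hgeL
  rw [hgL, hL, hlab, hlac]
  push_cast
  ring
end

section
/- Let a, b, c be positive integers with gcd(a,b,c) = 1 and a | lcm(b,c), and set l₁ = lcm(a,b), l₂ = lcm(a,c). Then the Sylvester number satisfies n(a,b,c) = (1/2)(l₁ + l₂ − (a + b + c) + 1). -/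
/-!
Put `d₁ = gcd(a, b)` and `d₂ = gcd(a, c)`. The hypotheses force `a = d₁ d₂`, with `d₁` coprime
to `c` and `d₂` coprime to `b`. Then the `a` numbers `b y + c z` with `y < d₂`, `z < d₁` are
pairwise incongruent mod `a` (reduce mod `d₁` and mod `d₂`), and every representable number is
congruent to one of them plus a multiple of `a`, since `b d₂` and `c d₁` are multiples of `a`.
So they form the Apéry set of `⟨a, b, c⟩` with respect to `a`, and Selmer's count
`n(a,b,c) = ∑ ⌊w / a⌋ = (∑ w) / a - (a - 1) / 2` over this set gives the formula, using
`lcm(a, b) = d₂ b` and `lcm(a, c) = d₁ c`.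
-/

theorem ncard_setOf_lt_of_injOn_mod {ι : Type*} {a : ℕ} {P : Finset ι} {f : ι → ℕ}
    (hf : Set.InjOn (fun p => f p % a) P) :
    {n | ∃ p ∈ P, f p % a = n % a ∧ n < f p}.ncard = ∑ p ∈ P, f p / a := by
  -- `n` corresponds to the pair `(p, n / a)`, where `p` is the representative of its residue class
  let g : (_ : ι) × ℕ → ℕ := fun q => f q.1 % a + a * q.2
  have hset : {n | ∃ p ∈ P, f p % a = n % a ∧ n < f p} =
      g '' ↑(P.sigma fun p => Finset.range (f p / a)) := by
    ext n
    simp only [Set.mem_ofPred_eq, Set.mem_image, Finset.mem_coe, Finset.mem_sigma,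
      Finset.mem_range, Sigma.exists, g]
    constructor
    · rintro ⟨p, hp, hmod, hlt⟩
      refine ⟨p, n / a, ⟨hp, ?_⟩, by rw [hmod, Nat.mod_add_div]⟩
      have := Nat.mod_add_div n a
      have := Nat.mod_add_div (f p) a
      exact Nat.lt_of_mul_lt_mul_left (a := a) (by omega)
    · rintro ⟨p, k, ⟨hp, hk⟩, rfl⟩
      have ha : 0 < a := Nat.pos_of_ne_zero (by rintro rfl; simp at hk)
      refine ⟨p, hp, by simp, ?_⟩
      have := Nat.mod_add_div (f p) a
      have := Nat.mul_lt_mul_of_pos_left hk ha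
      omega
  have hg : Set.InjOn g ↑(P.sigma fun p => Finset.range (f p / a)) := by
    rintro ⟨p, k⟩ hpk ⟨q, l⟩ hql hgpq
    simp only [Finset.coe_sigma, Set.mem_sigma_iff, Finset.mem_coe, Finset.mem_range, g]
      at hpk hql hgpq
    have hpq : p = q := hf hpk.1 hql.1 (by simpa using congrArg (· % a) hgpq)
    subst hpq
    have ha : 0 < a := Nat.pos_of_ne_zero (by rintro rfl; simp at hpk)
    simp [Nat.eq_of_mul_eq_mul_left ha (by omega : a * k = a * l)]
  rw [hset, hg.ncard_image, Set.ncard_coe_finset, Finset.card_sigma]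
  simp

theorem image_mod_eq_range_of_injOn {ι : Type*} {a : ℕ} {P : Finset ι} {f : ι → ℕ}
    (hf : Set.InjOn (fun p => f p % a) P) (hcard : P.card = a) :
    P.image (fun p => f p % a) = Finset.range a := by
  refine Finset.eq_of_subset_of_card_le ?_ (by rw [Finset.card_image_of_injOn hf, hcard,
    Finset.card_range])
  intro r hr
  obtain ⟨p, hp, rfl⟩ := Finset.mem_image.mp hr
  exact Finset.mem_range.mpr (Nat.mod_lt _ (hcard ▸ Finset.card_pos.mpr ⟨p, hp⟩))

theorem mul_two_mul_sum_div_add_of_injOn {ι : Type*} {a : ℕ} {P : Finset ι} {f : ι → ℕ}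
    (hf : Set.InjOn (fun p => f p % a) P) (hcard : P.card = a) :
    a * (2 * ∑ p ∈ P, f p / a + (a - 1)) = 2 * ∑ p ∈ P, f p := by
  have hres : ∑ p ∈ P, f p % a = ∑ r ∈ Finset.range a, r := by
    rw [← image_mod_eq_range_of_injOn hf hcard, Finset.sum_image hf]
  have hsplit : ∑ p ∈ P, f p = a * ∑ p ∈ P, f p / a + ∑ p ∈ P, f p % a := by
    rw [Finset.mul_sum, ← Finset.sum_add_distrib]
    exact Finset.sum_congr rfl fun p _ => (Nat.div_add_mod (f p) a).symm
  rw [hsplit, hres, mul_add, mul_add, ← Finset.sum_range_id_mul_two]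
  ring

theorem two_mul_sum_range_prod (b c m n : ℕ) :
    2 * ∑ p ∈ Finset.range m ×ˢ Finset.range n, (b * p.1 + c * p.2) =
      m * n * (b * (m - 1) + c * (n - 1)) := by
  simp only [Finset.sum_product, Finset.sum_add_distrib, Finset.sum_const, Finset.card_range,
    smul_eq_mul, ← Finset.mul_sum]
  calc _ = n * b * ((∑ i ∈ Finset.range m, i) * 2) +
        m * c * ((∑ i ∈ Finset.range n, i) * 2) := by
        rw [← Finset.mul_sum]; ring
    _ = m * n * (b * (m - 1) + c * (n - 1)) := by
        rw [Finset.sum_range_id_mul_two, Finset.sum_range_id_mul_two]; ring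

theorem gcd_mul_gcd_eq_of_dvd_lcm {a b c : ℕ} (hgcd : Nat.gcd a (Nat.gcd b c) = 1)
    (hdvd : a ∣ Nat.lcm b c) : Nat.gcd a b * Nat.gcd a c = a := by
  have hcop : Nat.Coprime (Nat.gcd a b) (Nat.gcd a c) := by
    exact Nat.eq_one_of_dvd_one (hgcd ▸ Nat.dvd_gcd ((Nat.gcd_dvd_left _ _).trans
      (Nat.gcd_dvd_left a b)) (gcd_dvd_gcd (Nat.gcd_dvd_right a b) (Nat.gcd_dvd_right a c)))
  refine Nat.dvd_antisymm (hcop.mul_dvd_of_dvd_of_dvd (Nat.gcd_dvd_left a b)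
    (Nat.gcd_dvd_left a c)) ?_
  calc a ∣ Nat.gcd a (b * c) := Nat.dvd_gcd dvd_rfl (hdvd.trans (Nat.lcm_dvd_mul b c))
    _ ∣ Nat.gcd a b * Nat.gcd a c := Nat.gcd_mul_right_dvd_mul_gcd a b c

theorem lcm_eq_gcd_mul_of_gcd_mul_gcd_eq {a b c : ℕ} (ha : 0 < a)
    (h : Nat.gcd a b * Nat.gcd a c = a) :
    Nat.lcm a b = Nat.gcd a c * b := by
  refine Nat.eq_of_mul_eq_mul_left (Nat.gcd_pos_of_pos_left b ha) ?_
  rw [Nat.gcd_mul_lcm, ← mul_assoc, h]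

theorem eq_of_mul_add_mul_modEq {d u v x x' y y' : ℕ} (hu : d ∣ u) (hv : Nat.Coprime d v)
    (hy : y < d) (hy' : y' < d) (h : u * x + v * y ≡ u * x' + v * y' [MOD d]) : y = y' := by
  have hux : u * x ≡ u * x' [MOD d] :=
    (Nat.modEq_zero_iff_dvd.mpr (hu.mul_right x)).trans
      (Nat.modEq_zero_iff_dvd.mpr (hu.mul_right x')).symm
  exact (Nat.ModEq.cancel_left_of_coprime hv (hux.add_left_cancel h)).eq_of_lt_of_lt hy hy'

section ResidueBox

variable {a b c d₁ d₂ : ℕ}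

theorem exists_reduced_representation (had : d₁ * d₂ = a) (hb : d₁ ∣ b) (hc : d₂ ∣ c)
    (hd₁ : 0 < d₁) (hd₂ : 0 < d₂) (x y z : ℕ) :
    ∃ x' y' z', y' < d₂ ∧ z' < d₁ ∧ a * x + b * y + c * z = a * x' + b * y' + c * z' := by
  obtain ⟨b', rfl⟩ := hb
  obtain ⟨c', rfl⟩ := hc
  refine ⟨x + b' * (y / d₂) + c' * (z / d₁), y % d₂, z % d₁, Nat.mod_lt _ hd₂,
    Nat.mod_lt _ hd₁, ?_⟩
  conv_lhs => rw [← Nat.div_add_mod y d₂, ← Nat.div_add_mod z d₁]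
  subst had
  ring

theorem injOn_mod_range_prod (had : d₁ * d₂ = a) (hb : d₁ ∣ b) (hc : d₂ ∣ c)
    (hd₁c : Nat.Coprime d₁ c) (hd₂b : Nat.Coprime d₂ b) :
    Set.InjOn (fun p : ℕ × ℕ => (b * p.1 + c * p.2) % a)
      ↑(Finset.range d₂ ×ˢ Finset.range d₁) := by
  rintro ⟨y, z⟩ hyz ⟨y', z'⟩ hyz' h
  simp only [Finset.coe_product, Finset.coe_range, Set.mem_prod, Set.mem_Iio] at hyz hyz'
  have h' : b * y + c * z ≡ b * y' + c * z' [MOD a] := h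
  have hz : z = z' :=
    eq_of_mul_add_mul_modEq hb hd₁c hyz.2 hyz'.2 (h'.of_dvd (had ▸ dvd_mul_right _ _))
  have hy : y = y' := by
    refine eq_of_mul_add_mul_modEq (x := z) (x' := z') hc hd₂b hyz.1 hyz'.1 ?_
    rw [add_comm, add_comm (c * z')]
    exact h'.of_dvd (had ▸ dvd_mul_left _ _)
  rw [hy, hz]

theorem representable_iff_le (had : d₁ * d₂ = a) (hb : d₁ ∣ b) (hc : d₂ ∣ c)
    (hd₁c : Nat.Coprime d₁ c) (hd₂b : Nat.Coprime d₂ b) (hd₁ : 0 < d₁) (hd₂ : 0 < d₂)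
    {n y z : ℕ} (hy : y < d₂) (hz : z < d₁) (hn : (b * y + c * z) % a = n % a) :
    (∃ x y z : ℕ, n = a * x + b * y + c * z) ↔ b * y + c * z ≤ n := by
  constructor
  · rintro ⟨x₀, y₀, z₀, rfl⟩
    obtain ⟨x, y', z', hy', hz', h⟩ :=
      exists_reduced_representation had hb hc hd₁ hd₂ x₀ y₀ z₀
    rw [h, add_assoc, Nat.mul_add_mod] at hn
    have hyz := injOn_mod_range_prod had hb hc hd₁c hd₂b
      (by simp [hy, hz] : (y, z) ∈ Finset.range d₂ ×ˢ Finset.range d₁)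
      (by simp [hy', hz'] : (y', z') ∈ Finset.range d₂ ×ˢ Finset.range d₁) hn
    simp only [Prod.mk.injEq] at hyz
    rw [h, hyz.1, hyz.2]
    omega
  · intro hle
    obtain ⟨k, hk⟩ := (Nat.modEq_iff_dvd' hle).mp hn
    exact ⟨k, y, z, by omega⟩

theorem setOf_not_representable_eq (had : d₁ * d₂ = a) (hb : d₁ ∣ b) (hc : d₂ ∣ c)
    (hd₁c : Nat.Coprime d₁ c) (hd₂b : Nat.Coprime d₂ b) (hd₁ : 0 < d₁) (hd₂ : 0 < d₂) :
    {n : ℕ | 0 < n ∧ ¬∃ x y z : ℕ, n = a * x + b * y + c * z} =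
      {n | ∃ p ∈ Finset.range d₂ ×ˢ Finset.range d₁,
        (b * p.1 + c * p.2) % a = n % a ∧ n < b * p.1 + c * p.2} := by
  have hinj := injOn_mod_range_prod had hb hc hd₁c hd₂b
  ext n
  simp only [Set.mem_ofPred_eq]
  constructor
  · rintro ⟨-, hnrep⟩
    have hres : n % a ∈ (Finset.range d₂ ×ˢ Finset.range d₁).image
        (fun p => (b * p.1 + c * p.2) % a) := by
      rw [image_mod_eq_range_of_injOn hinj (by simp [← had, mul_comm])]
      exact Finset.mem_range.mpr (Nat.mod_lt _ (had ▸ Nat.mul_pos hd₁ hd₂))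
    obtain ⟨p, hp, hpn⟩ := Finset.mem_image.mp hres
    have hp' := Finset.mem_product.mp hp
    refine ⟨p, hp, hpn, not_le.mp fun hle => hnrep ?_⟩
    exact (representable_iff_le had hb hc hd₁c hd₂b hd₁ hd₂ (Finset.mem_range.mp hp'.1)
      (Finset.mem_range.mp hp'.2) hpn).mpr hle
  · rintro ⟨p, hp, hpn, hlt⟩
    have hp' := Finset.mem_product.mp hp
    have hnrep : ¬∃ x y z : ℕ, n = a * x + b * y + c * z := fun hrep =>
      ((representable_iff_le had hb hc hd₁c hd₂b hd₁ hd₂ (Finset.mem_range.mp hp'.1)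
        (Finset.mem_range.mp hp'.2) hpn).mp hrep).not_gt hlt
    exact ⟨Nat.pos_of_ne_zero (by rintro rfl; exact hnrep ⟨0, 0, 0, rfl⟩), hnrep⟩

theorem two_mul_sum_div_add (had : d₁ * d₂ = a) (hb : d₁ ∣ b) (hc : d₂ ∣ c)
    (hd₁c : Nat.Coprime d₁ c) (hd₂b : Nat.Coprime d₂ b) (hd₁ : 0 < d₁) (hd₂ : 0 < d₂) :
    2 * ∑ p ∈ Finset.range d₂ ×ˢ Finset.range d₁, (b * p.1 + c * p.2) / a + (a - 1) =
      b * (d₂ - 1) + c * (d₁ - 1) := by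
  refine Nat.eq_of_mul_eq_mul_left (had ▸ Nat.mul_pos hd₁ hd₂) ?_
  rw [mul_two_mul_sum_div_add_of_injOn (injOn_mod_range_prod had hb hc hd₁c hd₂b)
    (by simp [← had, mul_comm]), two_mul_sum_range_prod, ← had, mul_comm d₂]

end ResidueBox

theorem sylvester_number_three_variables_general
    (a b c : ℕ) (ha : 0 < a)
    (hgcd : Nat.gcd a (Nat.gcd b c) = 1) (hdvd : a ∣ Nat.lcm b c) :
    (({n : ℕ | 0 < n ∧ ¬∃ x y z : ℕ, n = a * x + b * y + c * z}).ncard : ℚ) =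
      (1 / 2) * ((Nat.lcm a b : ℚ) + (Nat.lcm a c : ℚ) - ((a : ℚ) + b + c) + 1) := by
  have had := gcd_mul_gcd_eq_of_dvd_lcm hgcd hdvd
  have hd₁ : 0 < Nat.gcd a b := Nat.gcd_pos_of_pos_left b ha
  have hd₂ : 0 < Nat.gcd a c := Nat.gcd_pos_of_pos_left c ha
  have hb₁ : Nat.gcd a b ∣ b := Nat.gcd_dvd_right a b
  have hc₂ : Nat.gcd a c ∣ c := Nat.gcd_dvd_right a c
  have hd₁c : Nat.Coprime (Nat.gcd a b) c := by rw [Nat.Coprime, Nat.gcd_assoc, hgcd]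
  have hd₂b : Nat.Coprime (Nat.gcd a c) b := by
    rw [Nat.Coprime, Nat.gcd_assoc, Nat.gcd_comm c, hgcd]
  have hsum := congrArg (Nat.cast : ℕ → ℚ)
    (two_mul_sum_div_add had hb₁ hc₂ hd₁c hd₂b hd₁ hd₂)
  rw [setOf_not_representable_eq had hb₁ hc₂ hd₁c hd₂b hd₁ hd₂,
    ncard_setOf_lt_of_injOn_mod (injOn_mod_range_prod had hb₁ hc₂ hd₁c hd₂b),
    lcm_eq_gcd_mul_of_gcd_mul_gcd_eq ha had,
    lcm_eq_gcd_mul_of_gcd_mul_gcd_eq ha ((mul_comm _ _).trans had)]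
  push_cast [Nat.cast_pred ha, Nat.cast_pred hd₁, Nat.cast_pred hd₂] at hsum ⊢
  linarith

/-- for `gcd(a,b,c) = 1` with `a ∣ lcm(b,c)`, the Sylvester number is
`(1/2)(lcm(a,b) + lcm(a,c) - (a + b + c) + 1)`. -/
theorem sylvester_number_three_variables
    (a b c : ℕ) (ha : 0 < a) (hb : 0 < b) (hc : 0 < c)
    (hgcd : Nat.gcd a (Nat.gcd b c) = 1) (hdvd : a ∣ Nat.lcm b c) :
    (({n : ℕ | 0 < n ∧ ¬∃ x y z : ℕ, n = a * x + b * y + c * z}).ncard : ℚ) =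
      (1 / 2) * ((Nat.lcm a b : ℚ) + (Nat.lcm a c : ℚ) - ((a : ℚ) + b + c) + 1) :=
  sylvester_number_three_variables_general a b c ha hgcd hdvd
end

section
/- Let a, b, c be positive integers with gcd(a,b,c) = 1 and a | lcm(b,c), and set l₁ = lcm(a,b), l₂ = lcm(a,c). Then the Sylvester sum satisfies s(a,b,c) = (1/12)(a² + b² + c² + 3(abc + ab + bc + ca) − 3(a + b + c)(l₁ + l₂) + 2(l₁² + l₂²) − 1). -/
open Finset

lemma sumId (n : ℕ) : ∑ i ∈ Finset.range n, (i:ℚ) = n*(n-1)/2 := by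
  induction n with
  | zero => simp
  | succ k ih => rw [Finset.sum_range_succ, ih]; push_cast; ring

lemma sumSq (n : ℕ) : ∑ i ∈ Finset.range n, (i:ℚ)^2 = n*(n-1)*(2*n-1)/6 := by
  induction n with
  | zero => simp
  | succ k ih => rw [Finset.sum_range_succ, ih]; push_cast; ring

lemma sumAri (aq : ℚ) (m : ℕ) (x : ℚ) :
    ∑ t ∈ Finset.Icc 1 m, (x - aq*t) = m*x - aq*(m*(m+1))/2 := by
  induction m with
  | zero => simp
  | succ k ih => rw [Finset.sum_Icc_succ_top (by omega), ih]; push_cast; ring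

lemma classSum (a w : ℕ) (ha : 0 < a) :
    ∑ t ∈ Finset.Icc 1 ((w-1)/a), ((w:ℚ) - (a:ℚ)*t)
      = ((w:ℚ)^2 - ((w % a : ℕ):ℚ)^2)/(2*a) - ((w:ℚ) - ((w % a : ℕ):ℚ))/2 := by
  obtain ⟨q, r, hr, hw⟩ : ∃ q r, r < a ∧ w = a*q + r :=
    ⟨w/a, w%a, Nat.mod_lt _ ha, (Nat.div_add_mod w a).symm⟩
  have hmod : w % a = r := by
    rw [hw, Nat.add_comm, Nat.add_mul_mod_self_left, Nat.mod_eq_of_lt hr]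
  have haq : (0:ℚ) < (a:ℚ) := by exact_mod_cast ha
  rw [hmod]
  have hwq : (w:ℚ) = (a:ℚ)*q + r := by exact_mod_cast congrArg (Nat.cast (R := ℚ)) hw
  rcases Nat.eq_zero_or_pos r with hr0 | hrpos
  · subst hr0
    rcases Nat.eq_zero_or_pos q with hq0 | hqpos
    · subst hq0; simp at hw; subst hw; simp
    · have hdiv : (w-1)/a = q - 1 := by
        have h1 : w - 1 = a*(q-1) + (a-1) := by
          have h2 : a*(q-1) + a = a*q := by
            rw [← Nat.mul_succ, Nat.succ_eq_add_one, Nat.sub_add_cancel hqpos]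
          omega
        rw [h1, Nat.mul_add_div ha, Nat.div_eq_of_lt (by omega)]; omega
      rw [hdiv, sumAri]
      have hc : ((q-1 : ℕ):ℚ) = (q:ℚ) - 1 := by
        push_cast [Nat.cast_sub hqpos]; ring
      rw [hc, hwq]
      push_cast
      field_simp
      ring
  · have hdiv : (w-1)/a = q := by
      have h1 : w - 1 = a*q + (r-1) := by omega
      rw [h1, Nat.mul_add_div ha, Nat.div_eq_of_lt (by omega)]; omega
    rw [hdiv, sumAri, hwq]
    field_simp
    ring

/-- for `gcd(a,b,c) = 1` with `a ∣ lcm(b,c)`, the Sylvester sum is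
`(1/12)(a² + b² + c² + 3(abc + ab + bc + ca) - 3(a+b+c)(l₁+l₂) + 2(l₁² + l₂²) - 1)`. -/
theorem sylvester_sum_three_variables
    (a b c : ℕ) (ha : 0 < a) (hb : 0 < b) (hc : 0 < c)
    (hgcd : Nat.gcd a (Nat.gcd b c) = 1) (hdvd : a ∣ Nat.lcm b c) :
    ∑ᶠ n ∈ {n : ℕ | 0 < n ∧ ¬∃ x y z : ℕ, n = a * x + b * y + c * z}, (n : ℚ) =
      (1 / 12) * ((a : ℚ) ^ 2 + (b : ℚ) ^ 2 + (c : ℚ) ^ 2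
        + 3 * ((a : ℚ) * b * c + (a : ℚ) * b + (b : ℚ) * c + (c : ℚ) * a)
        - 3 * ((a : ℚ) + b + c) * ((Nat.lcm a b : ℚ) + (Nat.lcm a c : ℚ))
        + 2 * ((Nat.lcm a b : ℚ) ^ 2 + (Nat.lcm a c : ℚ) ^ 2) - 1) := by
  classical
  set d1 := Nat.gcd a b with hd1
  set d2 := Nat.gcd a c with hd2
  have hd1a : d1 ∣ a := Nat.gcd_dvd_left a b
  have hd1b : d1 ∣ b := Nat.gcd_dvd_right a b
  have hd2a : d2 ∣ a := Nat.gcd_dvd_left a c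
  have hd2c : d2 ∣ c := Nat.gcd_dvd_right a c
  have hd1pos : 0 < d1 := Nat.gcd_pos_of_pos_left b ha
  have hd2pos : 0 < d2 := Nat.gcd_pos_of_pos_left c ha
  -- a = d1 * d2
  have ha12 : a = d1 * d2 := by
    have h12 : Nat.Coprime d1 d2 := by
      have h : Nat.gcd d1 d2 ∣ Nat.gcd a (Nat.gcd b c) :=
        Nat.dvd_gcd ((Nat.gcd_dvd_left d1 d2).trans hd1a)
          (Nat.dvd_gcd ((Nat.gcd_dvd_left d1 d2).trans hd1b)
            ((Nat.gcd_dvd_right d1 d2).trans hd2c))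
      rw [hgcd] at h
      exact Nat.eq_one_of_dvd_one h
    have hdvd1 : d1 * d2 ∣ a := h12.mul_dvd_of_dvd_of_dvd hd1a hd2a
    have hdvd2 : a ∣ d1 * d2 := by
      rw [← Nat.factorization_le_iff_dvd ha.ne'
        (Nat.mul_ne_zero hd1pos.ne' hd2pos.ne')]
      have hle : a.factorization ≤ (Nat.lcm b c).factorization := by
        rw [Nat.factorization_le_iff_dvd ha.ne' (Nat.lcm_ne_zero hb.ne' hc.ne')]
        exact hdvd
      intro p
      have h1 := hle p
      rw [Nat.factorization_lcm hb.ne' hc.ne'] at h1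
      rw [Nat.factorization_mul hd1pos.ne' hd2pos.ne',
        Nat.factorization_gcd ha.ne' hb.ne', Nat.factorization_gcd ha.ne' hc.ne']
      simp only [Finsupp.sup_apply, Finsupp.inf_apply, Finsupp.add_apply] at *
      omega
    exact Nat.dvd_antisymm hdvd2 hdvd1
  have hbd2 : Nat.Coprime b d2 := by
    have h : Nat.gcd b d2 ∣ Nat.gcd a (Nat.gcd b c) :=
      Nat.dvd_gcd ((Nat.gcd_dvd_right b d2).trans hd2a)
        (Nat.dvd_gcd (Nat.gcd_dvd_left b d2) ((Nat.gcd_dvd_right b d2).trans hd2c))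
    rw [hgcd] at h
    exact Nat.eq_one_of_dvd_one h
  have hcd1 : Nat.Coprime c d1 := by
    have h : Nat.gcd c d1 ∣ Nat.gcd a (Nat.gcd b c) :=
      Nat.dvd_gcd ((Nat.gcd_dvd_right c d1).trans hd1a)
        (Nat.dvd_gcd ((Nat.gcd_dvd_right c d1).trans hd1b) (Nat.gcd_dvd_left c d1))
    rw [hgcd] at h
    exact Nat.eq_one_of_dvd_one h
  obtain ⟨b', hb'⟩ := hd1b
  obtain ⟨c', hc'⟩ := hd2c
  have hbd2a : b * d2 = a * b' := by rw [hb', ha12]; ring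
  have hcd1a : c * d1 = a * c' := by rw [hc', ha12]; ring
  -- lcm identities
  have hlab : Nat.lcm a b = d2 * b := by
    apply Nat.eq_of_mul_eq_mul_left hd1pos
    calc d1 * Nat.lcm a b = a * b := Nat.gcd_mul_lcm a b
      _ = d1 * (d2 * b) := by rw [ha12]; ring
  have hlac : Nat.lcm a c = d1 * c := by
    apply Nat.eq_of_mul_eq_mul_left hd2pos
    calc d2 * Nat.lcm a c = a * c := Nat.gcd_mul_lcm a c
      _ = d2 * (d1 * c) := by rw [ha12]; ring
  -- normal form for representable numbers
  have repA : ∀ n : ℕ, (∃ x y z : ℕ, n = a*x + b*y + c*z) ↔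
      ∃ t y z : ℕ, y < d2 ∧ z < d1 ∧ n = a*t + b*y + c*z := by
    intro n
    constructor
    · rintro ⟨x, y, z, rfl⟩
      refine ⟨x + b'*(y/d2) + c'*(z/d1), y % d2, z % d1,
        Nat.mod_lt _ hd2pos, Nat.mod_lt _ hd1pos, ?_⟩
      have hy : a*(b'*(y/d2)) + b*(y % d2) = b*y := by
        calc a*(b'*(y/d2)) + b*(y % d2) = (a*b')*(y/d2) + b*(y%d2) := by ring
          _ = (b*d2)*(y/d2) + b*(y%d2) := by rw [hbd2a]
          _ = b*(d2*(y/d2) + y%d2) := by ring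
          _ = b*y := by rw [Nat.div_add_mod]
      have hz : a*(c'*(z/d1)) + c*(z % d1) = c*z := by
        calc a*(c'*(z/d1)) + c*(z % d1) = (a*c')*(z/d1) + c*(z%d1) := by ring
          _ = (c*d1)*(z/d1) + c*(z%d1) := by rw [hcd1a]
          _ = c*(d1*(z/d1) + z%d1) := by ring
          _ = c*z := by rw [Nat.div_add_mod]
      calc a*x + b*y + c*z
          = a*x + (a*(b'*(y/d2)) + b*(y%d2)) + (a*(c'*(z/d1)) + c*(z%d1)) := by
            rw [hy, hz]
        _ = a*(x + b'*(y/d2) + c'*(z/d1)) + b*(y%d2) + c*(z%d1) := by ring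
    · rintro ⟨t, y, z, _, _, rfl⟩
      exact ⟨t, y, z, rfl⟩
  -- uniqueness of classes
  have uniq : ∀ y z y' z' : ℕ, y < d2 → z < d1 → y' < d2 → z' < d1 →
      (b*y + c*z) % a = (b*y' + c*z') % a → y = y' ∧ z = z' := by
    intro y z y' z' hy hz hy' hz' h
    have hmod : b*y + c*z ≡ b*y' + c*z' [MOD a] := h
    have hzz : z = z' := by
      have h2 : b*y + c*z ≡ b*y' + c*z' [MOD d1] := hmod.of_dvd hd1a
      have hby : b*y ≡ 0 [MOD d1] :=
        Nat.modEq_zero_iff_dvd.2 (Dvd.dvd.mul_right ⟨b', hb'⟩ y)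
      have hby' : (b*y' : ℕ) ≡ 0 [MOD d1] :=
        Nat.modEq_zero_iff_dvd.2 (Dvd.dvd.mul_right ⟨b', hb'⟩ y')
      have e1 : c*z ≡ b*y + c*z [MOD d1] := by
        simpa using (hby.add_right (c*z)).symm
      have e2 : b*y' + c*z' ≡ c*z' [MOD d1] := by
        simpa using hby'.add_right (c*z')
      have h3 : c*z ≡ c*z' [MOD d1] := (e1.trans h2).trans e2
      have h4 : z ≡ z' [MOD d1] := h3.cancel_left_of_coprime hcd1.symm
      have h5 : z % d1 = z' % d1 := h4
      rwa [Nat.mod_eq_of_lt hz, Nat.mod_eq_of_lt hz'] at h5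
    subst hzz
    refine ⟨?_, rfl⟩
    have h2 : b*y + c*z ≡ b*y' + c*z [MOD d2] := hmod.of_dvd hd2a
    have h3 : b*y ≡ b*y' [MOD d2] := h2.add_right_cancel' (c*z)
    have h4 : y ≡ y' [MOD d2] := h3.cancel_left_of_coprime hbd2.symm
    have h5 : y % d2 = y' % d2 := h4
    rwa [Nat.mod_eq_of_lt hy, Nat.mod_eq_of_lt hy'] at h5
  -- full uniqueness with the a-part
  have uniqT : ∀ t y z t' y' z' : ℕ, y < d2 → z < d1 → y' < d2 → z' < d1 →
      a*t + (b*y + c*z) = a*t' + (b*y' + c*z') → y = y' ∧ z = z' ∧ t = t' := by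
    intro t y z t' y' z' hy hz hy' hz' heq
    have hmodeq : (b*y + c*z) % a = (b*y' + c*z') % a := by
      have e1 : (b*y + c*z + t*a) % a = (b*y + c*z) % a := Nat.add_mul_mod_self_right _ _ _
      have e2 : (b*y' + c*z' + t'*a) % a = (b*y' + c*z') % a := Nat.add_mul_mod_self_right _ _ _
      have e3 : b*y + c*z + t*a = b*y' + c*z' + t'*a := by
        rw [show b*y + c*z + t*a = a*t + (b*y + c*z) by ring, heq]; ring
      rw [← e1, ← e2, e3]
    obtain ⟨hyy, hzz⟩ := uniq y z y' z' hy hz hy' hz' hmodeq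
    subst hyy; subst hzz
    refine ⟨rfl, rfl, ?_⟩
    have : a*t = a*t' := Nat.add_right_cancel heq
    exact Nat.eq_of_mul_eq_mul_left ha this
  -- the class map is a bijection onto range a
  have hginj : ∀ p ∈ (Finset.range d2 ×ˢ Finset.range d1),
      ∀ p' ∈ (Finset.range d2 ×ˢ Finset.range d1),
      (b*p.1 + c*p.2) % a = (b*p'.1 + c*p'.2) % a → p = p' := by
    rintro ⟨y, z⟩ hp ⟨y', z'⟩ hp' h
    simp only [Finset.mem_product, Finset.mem_range] at hp hp'
    obtain ⟨h1, h2⟩ := uniq y z y' z' hp.1 hp.2 hp'.1 hp'.2 h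
    simp [h1, h2]
  have hgimage : (Finset.range d2 ×ˢ Finset.range d1).image
      (fun p : ℕ × ℕ => (b*p.1 + c*p.2) % a) = Finset.range a := by
    apply Finset.eq_of_subset_of_card_le
    · intro r hr
      simp only [Finset.mem_image] at hr
      obtain ⟨p, _, hpe⟩ := hr
      exact Finset.mem_range.2 (hpe ▸ Nat.mod_lt _ ha)
    · rw [Finset.card_range, Finset.card_image_of_injOn ?_,
        Finset.card_product, Finset.card_range, Finset.card_range, ha12,
        Nat.mul_comm]
      intro p hp p' hp' h
      exact hginj p (Finset.mem_coe.1 hp) p' (Finset.mem_coe.1 hp') h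
  have hsurj : ∀ n : ℕ, ∃ y z, y < d2 ∧ z < d1 ∧ n % a = (b*y + c*z) % a := by
    intro n
    have hmem : n % a ∈ Finset.range a := Finset.mem_range.2 (Nat.mod_lt _ ha)
    rw [← hgimage] at hmem
    obtain ⟨p, hp, hpe⟩ := Finset.mem_image.1 hmem
    simp only [Finset.mem_product, Finset.mem_range] at hp
    exact ⟨p.1, p.2, hp.1, hp.2, hpe.symm⟩
  -- the gap set as an explicit finite set
  set M := b*d2 + c*d1 with hM
  set S : Finset ((ℕ × ℕ) × ℕ) :=
    ((Finset.range d2 ×ˢ Finset.range d1) ×ˢ Finset.Icc 1 M).filter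
      (fun q => a*q.2 < b*q.1.1 + c*q.1.2) with hS
  set f : (ℕ × ℕ) × ℕ → ℕ := fun q => b*q.1.1 + c*q.1.2 - a*q.2 with hf
  have hWM : ∀ y z : ℕ, y < d2 → z < d1 → b*y + c*z ≤ M := by
    intro y z hy hz
    have h1 : b*y ≤ b*d2 := Nat.mul_le_mul_left b hy.le
    have h2 : c*z ≤ c*d1 := Nat.mul_le_mul_left c hz.le
    exact add_le_add h1 h2
  have hsetEq : {n : ℕ | 0 < n ∧ ¬∃ x y z : ℕ, n = a * x + b * y + c * z}
      = ↑(S.image f) := by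
    ext n
    simp only [Set.mem_setOf_eq, Finset.coe_image, Set.mem_image, Finset.mem_coe]
    constructor
    · rintro ⟨hn, hnr⟩
      obtain ⟨y, z, hy, hz, hmod⟩ := hsurj n
      obtain ⟨w, hwdef⟩ : ∃ w, w = b*y + c*z := ⟨_, rfl⟩
      rw [← hwdef] at hmod
      have hlt : n < w := by
        by_contra hge
        push_neg at hge
        have hdv : a ∣ n - w := (Nat.modEq_iff_dvd' hge).1 (Nat.ModEq.symm hmod)
        obtain ⟨t, ht⟩ := hdv
        have hn2 : a*t + w = n := by rw [← ht]; exact Nat.sub_add_cancel hge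
        refine hnr ((repA n).2 ⟨t, y, z, hy, hz, ?_⟩)
        rw [← hn2, hwdef]
        exact (Nat.add_assoc _ _ _).symm
      have hdv : a ∣ w - n := (Nat.modEq_iff_dvd' hlt.le).1 hmod
      obtain ⟨t, ht⟩ := hdv
      have ht1 : 1 ≤ t := by
        rcases Nat.eq_zero_or_pos t with h0 | h1
        · subst h0; simp at ht; omega
        · exact h1
      have htw : a*t < w := by rw [← ht]; omega
      have htM : t ≤ M := by
        have h1 : t ≤ a*t := Nat.le_mul_of_pos_left t ha
        exact le_trans (h1.trans htw.le) (hwdef ▸ hWM y z hy hz)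
      refine ⟨((y, z), t), ?_, ?_⟩
      · rw [hS, Finset.mem_filter]
        constructor
        · simp only [Finset.mem_product, Finset.mem_range, Finset.mem_Icc]
          exact ⟨⟨hy, hz⟩, ht1, htM⟩
        · simpa [← hwdef] using htw
      · show b*y + c*z - a*t = n
        rw [← hwdef, ← ht]
        exact Nat.sub_sub_self hlt.le
    · rintro ⟨⟨⟨y, z⟩, t⟩, hqS, rfl⟩
      rw [hS, Finset.mem_filter] at hqS
      obtain ⟨hmem, hcond⟩ := hqS
      simp only [Finset.mem_product, Finset.mem_range, Finset.mem_Icc] at hmem hcond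
      obtain ⟨⟨hy, hz⟩, ht1, htM⟩ := hmem
      constructor
      · exact Nat.sub_pos_of_lt hcond
      · rintro hrep
        obtain ⟨s, y', z', hy', hz', hn⟩ := (repA _).1 hrep
        have key : a*(s+t) + (b*y' + c*z') = a*0 + (b*y + c*z) := by
          have h1 : (b*y + c*z - a*t) + a*t = b*y + c*z :=
            Nat.sub_add_cancel hcond.le
          rw [show (f ((y,z),t)) = b*y + c*z - a*t from rfl] at hn
          rw [hn] at h1
          rw [← h1]; ring
        obtain ⟨_, _, hst⟩ := uniqT (s+t) y' z' 0 y z hy' hz' hy hz key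
        omega
  have hfinj : ∀ q ∈ S, ∀ q' ∈ S, f q = f q' → q = q' := by
    rintro ⟨⟨y, z⟩, t⟩ hq ⟨⟨y', z'⟩, t'⟩ hq' heq
    rw [hS, Finset.mem_filter] at hq hq'
    obtain ⟨hmem, hcond⟩ := hq
    obtain ⟨hmem', hcond'⟩ := hq'
    simp only [Finset.mem_product, Finset.mem_range, Finset.mem_Icc] at hmem hmem' hcond hcond'
    have heq' : b*y + c*z - a*t = b*y' + c*z' - a*t' := heq
    have h1 : a*t' + (b*y + c*z) = a*t + (b*y' + c*z') := by
      have e1 : (b*y + c*z - a*t) + a*t = b*y + c*z := Nat.sub_add_cancel hcond.le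
      have e2 : (b*y' + c*z' - a*t') + a*t' = b*y' + c*z' := Nat.sub_add_cancel hcond'.le
      rw [heq'] at e1
      obtain ⟨u, hu⟩ : ∃ u, u = a*t := ⟨_, rfl⟩
      obtain ⟨u', hu'⟩ : ∃ u', u' = a*t' := ⟨_, rfl⟩
      obtain ⟨W, hW⟩ : ∃ W, W = b*y + c*z := ⟨_, rfl⟩
      obtain ⟨W', hW'⟩ : ∃ W', W' = b*y' + c*z' := ⟨_, rfl⟩
      simp only [← hu, ← hu', ← hW, ← hW'] at e1 e2 hcond hcond' ⊢
      omega
    obtain ⟨hy2, hz2, ht2⟩ := uniqT t' y z t y' z' hmem.1.1 hmem.1.2 hmem'.1.1 hmem'.1.2 h1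
    simp [hy2, hz2, ht2.symm]
  -- rewrite the finsum as a finite sum over S
  rw [hsetEq, finsum_mem_coe_finset, Finset.sum_image hfinj]
  have hcast : ∀ q ∈ S, ((f q : ℕ):ℚ) = ((b*q.1.1 + c*q.1.2 : ℕ):ℚ) - (a:ℚ)*q.2 := by
    rintro ⟨⟨y, z⟩, t⟩ hq
    rw [hS, Finset.mem_filter] at hq
    have hcond : a*t < b*y + c*z := hq.2
    show ((b*y + c*z - a*t : ℕ):ℚ) = ((b*y + c*z : ℕ):ℚ) - (a:ℚ)*t
    rw [Nat.cast_sub hcond.le]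
    push_cast; ring
  rw [Finset.sum_congr rfl hcast, hS, Finset.sum_filter, Finset.sum_product]
  have hinner : ∀ p ∈ (Finset.range d2 ×ˢ Finset.range d1),
      (∑ t ∈ Finset.Icc 1 M,
        if a*t < b*p.1 + c*p.2 then ((b*p.1 + c*p.2 : ℕ):ℚ) - (a:ℚ)*t else 0)
      = (((b*p.1 + c*p.2 : ℕ):ℚ)^2 - (((b*p.1 + c*p.2) % a : ℕ):ℚ)^2)/(2*(a:ℚ))
        - (((b*p.1 + c*p.2 : ℕ):ℚ) - (((b*p.1 + c*p.2) % a : ℕ):ℚ))/2 := by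
    rintro ⟨y, z⟩ hp
    simp only [Finset.mem_product, Finset.mem_range] at hp
    show (∑ t ∈ Finset.Icc 1 M,
        if a*t < b*y + c*z then ((b*y + c*z : ℕ):ℚ) - (a:ℚ)*t else 0)
      = (((b*y + c*z : ℕ):ℚ)^2 - (((b*y + c*z) % a : ℕ):ℚ)^2)/(2*(a:ℚ))
        - (((b*y + c*z : ℕ):ℚ) - (((b*y + c*z) % a : ℕ):ℚ))/2
    obtain ⟨w, hwdef⟩ : ∃ w, w = b*y + c*z := ⟨_, rfl⟩
    rw [← hwdef, ← Finset.sum_filter]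
    have hfe : Finset.filter (fun t => a*t < w) (Finset.Icc 1 M)
        = Finset.Icc 1 ((w-1)/a) := by
      ext t
      simp only [Finset.mem_filter, Finset.mem_Icc]
      constructor
      · rintro ⟨⟨ht1, htM⟩, hlt⟩
        refine ⟨ht1, ?_⟩
        rw [Nat.le_div_iff_mul_le ha, Nat.mul_comm]
        exact Nat.le_sub_one_of_lt hlt
      · rintro ⟨ht1, htd⟩
        rw [Nat.le_div_iff_mul_le ha] at htd
        have h2 : 1*1 ≤ t*a := Nat.mul_le_mul ht1 ha
        have h3 : t ≤ t*a := Nat.le_mul_of_pos_right t ha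
        have h4 : w ≤ M := hwdef ▸ hWM y z hp.1 hp.2
        refine ⟨⟨ht1, le_trans (h3.trans (htd.trans (Nat.sub_le w 1))) h4⟩, ?_⟩
        rw [Nat.mul_comm]
        obtain ⟨u, hu⟩ : ∃ u, u = t*a := ⟨_, rfl⟩
        simp only [← hu] at htd h2 ⊢
        omega
    rw [hfe]
    exact classSum a w ha
  rw [Finset.sum_congr rfl hinner]
  have hsplit : ∀ p ∈ (Finset.range d2 ×ˢ Finset.range d1),
      ((((b*p.1 + c*p.2 : ℕ):ℚ)^2 - (((b*p.1 + c*p.2) % a : ℕ):ℚ)^2)/(2*(a:ℚ))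
        - (((b*p.1 + c*p.2 : ℕ):ℚ) - (((b*p.1 + c*p.2) % a : ℕ):ℚ))/2)
      = (((b*p.1 + c*p.2 : ℕ):ℚ)^2/(2*(a:ℚ)) - ((b*p.1 + c*p.2 : ℕ):ℚ)/2)
        - ((((b*p.1 + c*p.2) % a : ℕ):ℚ)^2/(2*(a:ℚ)) - (((b*p.1 + c*p.2) % a : ℕ):ℚ)/2) :=
    fun p _ => by ring
  rw [Finset.sum_congr rfl hsplit, Finset.sum_sub_distrib]
  have hmodsum : (∑ p ∈ (Finset.range d2 ×ˢ Finset.range d1),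
      ((((b*p.1 + c*p.2) % a : ℕ):ℚ)^2/(2*(a:ℚ)) - (((b*p.1 + c*p.2) % a : ℕ):ℚ)/2))
      = ∑ r ∈ Finset.range a, ((r:ℚ)^2/(2*(a:ℚ)) - (r:ℚ)/2) := by
    rw [← hgimage, Finset.sum_image hginj]
  rw [hmodsum]
  -- closed forms
  have hrange : (∑ r ∈ Finset.range a, ((r:ℚ)^2/(2*(a:ℚ)) - (r:ℚ)/2))
      = ((a:ℚ)*((a:ℚ)-1)*(2*(a:ℚ)-1)/6)*(2*(a:ℚ))⁻¹ - ((a:ℚ)*((a:ℚ)-1)/2)*2⁻¹ := by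
    simp only [div_eq_mul_inv]
    rw [Finset.sum_sub_distrib, ← Finset.sum_mul, ← Finset.sum_mul, sumSq, sumId]
    simp only [div_eq_mul_inv]
  have hA2 : (∑ p ∈ (Finset.range d2 ×ˢ Finset.range d1), ((b*p.1 + c*p.2 : ℕ):ℚ))
      = (d1:ℚ)*(b:ℚ)*((d2:ℚ)*((d2:ℚ)-1)/2) + (d2:ℚ)*(c:ℚ)*((d1:ℚ)*((d1:ℚ)-1)/2) := by
    rw [Finset.sum_product]
    have hrow : ∀ y : ℕ, (∑ z ∈ Finset.range d1, ((b*y + c*z : ℕ):ℚ))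
        = ((d1:ℚ)*(b:ℚ))*(y:ℚ) + (c:ℚ)*((d1:ℚ)*((d1:ℚ)-1)/2) := by
      intro y
      have hterm : ∀ z : ℕ, ((b*y + c*z : ℕ):ℚ) = (b:ℚ)*(y:ℚ) + (c:ℚ)*(z:ℚ) := by
        intro z; push_cast; ring
      rw [Finset.sum_congr rfl (fun z _ => hterm z), Finset.sum_add_distrib,
        Finset.sum_const, Finset.card_range, nsmul_eq_mul, ← Finset.mul_sum, sumId]
      ring
    rw [Finset.sum_congr rfl (fun y _ => hrow y), Finset.sum_add_distrib,
      Finset.sum_const, Finset.card_range, nsmul_eq_mul, ← Finset.mul_sum, sumId]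
    ring
  have hA1 : (∑ p ∈ (Finset.range d2 ×ˢ Finset.range d1), ((b*p.1 + c*p.2 : ℕ):ℚ)^2)
      = (d1:ℚ)*(b:ℚ)^2*((d2:ℚ)*((d2:ℚ)-1)*(2*(d2:ℚ)-1)/6)
        + (d2:ℚ)*(c:ℚ)^2*((d1:ℚ)*((d1:ℚ)-1)*(2*(d1:ℚ)-1)/6)
        + 2*(b:ℚ)*(c:ℚ)*((d2:ℚ)*((d2:ℚ)-1)/2)*((d1:ℚ)*((d1:ℚ)-1)/2) := by
    rw [Finset.sum_product]
    have hrow : ∀ y : ℕ, (∑ z ∈ Finset.range d1, ((b*y + c*z : ℕ):ℚ)^2)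
        = ((d1:ℚ)*(b:ℚ)^2)*(y:ℚ)^2
          + (2*(b:ℚ)*(c:ℚ)*((d1:ℚ)*((d1:ℚ)-1)/2))*(y:ℚ)
          + (c:ℚ)^2*((d1:ℚ)*((d1:ℚ)-1)*(2*(d1:ℚ)-1)/6) := by
      intro y
      have hterm : ∀ z : ℕ, ((b*y + c*z : ℕ):ℚ)^2
          = ((b:ℚ)*(y:ℚ))^2 + (2*(b:ℚ)*(c:ℚ)*(y:ℚ))*(z:ℚ) + (c:ℚ)^2*(z:ℚ)^2 := by
        intro z; push_cast; ring
      rw [Finset.sum_congr rfl (fun z _ => hterm z), Finset.sum_add_distrib,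
        Finset.sum_add_distrib, Finset.sum_const, Finset.card_range, nsmul_eq_mul,
        ← Finset.mul_sum, ← Finset.mul_sum, sumId, sumSq]
      ring
    rw [Finset.sum_congr rfl (fun y _ => hrow y), Finset.sum_add_distrib,
      Finset.sum_add_distrib, Finset.sum_const, Finset.card_range, nsmul_eq_mul,
      ← Finset.mul_sum, ← Finset.mul_sum, sumId, sumSq]
    ring
  have hWpart : (∑ p ∈ (Finset.range d2 ×ˢ Finset.range d1),
      (((b*p.1 + c*p.2 : ℕ):ℚ)^2/(2*(a:ℚ)) - ((b*p.1 + c*p.2 : ℕ):ℚ)/2))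
      = ((d1:ℚ)*(b:ℚ)^2*((d2:ℚ)*((d2:ℚ)-1)*(2*(d2:ℚ)-1)/6)
        + (d2:ℚ)*(c:ℚ)^2*((d1:ℚ)*((d1:ℚ)-1)*(2*(d1:ℚ)-1)/6)
        + 2*(b:ℚ)*(c:ℚ)*((d2:ℚ)*((d2:ℚ)-1)/2)*((d1:ℚ)*((d1:ℚ)-1)/2))*(2*(a:ℚ))⁻¹
        - ((d1:ℚ)*(b:ℚ)*((d2:ℚ)*((d2:ℚ)-1)/2) + (d2:ℚ)*(c:ℚ)*((d1:ℚ)*((d1:ℚ)-1)/2))*2⁻¹ := by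
    simp only [div_eq_mul_inv]
    rw [Finset.sum_sub_distrib, ← Finset.sum_mul, ← Finset.sum_mul, hA1, hA2]
    simp only [div_eq_mul_inv]
  rw [hWpart, hrange, hlab, hlac]
  have haQ : (a:ℚ) = (d1:ℚ)*(d2:ℚ) := by exact_mod_cast congrArg (Nat.cast (R := ℚ)) ha12
  have hd1Q : ((d1:ℕ):ℚ) ≠ 0 := Nat.cast_ne_zero.2 hd1pos.ne'
  have hd2Q : ((d2:ℕ):ℚ) ≠ 0 := Nat.cast_ne_zero.2 hd2pos.ne'
  push_cast
  rw [haQ]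
  field_simp
  ring
end
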